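/- arXiv:2105.14419 — 11 statements merged into one kernel-verified Lean document; each statement's English description precedes it below -/
import Mathlib

section
/- Let λ, μ > 0, set σ_- = (√λ - √μ)² and σ_+ = (√λ + √μ)². Then for every real z < 0, ∫_{σ_-}^{σ_+} (x - z)^{-1} · √((x - σ_-)(σ_+ - x)) / (2πλμ) dx = (λ + μ - z - √((λ+μ-z)² - 4λμ)) / (2λμ), where all square roots are the nonnegative real square root. -/
open Real MeasureTheory intervalIntegral Set

lemma key (a b z : ℝ) (hab : a < b) (hza : z < a) :
    ∫ x in a..b, (x - z)⁻¹ * Real.sqrt ((x - a) * (b - x))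
      = π * ((a + b) / 2 - z - Real.sqrt ((z - a) * (z - b))) := by
  set c : ℝ := (a + b) / 2 with hc
  set r : ℝ := (b - a) / 2 with hrdef
  have hr : 0 < r := by simp [hrdef]; linarith
  have hcz : r < c - z := by simp [hc, hrdef]; linarith
  have hczpos : 0 < c - z := by linarith
  clear_value c r
  set s : ℝ := Real.sqrt ((z - a) * (z - b)) with hsdef
  have hprod : (z - a) * (z - b) = (c - z) ^ 2 - r ^ 2 := by simp [hc, hrdef]; ring
  have hprodpos : 0 < (z - a) * (z - b) := by nlinarith
  have hs2 : s ^ 2 = (c - z) ^ 2 - r ^ 2 := by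
    rw [hsdef, sq_sqrt hprodpos.le, hprod]
  have hspos : 0 < s := Real.sqrt_pos.mpr hprodpos
  clear_value s
  set F : ℝ → ℝ := fun x => Real.sqrt (r ^ 2 - (x - c) ^ 2)
    + (c - z) * Real.arcsin ((x - c) / r)
    - s * Real.arcsin ((r ^ 2 - (z - c) * (x - c)) / (r * (x - z))) with hF
  have hderiv : ∀ x ∈ Ioo a b,
      HasDerivAt F ((x - z)⁻¹ * Real.sqrt ((x - a) * (b - x))) x := by
    intro x hx
    obtain ⟨hxa, hxb⟩ := hx
    have hxz : 0 < x - z := by linarith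
    have hQ2pos : 0 < r ^ 2 - (x - c) ^ 2 := by
      have : r ^ 2 - (x - c) ^ 2 = (x - a) * (b - x) := by simp [hc, hrdef]; ring
      rw [this]; nlinarith
    set Q : ℝ := Real.sqrt (r ^ 2 - (x - c) ^ 2) with hQdef
    have hQpos : 0 < Q := Real.sqrt_pos.mpr hQ2pos
    have hQ2 : Q ^ 2 = r ^ 2 - (x - c) ^ 2 := sq_sqrt hQ2pos.le
    have hQeq : Real.sqrt ((x - a) * (b - x)) = Q := by
      rw [hQdef]; congr 1; simp [hc, hrdef]; ring
    -- term 1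
    have h1 : HasDerivAt (fun y : ℝ => Real.sqrt (r ^ 2 - (y - c) ^ 2))
        (1 / (2 * Q) * (-(2 * (x - c)))) x := by
      have hin : HasDerivAt (fun y : ℝ => r ^ 2 - (y - c) ^ 2) (-(2 * (x - c))) x := by
        have := ((hasDerivAt_id x).sub_const c).pow 2
        have h2 := (hasDerivAt_const x (r ^ 2)).sub this
        refine h2.congr_deriv ?_; simp only [id_eq]; ring
      exact (Real.hasDerivAt_sqrt hQ2pos.ne').comp x hin
    clear_value Q
    -- term 2
    have ht : (x - c) / r ∈ Ioo (-1 : ℝ) 1 := by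
      constructor
      · rw [lt_div_iff₀ hr]; linarith
      · rw [div_lt_one hr]; linarith
    have h2 : HasDerivAt (fun y : ℝ => (c - z) * Real.arcsin ((y - c) / r))
        ((c - z) * (1 / Real.sqrt (1 - ((x - c) / r) ^ 2) * (1 / r))) x := by
      have hin : HasDerivAt (fun y : ℝ => (y - c) / r) (1 / r) x := by
        have := ((hasDerivAt_id x).sub_const c).div_const r
        simpa using this
      exact ((Real.hasDerivAt_arcsin ht.1.ne' ht.2.ne).comp x hin).const_mul (c - z)
    have hsq1 : Real.sqrt (1 - ((x - c) / r) ^ 2) = Q / r := by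
      rw [show (1 : ℝ) - ((x - c) / r) ^ 2 = (Q / r) ^ 2 by
        field_simp; rw [hQ2]]
      exact Real.sqrt_sq (by positivity)
    -- term 3
    set g : ℝ → ℝ := fun y => (r ^ 2 - (z - c) * (y - c)) / (r * (y - z)) with hg
    have hgx : 1 - g x ^ 2 = (s * Q / (r * (x - z))) ^ 2 := by
      rw [hg]; field_simp
      linear_combination (-(Q ^ 2)) * hs2 - ((c - z) ^ 2 - r ^ 2) * hQ2
    have hsq2 : Real.sqrt (1 - g x ^ 2) = s * Q / (r * (x - z)) := by
      rw [hgx]; exact Real.sqrt_sq (by positivity)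
    have hgxpos : 0 < 1 - g x ^ 2 := by
      rw [hgx]; positivity
    have hg1 : g x ≠ 1 := by nlinarith [sq_nonneg (g x)]
    have hgm1 : g x ≠ -1 := by
      intro h; rw [h] at hgxpos; norm_num at hgxpos
    have hgd : HasDerivAt g
        ((-(z - c) * (r * (x - z)) - (r ^ 2 - (z - c) * (x - c)) * r) / (r * (x - z)) ^ 2) x := by
      have hnum : HasDerivAt (fun y : ℝ => r ^ 2 - (z - c) * (y - c)) (-(z - c)) x := by
        have := (((hasDerivAt_id x).sub_const c).const_mul (z - c))
        have h2 := (hasDerivAt_const x (r ^ 2)).sub this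
        refine h2.congr_deriv ?_; ring
      have hden : HasDerivAt (fun y : ℝ => r * (y - z)) r x := by
        have := ((hasDerivAt_id x).sub_const z).const_mul r
        simpa using this
      exact hnum.div hden (by positivity)
    have h3 : HasDerivAt (fun y : ℝ => s * Real.arcsin (g y))
        (s * (1 / Real.sqrt (1 - g x ^ 2) *
          ((-(z - c) * (r * (x - z)) - (r ^ 2 - (z - c) * (x - c)) * r) / (r * (x - z)) ^ 2))) x := by
      exact ((Real.hasDerivAt_arcsin hgm1 hg1).comp x hgd).const_mul s
    have hsum := (h1.add h2).sub h3
    refine hsum.congr_deriv ?_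
    rw [hsq1, hsq2, hQeq]
    have hrne : r ≠ 0 := hr.ne'
    have hxzne : (x - z) ≠ 0 := hxz.ne'
    have hQne : Q ≠ 0 := hQpos.ne'
    have hsne : s ≠ 0 := hspos.ne'
    field_simp
    linear_combination (-1 : ℝ) * hQ2
  have hzb : z < b := lt_trans hza hab
  have hgcont : ContinuousOn (fun y : ℝ => (r ^ 2 - (z - c) * (y - c)) / (r * (y - z))) (Icc a b) := by
    apply ContinuousOn.div
    · exact (continuous_const.sub (continuous_const.mul
        (continuous_id.sub continuous_const))).continuousOn
    · exact (continuous_const.mul (continuous_id.sub continuous_const)).continuousOn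
    · intro y hy
      have : 0 < y - z := by have := hy.1; linarith
      positivity
  have hcont : ContinuousOn F (Icc a b) := by
    rw [hF]
    apply ContinuousOn.sub
    · apply ContinuousOn.add
      · exact (Real.continuous_sqrt.comp (continuous_const.sub
          ((continuous_id.sub continuous_const).pow 2))).continuousOn
      · exact (continuous_const.mul (Real.continuous_arcsin.comp
          ((continuous_id.sub continuous_const).div_const r))).continuousOn
    · exact continuousOn_const.mul (Real.continuous_arcsin.comp_continuousOn hgcont)
  have hint : IntervalIntegrable (fun x => (x - z)⁻¹ * Real.sqrt ((x - a) * (b - x)))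
      volume a b := by
    apply ContinuousOn.intervalIntegrable
    rw [uIcc_of_le hab.le]
    apply ContinuousOn.mul
    · apply ContinuousOn.inv₀
      · exact (continuous_id.sub continuous_const).continuousOn
      · intro y hy
        have : 0 < y - z := by have := hy.1; linarith
        exact this.ne'
    · exact (Real.continuous_sqrt.comp ((continuous_id.sub continuous_const).mul
        (continuous_const.sub continuous_id))).continuousOn
  rw [intervalIntegral.integral_eq_sub_of_hasDeriv_right_of_le hab.le hcont
    (fun x hx => (hderiv x hx).hasDerivWithinAt) hint]
  have hb0 : r ^ 2 - (b - c) ^ 2 = 0 := by rw [hc, hrdef]; ring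
  have ha0 : r ^ 2 - (a - c) ^ 2 = 0 := by rw [hc, hrdef]; ring
  have hb1 : (b - c) / r = 1 := by
    rw [div_eq_one_iff_eq hr.ne', hc, hrdef]; ring
  have ha1 : (a - c) / r = -1 := by
    rw [div_eq_iff hr.ne', hc, hrdef]; ring
  have hb2 : (r ^ 2 - (z - c) * (b - c)) / (r * (b - z)) = 1 := by
    rw [div_eq_one_iff_eq (mul_pos hr (by linarith : (0:ℝ) < b - z)).ne']
    rw [hc, hrdef]; ring
  have ha2 : (r ^ 2 - (z - c) * (a - c)) / (r * (a - z)) = -1 := by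
    rw [div_eq_iff (mul_pos hr (by linarith : (0:ℝ) < a - z)).ne', hc, hrdef]; ring
  rw [hF]
  simp only [hb0, ha0, hb1, ha1, hb2, ha2, Real.sqrt_zero, Real.arcsin_one,
    Real.arcsin_neg_one, ← hsdef]
  rw [hc]
  ring

/-- The Stieltjes transform of the spectral measure of the absorbing `M/M/1` queue:
for `z < 0`,
`∫ (x-z)⁻¹ √((x-σ₋)(σ₊-x))/(2πλμ) dx = (λ+μ-z-√((λ+μ-z)²-4λμ))/(2λμ)`. -/
theorem mm1_stieltjes_transform (lam mu : ℝ) (hlam : 0 < lam) (hmu : 0 < mu)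
    (z : ℝ) (hz : z < 0) :
    ∫ x in ((Real.sqrt lam - Real.sqrt mu) ^ 2)..((Real.sqrt lam + Real.sqrt mu) ^ 2),
        (x - z)⁻¹ * Real.sqrt ((x - (Real.sqrt lam - Real.sqrt mu) ^ 2) *
          ((Real.sqrt lam + Real.sqrt mu) ^ 2 - x)) / (2 * Real.pi * lam * mu)
      = (lam + mu - z - Real.sqrt ((lam + mu - z) ^ 2 - 4 * lam * mu)) / (2 * lam * mu) := by
  have hl : Real.sqrt lam ^ 2 = lam := Real.sq_sqrt hlam.le
  have hm : Real.sqrt mu ^ 2 = mu := Real.sq_sqrt hmu.le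
  have hlp : 0 < Real.sqrt lam := Real.sqrt_pos.mpr hlam
  have hmp : 0 < Real.sqrt mu := Real.sqrt_pos.mpr hmu
  have hab : (Real.sqrt lam - Real.sqrt mu) ^ 2 < (Real.sqrt lam + Real.sqrt mu) ^ 2 := by
    nlinarith
  have hza : z < (Real.sqrt lam - Real.sqrt mu) ^ 2 :=
    lt_of_lt_of_le hz (sq_nonneg _)
  rw [intervalIntegral.integral_div, key _ _ z hab hza]
  have h2 : Real.sqrt ((z - (Real.sqrt lam - Real.sqrt mu) ^ 2) *
      (z - (Real.sqrt lam + Real.sqrt mu) ^ 2))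
      = Real.sqrt ((lam + mu - z) ^ 2 - 4 * lam * mu) := by
    congr 1
    linear_combination (-2*z + (Real.sqrt lam ^ 2 - Real.sqrt mu ^ 2 + lam - mu)) * hl
      + (-2*z - (Real.sqrt lam ^ 2 - Real.sqrt mu ^ 2 + lam - mu)) * hm
  rw [h2]
  have h1 : ((Real.sqrt lam - Real.sqrt mu) ^ 2 + (Real.sqrt lam + Real.sqrt mu) ^ 2) / 2
      = lam + mu := by linear_combination hl + hm
  rw [h1]
  field_simp [Real.pi_ne_zero]
end

section
/- Let λ, μ > 0, σ_± = (√λ ± √μ)², and for an integer n define I_n(z) = (1/π) ∫_0^π e^{z·cos θ} cos(nθ) dθ. Then for all integers i, j ≥ 0 and all t ≥ 0: (√(λ/μ))^{j-i} · ∫_{σ_-}^{σ_+} e^{-xt} U_i((λ+μ-x)/(2√(λμ))) U_j((λ+μ-x)/(2√(λμ))) · √((x-σ_-)(σ_+-x))/(2πλμ) dx = e^{-(λ+μ)t} (√(λ/μ))^{j-i} [ I_{i-j}(2√(λμ)·t) - I_{i+j+2}(2√(λμ)·t) ]. -/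
open Real MeasureTheory intervalIntegral Polynomial

/-- Closed-form Karlin–McGregor transition probabilities of the absorbing `M/M/1` queue:
the spectral integral equals an expression in modified Bessel functions of the first kind. -/
theorem mm1_transition_probability (lam mu : ℝ) (hlam : 0 < lam) (hmu : 0 < mu)
    (I : ℤ → ℝ → ℝ)
    (hI : ∀ (n : ℤ) (z : ℝ),
      I n z = (1 / Real.pi) * ∫ θ in (0:ℝ)..Real.pi,
        Real.exp (z * Real.cos θ) * Real.cos (n * θ))
    (i j : ℤ) (hi : 0 ≤ i) (hj : 0 ≤ j) (t : ℝ) (ht : 0 ≤ t) :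
    (Real.sqrt (lam / mu)) ^ (j - i) *
      ∫ x in ((Real.sqrt lam - Real.sqrt mu) ^ 2)..((Real.sqrt lam + Real.sqrt mu) ^ 2),
        Real.exp (-x * t) *
          (Polynomial.Chebyshev.U ℝ i).eval ((lam + mu - x) / (2 * Real.sqrt (lam * mu))) *
          (Polynomial.Chebyshev.U ℝ j).eval ((lam + mu - x) / (2 * Real.sqrt (lam * mu))) *
          (Real.sqrt ((x - (Real.sqrt lam - Real.sqrt mu) ^ 2) *
            ((Real.sqrt lam + Real.sqrt mu) ^ 2 - x)) / (2 * Real.pi * lam * mu))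
      = Real.exp (-(lam + mu) * t) * (Real.sqrt (lam / mu)) ^ (j - i) *
          (I (i - j) (2 * Real.sqrt (lam * mu) * t) - I (i + j + 2) (2 * Real.sqrt (lam * mu) * t)) := by
  have hlm0 : (0:ℝ) < lam * mu := mul_pos hlam hmu
  set s := Real.sqrt (lam * mu) with hsdef
  have hs : 0 < s := Real.sqrt_pos.2 hlm0
  have hs2 : s ^ 2 = lam * mu := Real.sq_sqrt hlm0.le
  have hsplit : Real.sqrt lam * Real.sqrt mu = s := (Real.sqrt_mul hlam.le mu).symm
  have hla : Real.sqrt lam ^ 2 = lam := Real.sq_sqrt hlam.le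
  have hmb : Real.sqrt mu ^ 2 = mu := Real.sq_sqrt hmu.le
  set σm := (Real.sqrt lam - Real.sqrt mu) ^ 2 with hσm
  set σp := (Real.sqrt lam + Real.sqrt mu) ^ 2 with hσp
  have e0 : σm = lam + mu - 2 * s := by rw [hσm]; linear_combination hla + hmb - 2 * hsplit
  have e1 : σp = lam + mu + 2 * s := by rw [hσp]; linear_combination hla + hmb + 2 * hsplit
  set g : ℝ → ℝ := fun x => Real.exp (-x * t) *
          (Polynomial.Chebyshev.U ℝ i).eval ((lam + mu - x) / (2 * s)) *
          (Polynomial.Chebyshev.U ℝ j).eval ((lam + mu - x) / (2 * s)) *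
          (Real.sqrt ((x - σm) * (σp - x)) / (2 * Real.pi * lam * mu)) with hg
  have hgc : Continuous g := by
    rw [hg]; fun_prop
  have hf : ∀ θ ∈ Set.uIcc (0:ℝ) Real.pi,
      HasDerivAt (fun θ : ℝ => lam + mu - 2 * s * Real.cos θ) (2 * s * Real.sin θ) θ := by
    intro θ _
    have h := ((Real.hasDerivAt_cos θ).const_mul (2 * s)).const_sub (lam + mu)
    exact h.congr_deriv (by ring)
  have hf' : ContinuousOn (fun θ : ℝ => 2 * s * Real.sin θ) (Set.uIcc (0:ℝ) Real.pi) := by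
    fun_prop
  have hsub := intervalIntegral.integral_comp_smul_deriv hf hf' hgc
  have e00 : lam + mu - 2 * s * Real.cos 0 = σm := by rw [Real.cos_zero, e0]; ring
  have e11 : lam + mu - 2 * s * Real.cos Real.pi = σp := by rw [Real.cos_pi, e1]; ring
  rw [e00, e11] at hsub
  simp only [Function.comp_apply] at hsub
  -- pointwise identity
  have hpt : Set.EqOn (fun θ => (2 * s * Real.sin θ) • g (lam + mu - 2 * s * Real.cos θ))
      (fun θ => (2 / Real.pi) * Real.exp (-(lam + mu) * t) *
        (Real.exp (2 * s * t * Real.cos θ) * Real.sin (((i:ℝ) + 1) * θ) * Real.sin (((j:ℝ) + 1) * θ)))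
      (Set.uIcc (0:ℝ) Real.pi) := by
    intro θ hθ
    rw [Set.uIcc_of_le Real.pi_pos.le] at hθ
    have hsin : 0 ≤ Real.sin θ := Real.sin_nonneg_of_nonneg_of_le_pi hθ.1 hθ.2
    have hcosarg : (lam + mu - (lam + mu - 2 * s * Real.cos θ)) / (2 * s) = Real.cos θ := by
      field_simp
      ring
    have hpy := Real.sin_sq_add_cos_sq θ
    have harg : ((lam + mu - 2 * s * Real.cos θ) - σm) * (σp - (lam + mu - 2 * s * Real.cos θ))
        = (2 * s * Real.sin θ) ^ 2 := by
      rw [e0, e1]; linear_combination (-4 * s ^ 2) * hpy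
    have hsqrt : Real.sqrt (((lam + mu - 2 * s * Real.cos θ) - σm) *
        (σp - (lam + mu - 2 * s * Real.cos θ))) = 2 * s * Real.sin θ := by
      rw [harg, Real.sqrt_sq (by positivity)]
    have hexp : Real.exp (-(lam + mu - 2 * s * Real.cos θ) * t)
        = Real.exp (-(lam + mu) * t) * Real.exp (2 * s * t * Real.cos θ) := by
      rw [← Real.exp_add]; congr 1; ring
    have hUi := Polynomial.Chebyshev.U_real_cos θ i
    have hUj := Polynomial.Chebyshev.U_real_cos θ j
    simp only [hg, smul_eq_mul]
    rw [hcosarg, hsqrt, hexp]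
    have hπ : Real.pi ≠ 0 := Real.pi_ne_zero
    have hconst : 4 * (lam * mu) / (2 * Real.pi * lam * mu) = 2 / Real.pi := by
      field_simp
      ring
    calc 2 * s * Real.sin θ *
          (Real.exp (-(lam + mu) * t) * Real.exp (2 * s * t * Real.cos θ) *
            (Polynomial.Chebyshev.U ℝ i).eval (Real.cos θ) *
            (Polynomial.Chebyshev.U ℝ j).eval (Real.cos θ) *
            (2 * s * Real.sin θ / (2 * Real.pi * lam * mu)))
        = ((Polynomial.Chebyshev.U ℝ i).eval (Real.cos θ) * Real.sin θ) *
            ((Polynomial.Chebyshev.U ℝ j).eval (Real.cos θ) * Real.sin θ) *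
            (Real.exp (-(lam + mu) * t) * Real.exp (2 * s * t * Real.cos θ)) *
            (4 * s ^ 2 / (2 * Real.pi * lam * mu)) := by ring
      _ = Real.sin (((i:ℝ) + 1) * θ) * Real.sin (((j:ℝ) + 1) * θ) *
            (Real.exp (-(lam + mu) * t) * Real.exp (2 * s * t * Real.cos θ)) *
            (4 * (lam * mu) / (2 * Real.pi * lam * mu)) := by rw [hUi, hUj, hs2]
      _ = 2 / Real.pi * Real.exp (-(lam + mu) * t) *
            (Real.exp (2 * s * t * Real.cos θ) * Real.sin (((i:ℝ) + 1) * θ) *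
              Real.sin (((j:ℝ) + 1) * θ)) := by rw [hconst]; ring
  rw [← hsub, intervalIntegral.integral_congr hpt, intervalIntegral.integral_const_mul]
  rw [hI, hI]
  -- combine the two Bessel integrals
  have hcont1 : Continuous (fun θ : ℝ => Real.exp (2 * s * t * Real.cos θ) * Real.cos ((i - j : ℤ) * θ)) := by fun_prop
  have hcont2 : Continuous (fun θ : ℝ => Real.exp (2 * s * t * Real.cos θ) * Real.cos ((i + j + 2 : ℤ) * θ)) := by fun_prop
  have hcomb : (∫ θ in (0:ℝ)..Real.pi, Real.exp (2 * s * t * Real.cos θ) * Real.cos ((i - j : ℤ) * θ))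
      - (∫ θ in (0:ℝ)..Real.pi, Real.exp (2 * s * t * Real.cos θ) * Real.cos ((i + j + 2 : ℤ) * θ))
      = 2 * ∫ θ in (0:ℝ)..Real.pi,
          Real.exp (2 * s * t * Real.cos θ) * Real.sin (((i:ℝ) + 1) * θ) * Real.sin (((j:ℝ) + 1) * θ) := by
    rw [← intervalIntegral.integral_sub (hcont1.intervalIntegrable 0 Real.pi)
        (hcont2.intervalIntegrable 0 Real.pi), ← intervalIntegral.integral_const_mul]
    apply intervalIntegral.integral_congr
    intro θ _
    simp only
    push_cast
    rw [← mul_sub, Real.cos_sub_cos]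
    have h1 : (((i:ℝ) - j) * θ + ((i:ℝ) + j + 2) * θ) / 2 = ((i:ℝ) + 1) * θ := by ring
    have h2 : (((i:ℝ) - j) * θ - ((i:ℝ) + j + 2) * θ) / 2 = -(((j:ℝ) + 1) * θ) := by ring
    rw [h1, h2, Real.sin_neg]
    ring
  have hπ : Real.pi ≠ 0 := Real.pi_ne_zero
  generalize Real.sqrt (lam / mu) ^ (j - i) = P
  linear_combination (-(P * Real.exp (-(lam + mu) * t)) / Real.pi) * hcomb
end

section
/- Let λ, μ > 0, σ_± = (√λ ± √μ)², y = (λ+μ-x)/(2√(λμ)), and let Q_n^1, Q_n^2 (n ∈ ℤ) be defined by Q_n^1(x) = (μ/λ)^{n/2} U_n(y), Q_{-n-1}^1(x) = -(λ/μ)^{(n+1)/2} U_{n-1}(y), Q_n^2(x) = -(μ/λ)^{(n+1)/2} U_{n-1}(y), Q_{-n-1}^2(x) = (λ/μ)^{n/2} U_n(y) for n ≥ 0. For an integer n define I_n(z) = (1/π) ∫_0^π e^{z·cos θ} cos(nθ) dθ. Then for all i, j ∈ ℤ and all t ≥ 0: (λ/μ)^j ∫_{σ_-}^{σ_+} e^{-xt}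 [ Q_i^1(x)Q_j^1(x) + ((λ+μ-x)/(2μ))(Q_i^1(x)Q_j^2(x) + Q_i^2(x)Q_j^1(x)) + (λ/μ)·Q_i^2(x)Q_j^2(x) ] · (π√((x-σ_-)(σ_+-x)))^{-1} dx = e^{-(λ+μ)t} (√(λ/μ))^{j-i} I_{j-i}(2√(λμ)·t). -/
open Real Polynomial MeasureTheory intervalIntegral

lemma trig_key' (a b c : ℝ) :
    Real.sin (a + c) * Real.sin (b + c)
      - Real.cos c * (Real.sin (a + c) * Real.sin b + Real.sin a * Real.sin (b + c))
      + Real.sin a * Real.sin b = Real.cos (b - a) * Real.sin c ^ 2 := by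
  rw [Real.sin_add, Real.sin_add, Real.cos_sub]
  linear_combination (-(Real.sin a * Real.sin b)) * Real.sin_sq_add_cos_sq c

lemma cheb_key' (i j : ℤ) (θ : ℝ) (hs : Real.sin θ ≠ 0) :
    (Chebyshev.U ℝ i).eval (Real.cos θ) * (Chebyshev.U ℝ j).eval (Real.cos θ)
      - Real.cos θ * ((Chebyshev.U ℝ i).eval (Real.cos θ) * (Chebyshev.U ℝ (j-1)).eval (Real.cos θ)
        + (Chebyshev.U ℝ (i-1)).eval (Real.cos θ) * (Chebyshev.U ℝ j).eval (Real.cos θ))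
      + (Chebyshev.U ℝ (i-1)).eval (Real.cos θ) * (Chebyshev.U ℝ (j-1)).eval (Real.cos θ)
    = Real.cos (((j : ℝ) - (i : ℝ)) * θ) := by
  have hi : (Chebyshev.U ℝ i).eval (Real.cos θ) * Real.sin θ
      = Real.sin ((i : ℝ) * θ + θ) := by
    rw [Chebyshev.U_real_cos]; ring_nf
  have hj : (Chebyshev.U ℝ j).eval (Real.cos θ) * Real.sin θ
      = Real.sin ((j : ℝ) * θ + θ) := by
    rw [Chebyshev.U_real_cos]; ring_nf
  have hi' : (Chebyshev.U ℝ (i-1)).eval (Real.cos θ) * Real.sin θ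
      = Real.sin ((i : ℝ) * θ) := by
    rw [Chebyshev.U_real_cos]; push_cast; ring_nf
  have hj' : (Chebyshev.U ℝ (j-1)).eval (Real.cos θ) * Real.sin θ
      = Real.sin ((j : ℝ) * θ) := by
    rw [Chebyshev.U_real_cos]; push_cast; ring_nf
  have key := trig_key' ((i:ℝ)*θ) ((j:ℝ)*θ) θ
  apply mul_right_cancel₀ (pow_ne_zero 2 hs)
  rw [sub_mul]
  linear_combination
    ((Chebyshev.U ℝ j).eval (Real.cos θ) * Real.sin θ) * hi
      + Real.sin ((i:ℝ)*θ + θ) * hj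
    - Real.cos θ * (((Chebyshev.U ℝ (j-1)).eval (Real.cos θ) * Real.sin θ) * hi
      + Real.sin ((i:ℝ)*θ + θ) * hj')
    - Real.cos θ * (((Chebyshev.U ℝ j).eval (Real.cos θ) * Real.sin θ) * hi'
      + Real.sin ((i:ℝ)*θ) * hj)
    + ((Chebyshev.U ℝ (j-1)).eval (Real.cos θ) * Real.sin θ) * hi'
      + Real.sin ((i:ℝ)*θ) * hj'
    + key

/-- The Karlin–McGregor formula for the bilateral birth-death process on `ℤ` with constant
rates gives the transition probabilities in terms of a modified Bessel function of the
first kind. -/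
theorem bilateral_constant_karlin_mcgregor (lam mu : ℝ) (hlam : 0 < lam) (hmu : 0 < mu)
    (Q1 Q2 : ℤ → ℝ → ℝ)
    (hQ1p : ∀ n : ℤ, 0 ≤ n → ∀ x : ℝ,
      Q1 n x = (mu / lam) ^ ((n : ℝ) / 2) *
        (Polynomial.Chebyshev.U ℝ n).eval ((lam + mu - x) / (2 * Real.sqrt (lam * mu))))
    (hQ1m : ∀ n : ℤ, 0 ≤ n → ∀ x : ℝ,
      Q1 (-n - 1) x = -(lam / mu) ^ (((n : ℝ) + 1) / 2) *
        (Polynomial.Chebyshev.U ℝ (n - 1)).eval ((lam + mu - x) / (2 * Real.sqrt (lam * mu))))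
    (hQ2p : ∀ n : ℤ, 0 ≤ n → ∀ x : ℝ,
      Q2 n x = -(mu / lam) ^ (((n : ℝ) + 1) / 2) *
        (Polynomial.Chebyshev.U ℝ (n - 1)).eval ((lam + mu - x) / (2 * Real.sqrt (lam * mu))))
    (hQ2m : ∀ n : ℤ, 0 ≤ n → ∀ x : ℝ,
      Q2 (-n - 1) x = (lam / mu) ^ ((n : ℝ) / 2) *
        (Polynomial.Chebyshev.U ℝ n).eval ((lam + mu - x) / (2 * Real.sqrt (lam * mu))))
    (I : ℤ → ℝ → ℝ)
    (hI : ∀ (n : ℤ) (z : ℝ),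
      I n z = (1 / Real.pi) * ∫ θ in (0:ℝ)..Real.pi,
        Real.exp (z * Real.cos θ) * Real.cos (n * θ))
    (i j : ℤ) (t : ℝ) (ht : 0 ≤ t) :
    (lam / mu) ^ j *
      ∫ x in ((Real.sqrt lam - Real.sqrt mu) ^ 2)..((Real.sqrt lam + Real.sqrt mu) ^ 2),
        Real.exp (-x * t) *
          (Q1 i x * Q1 j x + ((lam + mu - x) / (2 * mu)) * (Q1 i x * Q2 j x + Q2 i x * Q1 j x) +
            (lam / mu) * (Q2 i x * Q2 j x)) *
          (Real.pi * Real.sqrt ((x - (Real.sqrt lam - Real.sqrt mu) ^ 2) *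
            ((Real.sqrt lam + Real.sqrt mu) ^ 2 - x)))⁻¹
      = Real.exp (-(lam + mu) * t) * (Real.sqrt (lam / mu)) ^ (j - i) *
          I (j - i) (2 * Real.sqrt (lam * mu) * t) := by
  have hml : 0 < mu / lam := div_pos hmu hlam
  have hlm : 0 < lam / mu := div_pos hlam hmu
  have hs2 : 0 < Real.sqrt (lam * mu) := Real.sqrt_pos.2 (mul_pos hlam hmu)
  have hσm : (Real.sqrt lam - Real.sqrt mu) ^ 2 = lam + mu - 2 * Real.sqrt (lam * mu) := by
    rw [Real.sqrt_mul hlam.le]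
    linear_combination Real.sq_sqrt hlam.le + Real.sq_sqrt hmu.le
  have hσp : (Real.sqrt lam + Real.sqrt mu) ^ 2 = lam + mu + 2 * Real.sqrt (lam * mu) := by
    rw [Real.sqrt_mul hlam.le]
    linear_combination Real.sq_sqrt hlam.le + Real.sq_sqrt hmu.le
  have hadd : ∀ p q : ℝ, (mu/lam) ^ p * (mu/lam) ^ q = (mu/lam) ^ (p + q) :=
    fun p q => (Real.rpow_add hml p q).symm
  have hflip : ∀ e : ℝ, (lam/mu) ^ e = (mu/lam) ^ (-e) := by
    intro e
    rw [← inv_div mu lam, Real.inv_rpow hml.le, ← Real.rpow_neg hml.le]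
  -- uniform formulas for Q1 and Q2
  have hQ1 : ∀ (n : ℤ) (x : ℝ), Q1 n x = (mu/lam) ^ ((n:ℝ)/2) *
      (Chebyshev.U ℝ n).eval ((lam + mu - x) / (2 * Real.sqrt (lam * mu))) := by
    intro n x
    rcases le_or_gt 0 n with h | h
    · exact hQ1p n h x
    · have hm : 0 ≤ -n - 1 := by omega
      have h1 := hQ1m (-n-1) hm x
      rw [show -(-n-1) - 1 = n by ring] at h1
      rw [h1, show ((-n-1) - 1 : ℤ) = -n - 2 by ring, Chebyshev.U_neg_sub_two,
        Polynomial.eval_neg, hflip,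
        show -(((((-n-1 : ℤ) : ℝ)) + 1) / 2) = (n:ℝ)/2 by push_cast; ring]
      ring
  have hQ2 : ∀ (n : ℤ) (x : ℝ), Q2 n x = -(mu/lam) ^ (((n:ℝ)+1)/2) *
      (Chebyshev.U ℝ (n-1)).eval ((lam + mu - x) / (2 * Real.sqrt (lam * mu))) := by
    intro n x
    rcases le_or_gt 0 n with h | h
    · exact hQ2p n h x
    · have hm : 0 ≤ -n - 1 := by omega
      have h2 := hQ2m (-n-1) hm x
      rw [show -(-n-1) - 1 = n by ring] at h2
      rw [h2, Chebyshev.U_neg_sub_one, Polynomial.eval_neg, hflip,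
        show -((((-n-1 : ℤ) : ℝ)) / 2) = ((n:ℝ)+1)/2 by push_cast; ring]
      ring
  -- geometry of the substitution x = lam + mu - 2 √(lam mu) cos θ
  have hle : lam + mu - 2 * Real.sqrt (lam * mu) ≤ lam + mu + 2 * Real.sqrt (lam * mu) := by
    linarith [hs2.le]
  have hder : ∀ θ ∈ Set.Icc (0:ℝ) Real.pi,
      HasDerivWithinAt (fun θ : ℝ => lam + mu - 2 * Real.sqrt (lam * mu) * Real.cos θ)
        (2 * Real.sqrt (lam * mu) * Real.sin θ) (Set.Icc 0 Real.pi) θ := by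
    intro θ _
    have h := ((Real.hasDerivAt_cos θ).const_mul (2 * Real.sqrt (lam * mu))).const_sub (lam + mu)
    have h2 : 2 * Real.sqrt (lam * mu) * Real.sin θ = -(2 * Real.sqrt (lam * mu) * -Real.sin θ) := by
      ring
    rw [h2]
    exact h.hasDerivWithinAt
  have hinj : Set.InjOn (fun θ : ℝ => lam + mu - 2 * Real.sqrt (lam * mu) * Real.cos θ)
      (Set.Icc 0 Real.pi) := by
    intro a ha b hb hab
    simp only at hab
    apply Real.injOn_cos ha hb
    apply mul_left_cancel₀ (a := 2 * Real.sqrt (lam * mu)) (by positivity)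
    linarith [hab]
  have himg : (fun θ : ℝ => lam + mu - 2 * Real.sqrt (lam * mu) * Real.cos θ) '' Set.Icc 0 Real.pi
      = Set.Icc (lam + mu - 2 * Real.sqrt (lam * mu)) (lam + mu + 2 * Real.sqrt (lam * mu)) := by
    rw [show (fun θ : ℝ => lam + mu - 2 * Real.sqrt (lam * mu) * Real.cos θ)
        = (fun y : ℝ => lam + mu - y) ∘ (fun y : ℝ => 2 * Real.sqrt (lam * mu) * y) ∘ Real.cos
        from rfl, Set.image_comp, Set.image_comp, Real.bijOn_cos.image_eq,
      show ((fun y : ℝ => 2 * Real.sqrt (lam * mu) * y) '' Set.Icc (-1) 1)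
        = Set.Icc (2 * Real.sqrt (lam * mu) * (-1)) (2 * Real.sqrt (lam * mu) * 1)
        from Set.image_mul_left_Icc' (by positivity) (-1) 1,
      Set.image_const_sub_Icc]
    congr 1 <;> ring
  have hchg : ∀ G : ℝ → ℝ,
      (∫ x in Set.Icc (lam + mu - 2 * Real.sqrt (lam * mu)) (lam + mu + 2 * Real.sqrt (lam * mu)), G x)
        = ∫ θ in Set.Icc (0:ℝ) Real.pi,
            |2 * Real.sqrt (lam * mu) * Real.sin θ| • G (lam + mu - 2 * Real.sqrt (lam * mu) * Real.cos θ) := by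
    intro G
    rw [← himg]
    exact integral_image_eq_integral_abs_deriv_smul measurableSet_Icc hder hinj G
  -- rpow bookkeeping
  have hkey2 : Real.sqrt (mu / lam) = mu / Real.sqrt (lam * mu) := by
    rw [eq_div_iff hs2.ne', ← Real.sqrt_mul (div_pos hmu hlam).le,
      show mu / lam * (lam * mu) = mu ^ 2 by field_simp, Real.sqrt_sq hmu.le]
  have hsqdiv : (mu/lam) ^ (-(1:ℝ)/2) = Real.sqrt (lam * mu) / mu := by
    rw [show (-(1:ℝ)/2) = -((1:ℝ)/2) by ring, Real.rpow_neg hml.le, ← Real.sqrt_eq_rpow,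
      hkey2, inv_div]
  have e1 : (mu/lam) ^ ((i:ℝ)/2) * (mu/lam) ^ ((j:ℝ)/2) = (mu/lam) ^ (((i:ℝ)+(j:ℝ))/2) := by
    rw [hadd, show (i:ℝ)/2 + (j:ℝ)/2 = ((i:ℝ)+(j:ℝ))/2 by ring]
  have e2a : (mu/lam) ^ (-(1:ℝ)/2) * ((mu/lam) ^ ((i:ℝ)/2) * (mu/lam) ^ (((j:ℝ)+1)/2))
      = (mu/lam) ^ (((i:ℝ)+(j:ℝ))/2) := by
    rw [hadd, hadd, show (-(1:ℝ)/2) + ((i:ℝ)/2 + ((j:ℝ)+1)/2) = ((i:ℝ)+(j:ℝ))/2 by ring]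
  have e2b : (mu/lam) ^ (-(1:ℝ)/2) * ((mu/lam) ^ (((i:ℝ)+1)/2) * (mu/lam) ^ ((j:ℝ)/2))
      = (mu/lam) ^ (((i:ℝ)+(j:ℝ))/2) := by
    rw [hadd, hadd, show (-(1:ℝ)/2) + (((i:ℝ)+1)/2 + (j:ℝ)/2) = ((i:ℝ)+(j:ℝ))/2 by ring]
  have e3 : lam/mu * ((mu/lam) ^ (((i:ℝ)+1)/2) * (mu/lam) ^ (((j:ℝ)+1)/2))
      = (mu/lam) ^ (((i:ℝ)+(j:ℝ))/2) := by
    rw [hadd, show ((i:ℝ)+1)/2 + ((j:ℝ)+1)/2 = ((i:ℝ)+(j:ℝ))/2 + 1 by ring,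
      Real.rpow_add hml, Real.rpow_one]
    field_simp
  have hconst : (lam/mu) ^ j * (mu/lam) ^ (((i:ℝ)+(j:ℝ))/2) = Real.sqrt (lam/mu) ^ (j - i) := by
    rw [show (mu/lam) = (lam/mu)⁻¹ by rw [inv_div], Real.inv_rpow hlm.le,
      ← Real.rpow_neg hlm.le, ← Real.rpow_intCast (lam/mu) j, ← Real.rpow_add hlm,
      ← Real.rpow_intCast (Real.sqrt (lam/mu)) (j-i), Real.sqrt_eq_rpow,
      ← Real.rpow_mul hlm.le]
    congr 1
    push_cast
    ring
  -- the pointwise identity on (0, π)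
  have hpt : Set.EqOn
      (fun θ : ℝ => |2 * Real.sqrt (lam * mu) * Real.sin θ| •
        (fun x : ℝ => Real.exp (-x * t) *
          (Q1 i x * Q1 j x + ((lam + mu - x) / (2 * mu)) * (Q1 i x * Q2 j x + Q2 i x * Q1 j x) +
            (lam / mu) * (Q2 i x * Q2 j x)) *
          (Real.pi * Real.sqrt ((x - (lam + mu - 2 * Real.sqrt (lam * mu))) *
            (lam + mu + 2 * Real.sqrt (lam * mu) - x)))⁻¹)
          (lam + mu - 2 * Real.sqrt (lam * mu) * Real.cos θ))
      (fun θ : ℝ => (Real.exp (-(lam + mu) * t) * (mu/lam) ^ (((i:ℝ)+(j:ℝ))/2) * Real.pi⁻¹) *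
        (Real.exp (2 * Real.sqrt (lam * mu) * t * Real.cos θ) * Real.cos (((j - i : ℤ) : ℝ) * θ)))
      (Set.Ioo 0 Real.pi) := by
    intro θ hθ
    have hsin : 0 < Real.sin θ := Real.sin_pos_of_pos_of_lt_pi hθ.1 hθ.2
    have hsne : 2 * Real.sqrt (lam * mu) * Real.sin θ ≠ 0 :=
      ne_of_gt (mul_pos (by positivity) hsin)
    simp only [smul_eq_mul]
    rw [abs_of_pos (mul_pos (by positivity) hsin)]
    rw [hQ1 i, hQ1 j, hQ2 i, hQ2 j]
    rw [show (lam + mu - (lam + mu - 2 * Real.sqrt (lam * mu) * Real.cos θ)) /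
        (2 * Real.sqrt (lam * mu)) = Real.cos θ by field_simp; ring]
    rw [show (lam + mu - (lam + mu - 2 * Real.sqrt (lam * mu) * Real.cos θ)) / (2 * mu)
        = (mu/lam) ^ (-(1:ℝ)/2) * Real.cos θ by rw [hsqdiv]; field_simp; ring]
    rw [show (lam + mu - 2 * Real.sqrt (lam * mu) * Real.cos θ -
          (lam + mu - 2 * Real.sqrt (lam * mu))) *
          (lam + mu + 2 * Real.sqrt (lam * mu) -
            (lam + mu - 2 * Real.sqrt (lam * mu) * Real.cos θ))
        = (2 * Real.sqrt (lam * mu) * Real.sin θ) ^ 2 by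
          linear_combination (-(2 * Real.sqrt (lam * mu)) ^ 2) * Real.sin_sq_add_cos_sq θ,
      Real.sqrt_sq (mul_pos (by positivity : (0:ℝ) < 2 * Real.sqrt (lam * mu)) hsin).le]
    rw [show -(lam + mu - 2 * Real.sqrt (lam * mu) * Real.cos θ) * t
        = -(lam + mu) * t + 2 * Real.sqrt (lam * mu) * t * Real.cos θ by ring, Real.exp_add]
    rw [Int.cast_sub]
    have ck := cheb_key' i j θ hsin.ne'
    have hcan : ∀ r : ℝ, (2 * Real.sqrt (lam * mu) * Real.sin θ) *
        (r * (Real.pi * (2 * Real.sqrt (lam * mu) * Real.sin θ))⁻¹) = r * Real.pi⁻¹ := by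
      intro r
      rw [mul_inv]
      field_simp
    rw [hcan]
    linear_combination
      (Real.exp (-(lam + mu) * t) * Real.exp (2 * Real.sqrt (lam * mu) * t * Real.cos θ) *
        Real.pi⁻¹ * ((Chebyshev.U ℝ i).eval (Real.cos θ) * (Chebyshev.U ℝ j).eval (Real.cos θ))) * e1
      - (Real.exp (-(lam + mu) * t) * Real.exp (2 * Real.sqrt (lam * mu) * t * Real.cos θ) *
        Real.pi⁻¹ * Real.cos θ * ((Chebyshev.U ℝ i).eval (Real.cos θ) *
          (Chebyshev.U ℝ (j-1)).eval (Real.cos θ))) * e2a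
      - (Real.exp (-(lam + mu) * t) * Real.exp (2 * Real.sqrt (lam * mu) * t * Real.cos θ) *
        Real.pi⁻¹ * Real.cos θ * ((Chebyshev.U ℝ (i-1)).eval (Real.cos θ) *
          (Chebyshev.U ℝ j).eval (Real.cos θ))) * e2b
      + (Real.exp (-(lam + mu) * t) * Real.exp (2 * Real.sqrt (lam * mu) * t * Real.cos θ) *
        Real.pi⁻¹ * ((Chebyshev.U ℝ (i-1)).eval (Real.cos θ) *
          (Chebyshev.U ℝ (j-1)).eval (Real.cos θ))) * e3
      + (Real.exp (-(lam + mu) * t) * Real.exp (2 * Real.sqrt (lam * mu) * t * Real.cos θ) *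
        Real.pi⁻¹ * (mu/lam) ^ (((i:ℝ)+(j:ℝ))/2)) * ck
  -- put everything together
  simp only [hσm, hσp]
  rw [hI]
  rw [intervalIntegral.integral_of_le hle, ← MeasureTheory.integral_Icc_eq_integral_Ioc,
    hchg, MeasureTheory.integral_Icc_eq_integral_Ioo,
    MeasureTheory.setIntegral_congr_fun measurableSet_Ioo hpt,
    MeasureTheory.integral_const_mul]
  rw [intervalIntegral.integral_of_le Real.pi_pos.le,
    MeasureTheory.integral_Ioc_eq_integral_Ioo]
  linear_combination (Real.exp (-(lam + mu) * t) * Real.pi⁻¹ *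
    ∫ θ in Set.Ioo (0:ℝ) Real.pi,
      Real.exp (2 * Real.sqrt (lam * mu) * t * Real.cos θ) * Real.cos (((j - i : ℤ) : ℝ) * θ)) * hconst
end

section
/- Let 0 < λ < μ, set σ_- = (√λ - √μ)² and σ_+ = (√λ + √μ)². Then for every real z < 0: ∫_{σ_-}^{σ_+} (x - z)^{-1} · (λ+μ)·√((x-σ_-)(σ_+-x)) / (2πμ·x·(2λ+2μ-x)) dx + ((μ-λ)/(2μ))·( 1/(0 - z) + 1/(2λ+2μ - z) ) = ( (λ-μ)(λ+μ-z) - (λ+μ)√((λ+μ-z)² - 4λμ) ) / ( 2μ·z·(2λ+2μ-z) ), where all square roots are the nonnegative real square root. -/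
open Real MeasureTheory intervalIntegral Set

lemma key_integral (a b p ε : ℝ) (hab : a < b)
    (hε : (ε = 1 ∧ p < a) ∨ (ε = -1 ∧ b < p)) :
    ∫ x in a..b, Real.sqrt ((x - a) * (b - x)) / (x - p)
      = Real.pi * ((a + b) / 2 - p - ε * Real.sqrt ((p - a) * (p - b))) := by
  have hq2' : 0 < (p - a) * (p - b) := by
    rcases hε with ⟨_, h⟩ | ⟨_, h⟩
    · exact mul_pos_of_neg_of_neg (by linarith) (by linarith)
    · exact mul_pos (by linarith) (by linarith)
  set q : ℝ := Real.sqrt ((p - a) * (p - b)) with hqdef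
  have hq0 : 0 < q := Real.sqrt_pos.2 hq2'
  have hq2 : q ^ 2 = (p - a) * (p - b) := Real.sq_sqrt hq2'.le
  have hε2 : ε ^ 2 = 1 := by rcases hε with ⟨h, _⟩ | ⟨h, _⟩ <;> rw [h] <;> norm_num
  have hεne : ε ≠ 0 := by intro h; rw [h] at hε2; norm_num at hε2
  have hxp : ∀ x ∈ Icc a b, 0 < ε * (x - p) := by
    intro x hx
    rcases hε with ⟨h, h'⟩ | ⟨h, h'⟩
    · rw [h]; nlinarith [hx.1]
    · rw [h]; nlinarith [hx.2]
  have hxpne : ∀ x ∈ Icc a b, x - p ≠ 0 := by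
    intro x hx h
    have := hxp x hx
    rw [h, mul_zero] at this
    exact lt_irrefl 0 this
  have hba : (0:ℝ) < b - a := by linarith
  set φ : ℝ → ℝ := fun x => ((2 * p - a - b) * x + 2 * a * b - p * (a + b)) / ((b - a) * (x - p))
    with hφdef
  set F : ℝ → ℝ := fun x => Real.sqrt ((x - a) * (b - x))
      + ((a + b) / 2 - p) * Real.arcsin ((2 * x - (a + b)) / (b - a))
      + ε * q * Real.arcsin (φ x) with hFdef
  have hcontφ : ContinuousOn φ (Icc a b) := by
    apply ContinuousOn.div (by fun_prop) (by fun_prop)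
    intro x hx h
    rcases mul_eq_zero.1 h with h | h
    · linarith
    · exact hxpne x hx h
  have hcont : ContinuousOn F (Icc a b) := by
    apply ContinuousOn.add
    apply ContinuousOn.add
    · exact (continuousOn_id.sub continuousOn_const).mul
        (continuousOn_const.sub continuousOn_id) |>.sqrt
    · exact continuousOn_const.mul (Real.continuous_arcsin.comp_continuousOn (by fun_prop))
    · exact continuousOn_const.mul (Real.continuous_arcsin.comp_continuousOn hcontφ)
  have hderiv : ∀ x ∈ Ioo a b, HasDerivAt F (Real.sqrt ((x - a) * (b - x)) / (x - p)) x := by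
    intro x hx
    have hxa : 0 < x - a := by linarith [hx.1]
    have hbx : 0 < b - x := by linarith [hx.2]
    have hR2' : 0 < (x - a) * (b - x) := mul_pos hxa hbx
    set R : ℝ := Real.sqrt ((x - a) * (b - x)) with hRdef
    have hR0 : 0 < R := Real.sqrt_pos.2 hR2'
    have hR2 : R ^ 2 = (x - a) * (b - x) := Real.sq_sqrt hR2'.le
    have hxIcc : x ∈ Icc a b := ⟨hx.1.le, hx.2.le⟩
    have hxp' : 0 < ε * (x - p) := hxp x hxIcc
    have hxpne' : x - p ≠ 0 := hxpne x hxIcc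
    -- derivative of first term
    have d1 : HasDerivAt (fun x => Real.sqrt ((x - a) * (b - x)))
        ((a + b - 2 * x) / (2 * R)) x := by
      have h : HasDerivAt (fun x : ℝ => (x - a) * (b - x)) (a + b - 2 * x) x := by
        have := (hasDerivAt_id' (𝕜 := ℝ) (x := x)).sub_const a |>.mul
          ((hasDerivAt_const x b).sub (hasDerivAt_id' (𝕜 := ℝ) (x := x)))
        refine HasDerivAt.congr_deriv this (Eq.symm ?_)
        simp only [Pi.sub_apply]
        ring
      exact h.sqrt (ne_of_gt hR2')
    -- derivative of second term
    have d2 : HasDerivAt (fun x => ((a + b) / 2 - p) * Real.arcsin ((2 * x - (a + b)) / (b - a)))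
        (((a + b) / 2 - p) / R) x := by
      have hu : HasDerivAt (fun y : ℝ => (2 * y - (a + b)) / (b - a)) (2 / (b - a)) x := by
        have := (((hasDerivAt_id' (𝕜 := ℝ) (x := x)).const_mul 2).sub_const (a + b)).div_const
          (b - a)
        simpa using this
      have harg : -1 < (2 * x - (a + b)) / (b - a) ∧ (2 * x - (a + b)) / (b - a) < 1 := by
        constructor
        · rw [lt_div_iff₀ hba]; nlinarith [hx.1]
        · rw [div_lt_iff₀ hba]; nlinarith [hx.2]
      have hs : Real.sqrt (1 - ((2 * x - (a + b)) / (b - a)) ^ 2) = 2 * R / (b - a) := by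
        rw [show (1 : ℝ) - ((2 * x - (a + b)) / (b - a)) ^ 2 = (2 * R / (b - a))^2 by
          rw [div_pow, div_pow, show (2 * R)^2 = 4 * R^2 by ring, hR2]
          field_simp
          ring]
        exact Real.sqrt_sq (by positivity)
      have := ((Real.hasDerivAt_arcsin (ne_of_gt harg.1) (ne_of_lt harg.2)).comp x hu).const_mul
        ((a + b) / 2 - p)
      refine HasDerivAt.congr_deriv this (Eq.symm ?_)
      rw [hs]
      field_simp
    -- derivative of φ
    have dφ : HasDerivAt φ (-2 * q ^ 2 / ((b - a) * (x - p) ^ 2)) x := by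
      have hnum : HasDerivAt (fun y : ℝ => (2 * p - a - b) * y + 2 * a * b - p * (a + b))
          (2 * p - a - b) x := by
        have := (((hasDerivAt_id' (𝕜 := ℝ) (x := x)).const_mul (2 * p - a - b)).add_const
          (2 * a * b)).sub_const (p * (a + b))
        simpa using this
      have hden : HasDerivAt (fun y : ℝ => (b - a) * (y - p)) (b - a) x := by
        have := ((hasDerivAt_id' (𝕜 := ℝ) (x := x)).sub_const p).const_mul (b - a)
        simpa using this
      have hdne : (b - a) * (x - p) ≠ 0 := mul_ne_zero (ne_of_gt hba) hxpne'
      have := hnum.div hden hdne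
      refine HasDerivAt.congr_deriv this (Eq.symm ?_)
      rw [hq2]
      field_simp
      ring
    have hDsq : ((b - a) * (ε * (x - p))) ^ 2 = ((b - a) * (x - p)) ^ 2 := by
      linear_combination ((b - a) ^ 2 * (x - p) ^ 2) * hε2
    have hdne : (b - a) * (x - p) ≠ 0 := mul_ne_zero (ne_of_gt hba) hxpne'
    have hφval : 1 - φ x ^ 2
        = 4 * ((p - a) * (p - b)) * ((x - a) * (b - x)) / (((b - a) * (x - p)) ^ 2) := by
      rw [hφdef]
      simp only
      field_simp
      ring
    have hφsq : 1 - φ x ^ 2 = (2 * q * R / ((b - a) * (ε * (x - p)))) ^ 2 := by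
      rw [hφval, div_pow, hDsq, show (2 * q * R) ^ 2 = 4 * q ^ 2 * R ^ 2 by ring, hq2, hR2]
      try ring
    have hφpos : 0 < 1 - φ x ^ 2 := by
      rw [hφsq]
      have h1 : (0:ℝ) < (b - a) * (ε * (x - p)) := by positivity
      positivity
    have hφs : Real.sqrt (1 - φ x ^ 2) = 2 * q * R / ((b - a) * (ε * (x - p))) := by
      rw [hφsq]
      refine Real.sqrt_sq ?_
      have h1 : (0:ℝ) < (b - a) * (ε * (x - p)) := by positivity
      positivity
    have hφne1 : φ x ≠ -1 ∧ φ x ≠ 1 := by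
      constructor <;> intro h <;> rw [h] at hφpos <;> norm_num at hφpos
    have d3 : HasDerivAt (fun x => ε * q * Real.arcsin (φ x))
        (-(q ^ 2) / ((x - p) * R)) x := by
      have := ((Real.hasDerivAt_arcsin hφne1.1 hφne1.2).comp x dφ).const_mul (ε * q)
      refine HasDerivAt.congr_deriv this (Eq.symm ?_)
      rw [hφs]
      field_simp
      linear_combination hε2
    have := (d1.add d2).add d3
    refine HasDerivAt.congr_deriv this (Eq.symm ?_)
    field_simp
    linear_combination 2 * hR2 + 2 * hq2
  have hint : IntervalIntegrable (fun x => Real.sqrt ((x - a) * (b - x)) / (x - p))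
      volume a b := by
    apply ContinuousOn.intervalIntegrable
    rw [uIcc_of_le hab.le]
    apply ContinuousOn.div
    · exact ((continuousOn_id.sub continuousOn_const).mul
        (continuousOn_const.sub continuousOn_id)).sqrt
    · fun_prop
    · exact fun x hx => hxpne x hx
  rw [integral_eq_sub_of_hasDerivAt_of_le hab.le hcont hderiv hint]
  have hφa : φ a = 1 := by
    rw [hφdef]
    simp only
    rw [div_eq_one_iff_eq (mul_ne_zero (ne_of_gt hba) (hxpne a ⟨le_refl a, hab.le⟩))]
    ring
  have hφb : φ b = -1 := by
    rw [hφdef]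
    simp only
    rw [div_eq_iff (mul_ne_zero (ne_of_gt hba) (hxpne b ⟨hab.le, le_refl b⟩))]
    ring
  rw [hFdef]
  simp only [hφa, hφb]
  rw [show (2 * b - (a + b)) / (b - a) = 1 by rw [div_eq_one_iff_eq (ne_of_gt hba)]; ring,
      show (2 * a - (a + b)) / (b - a) = -1 by rw [div_eq_iff (ne_of_gt hba)]; ring,
      show ((b:ℝ) - a) * (b - b) = 0 by ring, show ((a:ℝ) - a) * (b - a) = 0 by ring]
  rw [Real.arcsin_one, Real.arcsin_neg_one]
  simp [Real.sqrt_zero]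
  ring

lemma g_intable (a b p : ℝ) (hab : a ≤ b) (h : ∀ x ∈ Icc a b, x - p ≠ 0) :
    IntervalIntegrable (fun x => Real.sqrt ((x - a) * (b - x)) / (x - p)) volume a b := by
  apply ContinuousOn.intervalIntegrable
  rw [uIcc_of_le hab]
  apply ContinuousOn.div
  · exact ((continuousOn_id.sub continuousOn_const).mul
      (continuousOn_const.sub continuousOn_id)).sqrt
  · fun_prop
  · exact h

set_option maxHeartbeats 1000000 in
/-- Stieltjes transform of the `(1,1)`-entry of the spectral matrix of the symmetric
bilateral birth-death process with constant rates, for `0 < λ < μ`: absolutely continuous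
part on `[σ₋, σ₊]` plus two atoms of mass `(μ-λ)/(2μ)` at `0` and `2λ+2μ`. -/
theorem symmetric_bilateral_stieltjes_11 (lam mu : ℝ) (hlam : 0 < lam) (hlm : lam < mu)
    (z : ℝ) (hz : z < 0) :
    (∫ x in ((Real.sqrt lam - Real.sqrt mu) ^ 2)..((Real.sqrt lam + Real.sqrt mu) ^ 2),
        (x - z)⁻¹ * ((lam + mu) * Real.sqrt ((x - (Real.sqrt lam - Real.sqrt mu) ^ 2) *
          ((Real.sqrt lam + Real.sqrt mu) ^ 2 - x)) /
            (2 * Real.pi * mu * x * (2 * lam + 2 * mu - x))))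
      + ((mu - lam) / (2 * mu)) * (1 / (0 - z) + 1 / (2 * lam + 2 * mu - z))
      = ((lam - mu) * (lam + mu - z) -
          (lam + mu) * Real.sqrt ((lam + mu - z) ^ 2 - 4 * lam * mu)) /
        (2 * mu * z * (2 * lam + 2 * mu - z)) := by
  set sl : ℝ := Real.sqrt lam with hsl
  set sm : ℝ := Real.sqrt mu with hsm
  have hsl0 : 0 < sl := Real.sqrt_pos.2 hlam
  have hsm0 : 0 < sm := Real.sqrt_pos.2 (hlam.trans hlm)
  have hslm : sl < sm := by
    rw [hsl, hsm]
    exact Real.sqrt_lt_sqrt hlam.le hlm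
  have hsl2 : sl ^ 2 = lam := Real.sq_sqrt hlam.le
  have hsm2 : sm ^ 2 = mu := Real.sq_sqrt (hlam.trans hlm).le
  clear_value sl sm
  clear hsl hsm
  subst hsl2 hsm2
  set a : ℝ := (sl - sm) ^ 2 with ha
  set b : ℝ := (sl + sm) ^ 2 with hb
  set c : ℝ := 2 * sl ^ 2 + 2 * sm ^ 2 with hc
  have hslsm : sl - sm ≠ 0 := by intro h; nlinarith
  have hP0 : (0 - a) * (0 - b) = (sm^2 - sl^2)^2 := by rw [ha, hb]; ring
  have hPc : (c - a) * (c - b) = (sm^2 - sl^2)^2 := by rw [ha, hb, hc]; ring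
  have hPz : (z - a) * (z - b) = (sl^2 + sm^2 - z) ^ 2 - 4 * sl^2 * sm^2 := by
    rw [ha, hb]; ring
  have ha0' : 0 < a := by rw [ha]; positivity
  have hab' : a < b := by rw [ha, hb]; nlinarith
  have hbc' : b < c := by rw [hb, hc]; nlinarith
  have hab2 : a + b = c := by rw [ha, hb, hc]; ring
  clear_value a b c
  clear ha hb
  have ha0 : 0 < a := ha0'
  have hab : a < b := hab'
  have hbc : b < c := hbc'
  have hza : z < a := lt_trans hz ha0
  have hcz : 0 < c - z := by rw [hc]; nlinarith
  have hc0 : 0 < c := by rw [hc]; positivity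
  have hπ : (0:ℝ) < Real.pi := Real.pi_pos
  have hzne : z ≠ 0 := ne_of_lt hz
  have hcne : c ≠ 0 := ne_of_gt hc0
  have hczne : c - z ≠ 0 := ne_of_gt hcz
  -- the three basic integrands
  set g : ℝ → ℝ → ℝ := fun p x => Real.sqrt ((x - a) * (b - x)) / (x - p) with hg
  have hne0 : ∀ x ∈ Icc a b, x - 0 ≠ 0 := fun x hx => by
    have := hx.1; intro h; simp at h; linarith
  have hnec : ∀ x ∈ Icc a b, x - c ≠ 0 := fun x hx => by
    have := hx.2; intro h; nlinarith [hx.2]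
  have hnez : ∀ x ∈ Icc a b, x - z ≠ 0 := fun x hx => by
    have := hx.1; intro h; nlinarith [hx.1]
  set k0 : ℝ := -(sl^2 + sm^2) / (2 * Real.pi * sm^2 * c * z) with hk0
  set k1 : ℝ := -(sl^2 + sm^2) / (2 * Real.pi * sm^2 * c * (c - z)) with hk1
  set k2 : ℝ := (sl^2 + sm^2) / (2 * Real.pi * sm^2 * z * (c - z)) with hk2
  have heq : Set.EqOn
      (fun x => (x - z)⁻¹ * ((sl^2 + sm^2) * Real.sqrt ((x - a) * (b - x)) /
        (2 * Real.pi * sm^2 * x * (c - x))))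
      (fun x => k0 * g 0 x + (k1 * g c x + k2 * g z x)) (Set.uIcc a b) := by
    intro x hx
    rw [uIcc_of_le hab.le] at hx
    have h1 : x - 0 ≠ 0 := hne0 x hx
    have h2 : x - c ≠ 0 := hnec x hx
    have h3 : x - z ≠ 0 := hnez x hx
    have hx0 : x ≠ 0 := by simpa using h1
    have hcx : 2 * sl^2 + 2 * sm^2 - x ≠ 0 := by
      rw [← hc]; intro h; apply h2; linarith
    simp only [hg, hk0, hk1, hk2]
    have hcx' : c - x ≠ 0 := by rw [hc]; exact hcx
    field_simp
    ring
  rw [integral_congr heq]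
  have i0 := g_intable a b 0 hab.le hne0
  have ic := g_intable a b c hab.le hnec
  have iz := g_intable a b z hab.le hnez
  rw [integral_add (i0.const_mul k0) ((ic.const_mul k1).add (iz.const_mul k2)),
      integral_add (ic.const_mul k1) (iz.const_mul k2),
      intervalIntegral.integral_const_mul, intervalIntegral.integral_const_mul,
      intervalIntegral.integral_const_mul]
  rw [show ∫ x in a..b, g 0 x = ∫ x in a..b, Real.sqrt ((x - a) * (b - x)) / (x - 0) from rfl,
      show ∫ x in a..b, g c x = ∫ x in a..b, Real.sqrt ((x - a) * (b - x)) / (x - c) from rfl,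
      show ∫ x in a..b, g z x = ∫ x in a..b, Real.sqrt ((x - a) * (b - x)) / (x - z) from rfl]
  rw [key_integral a b 0 1 hab (Or.inl ⟨rfl, ha0⟩),
      key_integral a b c (-1) hab (Or.inr ⟨rfl, hbc⟩),
      key_integral a b z 1 hab (Or.inl ⟨rfl, hza⟩)]
  -- simplify the square roots
  have hs0 : Real.sqrt ((0 - a) * (0 - b)) = sm^2 - sl^2 := by
    rw [hP0]; exact Real.sqrt_sq (by nlinarith)
  have hsc : Real.sqrt ((c - a) * (c - b)) = sm^2 - sl^2 := by
    rw [hPc]; exact Real.sqrt_sq (by nlinarith)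
  have hsz : Real.sqrt ((z - a) * (z - b)) =
      Real.sqrt ((sl^2 + sm^2 - z) ^ 2 - 4 * sl^2 * sm^2) := by
    rw [hPz]
  rw [hs0, hsc, hsz]
  -- final algebra
  set S : ℝ := Real.sqrt ((sl^2 + sm^2 - z) ^ 2 - 4 * sl^2 * sm^2) with hS
  have hzne : z ≠ 0 := ne_of_lt hz
  rw [hk0, hk1, hk2, hab2, hc]
  have hcz' : 2 * sl ^ 2 + 2 * sm ^ 2 - z ≠ 0 := by rw [← hc]; exact hczne
  have hc0' : (2 * sl ^ 2 + 2 * sm ^ 2 : ℝ) ≠ 0 := by positivity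
  rw [show (0:ℝ) - z = -z by ring]
  have hnz : (-z : ℝ) ≠ 0 := by intro h; apply hzne; linarith
  field_simp
  have hd : (sl ^ 2 + sm ^ 2) * 2 - z ≠ 0 := by intro h; apply hcz'; linarith
  field_simp
  ring
end

section
/- Let λ, μ > 0 with λ ≠ μ, and set J_1 = [0, 2·min(λ,μ)] and J_2 = [2·max(λ,μ), 2λ+2μ]. Then for every real z < 0: ∫_{J_1 ∪ J_2} (x - z)^{-1} · (1/(2πλμ))·√( x(2μ-x)(2λ+2μ-x)/(2λ-x) ) dx = (1/(2λμ))·( 2μ - z - √( (-z)(2μ-z)(2λ+2μ-z)/(2λ-z) ) ), where all square roots are the nonnegative real square root (note that the arguments of the square roots are nonnegative on J_1 ∪ J_2 and for z < 0, respectively). -/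
open Real MeasureTheory

open Set

lemma aux_int_sqrt_inv (b : ℝ) :
    IntervalIntegrable (fun s => (Real.sqrt (b - s))⁻¹) volume 0 b := by
  have h : IntervalIntegrable (fun s : ℝ => s ^ (-(1/2) : ℝ)) volume 0 b :=
    intervalIntegral.intervalIntegrable_rpow' (by norm_num)
  have h2 := (h.comp_sub_left b).symm
  have h3 : (fun x : ℝ => (b - x) ^ (-(1/2) : ℝ)) = fun x => (Real.sqrt (b - x))⁻¹ := by
    funext x
    rcases le_or_gt 0 (b - x) with h | h
    · rw [Real.rpow_neg h, Real.sqrt_eq_rpow]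
    · rw [Real.sqrt_eq_zero'.mpr (by linarith), Real.rpow_def_of_neg h]
      rw [show (-(1/2):ℝ) * π = -(π/2) by ring, Real.cos_neg, Real.cos_pi_div_two]
      norm_num
  rw [h3] at h2
  simpa using h2

lemma aux_psi0_int (b A : ℝ) (hb : 0 < b) (hA : 0 < A) :
    IntervalIntegrable (fun s => Real.sqrt s / (Real.sqrt (b - s) * (s + A))) volume 0 b := by
  rw [intervalIntegrable_iff_integrableOn_Ioc_of_le hb.le]
  have hmaj : IntegrableOn (fun s => Real.sqrt b / A * (Real.sqrt (b - s))⁻¹) (Ioc 0 b) volume :=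
    (intervalIntegrable_iff_integrableOn_Ioc_of_le hb.le).mp
      ((aux_int_sqrt_inv b).const_mul (Real.sqrt b / A))
  apply Integrable.mono' hmaj
  · apply Measurable.aestronglyMeasurable
    fun_prop
  · filter_upwards [ae_restrict_mem measurableSet_Ioc] with s hs
    rcases eq_or_lt_of_le hs.2 with rfl | hsb
    · simp
    · have h1 : (0:ℝ) < Real.sqrt (b - s) := Real.sqrt_pos.mpr (by linarith)
      have h0s : (0:ℝ) < s := hs.1
      have hsA : (0:ℝ) < s + A := by linarith
      rw [Real.norm_of_nonneg (div_nonneg (Real.sqrt_nonneg _)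
        (mul_nonneg (Real.sqrt_nonneg _) hsA.le))]
      calc Real.sqrt s / (Real.sqrt (b - s) * (s + A))
          ≤ Real.sqrt b / (Real.sqrt (b - s) * A) :=
            div_le_div₀ (Real.sqrt_nonneg b) (Real.sqrt_le_sqrt hs.2) (mul_pos h1 hA)
              (mul_le_mul_of_nonneg_left (by linarith) h1.le)
        _ = Real.sqrt b / A * (Real.sqrt (b - s))⁻¹ := by ring

lemma aux_ftc (b A : ℝ) (hb : 0 < b) (hA : 0 < A) :
    ∫ s in (0:ℝ)..b, Real.sqrt s / (Real.sqrt (b - s) * (s + A))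
      = π * (1 - Real.sqrt (A / (A + b))) := by
  have hAb : 0 < A + b := by linarith
  set k := Real.sqrt (A / (A + b)) with hk
  set H : ℝ → ℝ := fun s => Real.arcsin ((2*s - b)/b)
      + k * Real.arcsin ((-((b + 2*A)/b) * s + A)/(s + A)) with hH
  have hcont : ContinuousOn H (Set.Icc 0 b) := by
    apply ContinuousOn.add
    · exact Real.continuous_arcsin.comp_continuousOn (by fun_prop)
    · apply ContinuousOn.mul continuousOn_const
      apply Real.continuous_arcsin.comp_continuousOn
      apply ContinuousOn.div (by fun_prop) (by fun_prop)
      intro s hs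
      have := hs.1
      intro hcontra; simp only [mem_Icc] at *
      nlinarith
  have hderiv : ∀ s ∈ Set.Ioo (0:ℝ) b, HasDerivWithinAt H
      (Real.sqrt s / (Real.sqrt (b - s) * (s + A))) (Set.Ioi s) s := by
    intro s hs
    obtain ⟨hs0, hsb⟩ := hs
    have hbs : (0:ℝ) < b - s := by linarith
    have hsA : (0:ℝ) < s + A := by linarith
    -- bounds for the first arcsin argument
    have hu1a : -1 < (2*s - b)/b := by rw [lt_div_iff₀ hb]; linarith
    have hu1b : (2*s - b)/b < 1 := by rw [div_lt_one hb]; linarith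
    -- the key square identity for the second argument
    have hsq2 : (s + A)^2 - (-((b + 2*A)/b) * s + A)^2 = 4*A*(A+b)*s*(b-s)/b^2 := by
      field_simp
      ring
    have hsq2pos : (0:ℝ) < (s + A)^2 - (-((b + 2*A)/b) * s + A)^2 := by
      rw [hsq2]; positivity
    have hu2a : -1 < (-((b + 2*A)/b) * s + A)/(s + A) := by
      rw [lt_div_iff₀ hsA]
      nlinarith
    have hu2b : (-((b + 2*A)/b) * s + A)/(s + A) < 1 := by
      rw [div_lt_one hsA]
      nlinarith
    -- derivatives of the inner functions
    have d1 : HasDerivAt (fun s : ℝ => (2*s - b)/b) (2/b) s := by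
      have := (((hasDerivAt_id s).const_mul 2).sub_const b).div_const b
      refine this.congr_deriv ?_
      ring
    have d2 : HasDerivAt (fun s : ℝ => (-((b + 2*A)/b) * s + A)/(s + A))
        (-(2*A*(A+b))/(b*(s+A)^2)) s := by
      have hnum : HasDerivAt (fun s : ℝ => -((b + 2*A)/b) * s + A) (-((b + 2*A)/b)) s := by
        have := ((hasDerivAt_id s).const_mul (-((b + 2*A)/b))).add_const A
        refine this.congr_deriv ?_
        ring
      have hden : HasDerivAt (fun s : ℝ => s + A) 1 s := (hasDerivAt_id s).add_const A
      have := hnum.div hden (ne_of_gt hsA)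
      refine this.congr_deriv ?_
      field_simp
      ring
    have hD : HasDerivAt H
        (1 / Real.sqrt (1 - ((2*s - b)/b)^2) * (2/b)
          + k * (1 / Real.sqrt (1 - ((-((b + 2*A)/b) * s + A)/(s + A))^2)
              * (-(2*A*(A+b))/(b*(s+A)^2)))) s := by
      exact ((Real.hasDerivAt_arcsin hu1a.ne' hu1b.ne).comp s d1).add
        (((Real.hasDerivAt_arcsin hu2a.ne' hu2b.ne).comp s d2).const_mul k)
    have hq1 : Real.sqrt (1 - ((2*s - b)/b)^2) = 2 * Real.sqrt s * Real.sqrt (b - s) / b := by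
      have hh1 : (2 * Real.sqrt s * Real.sqrt (b - s) / b)^2 = 4*s*(b-s)/b^2 := by
        rw [div_pow, mul_pow, mul_pow, Real.sq_sqrt hs0.le, Real.sq_sqrt hbs.le]
        ring
      rw [show 1 - ((2*s - b)/b)^2 = (2 * Real.sqrt s * Real.sqrt (b - s) / b)^2 by
        rw [hh1]; field_simp; ring]
      exact Real.sqrt_sq (div_nonneg (by positivity) hb.le)
    have hq2 : Real.sqrt (1 - ((-((b + 2*A)/b) * s + A)/(s + A))^2)
        = 2 * Real.sqrt A * Real.sqrt (A + b) * Real.sqrt s * Real.sqrt (b - s) / (b * (s + A)) := by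
      have hh2 : (2 * Real.sqrt A * Real.sqrt (A + b) * Real.sqrt s * Real.sqrt (b - s)
          / (b * (s + A)))^2 = 4*A*(A+b)*s*(b-s)/(b^2*(s+A)^2) := by
        rw [div_pow, mul_pow, mul_pow, mul_pow, mul_pow, Real.sq_sqrt hA.le,
          Real.sq_sqrt hAb.le, Real.sq_sqrt hs0.le, Real.sq_sqrt hbs.le]
        ring
      rw [show 1 - ((-((b + 2*A)/b) * s + A)/(s + A))^2
          = (2 * Real.sqrt A * Real.sqrt (A + b) * Real.sqrt s * Real.sqrt (b - s)
            / (b * (s + A)))^2 by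
        rw [hh2]; field_simp; ring]
      exact Real.sqrt_sq (div_nonneg (by positivity) (mul_nonneg hb.le hsA.le))
    have heq : 1 / Real.sqrt (1 - ((2*s - b)/b)^2) * (2/b)
          + k * (1 / Real.sqrt (1 - ((-((b + 2*A)/b) * s + A)/(s + A))^2)
              * (-(2*A*(A+b))/(b*(s+A)^2)))
        = Real.sqrt s / (Real.sqrt (b - s) * (s + A)) := by
      rw [hq1, hq2, hk, Real.sqrt_div hA.le]
      have hσ : (0:ℝ) < Real.sqrt s := Real.sqrt_pos.mpr hs0
      have hτ : (0:ℝ) < Real.sqrt (b - s) := Real.sqrt_pos.mpr hbs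
      have ha : (0:ℝ) < Real.sqrt A := Real.sqrt_pos.mpr hA
      have hq : (0:ℝ) < Real.sqrt (A + b) := Real.sqrt_pos.mpr hAb
      set σ := Real.sqrt s
      set τ := Real.sqrt (b - s)
      set a := Real.sqrt A
      set q := Real.sqrt (A + b)
      have hσ2 : σ^2 = s := Real.sq_sqrt hs0.le
      have ha2 : a^2 = A := Real.sq_sqrt hA.le
      have hq2' : q^2 = A + b := Real.sq_sqrt hAb.le
      rw [← hq2', ← ha2, ← hσ2]
      field_simp
      ring
    rw [heq] at hD
    exact hD.hasDerivWithinAt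
  have hint := aux_psi0_int b A hb hA
  rw [intervalIntegral.integral_eq_sub_of_hasDeriv_right_of_le hb.le hcont hderiv hint]
  rw [hH]
  have e1 : ((2*(0:ℝ) - b)/b) = -1 := by field_simp; ring
  have e2 : ((2*b - b)/b) = 1 := by
    rw [show 2*b - b = b by ring]
    exact div_self hb.ne'
  have e3 : ((-((b + 2*A)/b) * 0 + A)/((0:ℝ) + A)) = 1 := by field_simp; ring
  have e4 : ((-((b + 2*A)/b) * b + A)/(b + A)) = -1 := by
    rw [div_eq_iff (by linarith : b + A ≠ 0)]
    field_simp
    ring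
  simp only [e1, e2, e3, e4, Real.arcsin_one, Real.arcsin_neg_one]
  ring


set_option maxHeartbeats 1000000 in
/-- Stieltjes transform of the spectral measure of the birth-death process on `ℕ₀` with
alternating constant rates (Case 1): for `λ ≠ μ` and `z < 0`, the measure with density
`(1/(2πλμ))√(x(2μ-x)(2λ+2μ-x)/(2λ-x))` on `J₁ ∪ J₂` has Stieltjes transform
`(1/(2λμ))(2μ - z - √(-z(2μ-z)(2λ+2μ-z)/(2λ-z)))`. -/
theorem alternating_rates_stieltjes (lam mu : ℝ) (hlam : 0 < lam) (hmu : 0 < mu)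
    (hne : lam ≠ mu) (z : ℝ) (hz : z < 0) :
    (∫ x in (Set.Icc (0:ℝ) (2 * min lam mu) ∪
        Set.Icc (2 * max lam mu) (2 * lam + 2 * mu)),
        (x - z)⁻¹ * ((1 / (2 * Real.pi * lam * mu)) *
          Real.sqrt (x * (2 * mu - x) * (2 * lam + 2 * mu - x) / (2 * lam - x))))
      = (1 / (2 * lam * mu)) * (2 * mu - z -
          Real.sqrt (-z * (2 * mu - z) * (2 * lam + 2 * mu - z) / (2 * lam - z))) := by
  have hπ : (0:ℝ) < π := Real.pi_pos
  set g : ℝ → ℝ := fun x => (x - z)⁻¹ * ((1 / (2 * Real.pi * lam * mu)) *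
      Real.sqrt (x * (2 * mu - x) * (2 * lam + 2 * mu - x) / (2 * lam - x))) with hg_def
  set A : ℝ := z^2 - 2*(lam+mu)*z with hA_def
  have hb0 : (0:ℝ) < 4*lam*mu := by positivity
  have hA0 : (0:ℝ) < A := by rw [hA_def]; nlinarith
  have hAb0 : (0:ℝ) < A + 4*lam*mu := by linarith
  have hcne : lam - mu ≠ 0 := sub_ne_zero.mpr hne
  have hc2pos : (0:ℝ) < (lam-mu)^2 := lt_of_le_of_ne (sq_nonneg _) (Ne.symm (pow_ne_zero 2 hcne))
  set e : ℝ → ℝ := fun s => Real.sqrt ((lam+mu)^2 - s) with he_def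
  have hDpos : ∀ s ∈ Icc (0:ℝ) (4*lam*mu), (0:ℝ) < (lam+mu)^2 - s := by
    intro s hs; nlinarith [hs.2]
  have hEpos : ∀ s ∈ Icc (0:ℝ) (4*lam*mu), 0 < e s := by
    intro s hs; exact Real.sqrt_pos.mpr (hDpos s hs)
  have hE2 : ∀ s ∈ Icc (0:ℝ) (4*lam*mu), (e s)^2 = (lam+mu)^2 - s := by
    intro s hs; exact Real.sq_sqrt (hDpos s hs).le
  have hElep : ∀ s ∈ Icc (0:ℝ) (4*lam*mu), e s ≤ lam+mu := by
    intro s hs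
    calc e s ≤ Real.sqrt ((lam+mu)^2) := Real.sqrt_le_sqrt (by linarith [hs.1])
      _ = lam+mu := Real.sqrt_sq (by positivity)
  have hEgec : ∀ s ∈ Icc (0:ℝ) (4*lam*mu), |lam-mu| ≤ e s := by
    intro s hs
    calc |lam-mu| = Real.sqrt ((lam-mu)^2) := (Real.sqrt_sq_eq_abs _).symm
      _ ≤ e s := Real.sqrt_le_sqrt (by nlinarith [hs.2])
  have hEgtc : ∀ s ∈ Ioo (0:ℝ) (4*lam*mu), |lam-mu| < e s := by
    intro s hs
    calc |lam-mu| = Real.sqrt ((lam-mu)^2) := (Real.sqrt_sq_eq_abs _).symm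
      _ < e s := by
        apply Real.sqrt_lt_sqrt (sq_nonneg _)
        nlinarith [hs.2]
  -- derivatives of the substitution maps
  have hderm : ∀ s ∈ Icc (0:ℝ) (4*lam*mu),
      HasDerivWithinAt (fun s => (lam+mu) - e s) (1/(2 * e s)) (Icc 0 (4*lam*mu)) s := by
    intro s hs
    have hD := hDpos s hs
    have hin : HasDerivAt (fun s : ℝ => (lam+mu)^2 - s) (-1) s := (hasDerivAt_id s).const_sub _
    have hsq := (Real.hasDerivAt_sqrt hD.ne').comp s hin
    have := hsq.const_sub (lam+mu)
    have h2 : HasDerivAt (fun s => (lam+mu) - e s) (1/(2 * e s)) s := by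
      refine this.congr_deriv ?_
      rw [he_def]
      ring
    exact h2.hasDerivWithinAt
  have hderp : ∀ s ∈ Icc (0:ℝ) (4*lam*mu),
      HasDerivWithinAt (fun s => (lam+mu) + e s) (-(1/(2 * e s))) (Icc 0 (4*lam*mu)) s := by
    intro s hs
    have hD := hDpos s hs
    have hin : HasDerivAt (fun s : ℝ => (lam+mu)^2 - s) (-1) s := (hasDerivAt_id s).const_sub _
    have hsq := (Real.hasDerivAt_sqrt hD.ne').comp s hin
    have := hsq.const_add (lam+mu)
    have h2 : HasDerivAt (fun s => (lam+mu) + e s) (-(1/(2 * e s))) s := by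
      refine this.congr_deriv ?_
      rw [he_def]
      ring
    exact h2.hasDerivWithinAt
  -- injectivity
  have hinjm : InjOn (fun s => (lam+mu) - e s) (Icc 0 (4*lam*mu)) := by
    intro s1 h1 s2 h2 h
    have he12 : e s1 = e s2 := by dsimp only at h; linarith
    have := congrArg (fun t : ℝ => t^2) he12
    rw [hE2 s1 h1, hE2 s2 h2] at this
    linarith
  have hinjp : InjOn (fun s => (lam+mu) + e s) (Icc 0 (4*lam*mu)) := by
    intro s1 h1 s2 h2 h
    have he12 : e s1 = e s2 := by dsimp only at h; linarith
    have := congrArg (fun t : ℝ => t^2) he12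
    rw [hE2 s1 h1, hE2 s2 h2] at this
    linarith
  -- images
  have hminp : 2 * min lam mu ≤ lam + mu := by
    rcases le_total lam mu with h | h
    · simp [min_eq_left h]; linarith
    · simp [min_eq_right h]; linarith
  have habs_min : (lam+mu) - 2*min lam mu = |lam - mu| := by
    rcases le_total lam mu with h | h
    · rw [min_eq_left h, abs_of_nonpos (by linarith : lam - mu ≤ 0)]; ring
    · rw [min_eq_right h, abs_of_nonneg (by linarith : 0 ≤ lam - mu)]; ring
  have habs_max : 2*max lam mu - (lam+mu) = |lam - mu| := by
    rcases le_total lam mu with h | h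
    · rw [max_eq_right h, abs_of_nonpos (by linarith : lam - mu ≤ 0)]; ring
    · rw [max_eq_left h, abs_of_nonneg (by linarith : 0 ≤ lam - mu)]; ring
  have himgm : (fun s => (lam+mu) - e s) '' Icc 0 (4*lam*mu) = Icc 0 (2 * min lam mu) := by
    ext x
    simp only [Set.mem_image, Set.mem_Icc]
    constructor
    · rintro ⟨s, hs, rfl⟩
      constructor
      · linarith [hElep s hs]
      · have := hEgec s hs
        linarith [habs_min]
    · rintro ⟨hx0, hx2⟩
      have hmin1 : min lam mu ≤ lam := min_le_left _ _
      have hmin2 : min lam mu ≤ mu := min_le_right _ _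
      have hxp : x ≤ lam + mu := le_trans hx2 hminp
      have h1 : 0 ≤ x*(2*(lam+mu) - x) := mul_nonneg hx0 (by linarith)
      have h2 : x*(2*(lam+mu) - x) ≤ 4*lam*mu := by
        nlinarith [mul_nonneg (show (0:ℝ) ≤ 2*lam - x by linarith)
          (show (0:ℝ) ≤ 2*mu - x by linarith)]
      refine ⟨x*(2*(lam+mu) - x), ⟨h1, h2⟩, ?_⟩
      have : (lam+mu)^2 - x*(2*(lam+mu) - x) = ((lam+mu) - x)^2 := by ring
      rw [he_def]
      simp only
      rw [this, Real.sqrt_sq (by linarith)]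
      ring
  have himgp : (fun s => (lam+mu) + e s) '' Icc 0 (4*lam*mu)
      = Icc (2 * max lam mu) (2 * lam + 2 * mu) := by
    ext x
    simp only [Set.mem_image, Set.mem_Icc]
    constructor
    · rintro ⟨s, hs, rfl⟩
      constructor
      · have := hEgec s hs
        linarith [habs_max]
      · linarith [hElep s hs]
    · rintro ⟨hx0, hx2⟩
      have hxp : lam + mu ≤ x := by
        rcases le_total lam mu with h | h
        · rw [max_eq_right h] at hx0; linarith
        · rw [max_eq_left h] at hx0; linarith
      have hmax1 : lam ≤ max lam mu := le_max_left _ _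
      have hmax2 : mu ≤ max lam mu := le_max_right _ _
      have h1 : 0 ≤ x*(2*(lam+mu) - x) := mul_nonneg (by linarith) (by linarith)
      have h2 : x*(2*(lam+mu) - x) ≤ 4*lam*mu := by
        nlinarith [mul_nonneg (show (0:ℝ) ≤ x - 2*lam by linarith)
          (show (0:ℝ) ≤ x - 2*mu by linarith)]
      refine ⟨x*(2*(lam+mu) - x), ⟨h1, h2⟩, ?_⟩
      have : (lam+mu)^2 - x*(2*(lam+mu) - x) = (x - (lam+mu))^2 := by ring
      rw [he_def]
      simp only
      rw [this, Real.sqrt_sq (by linarith)]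
      ring
  -- pointwise formulas for the substituted integrands
  have hgm : ∀ s ∈ Ioo (0:ℝ) (4*lam*mu),
      g ((lam+mu) - e s) = ((lam+mu) - e s - z)⁻¹ * (1 / (2 * Real.pi * lam * mu) *
        (Real.sqrt s * (e s - (lam - mu)) / Real.sqrt (4*lam*mu - s))) := by
    intro s hs
    have hsI : s ∈ Icc (0:ℝ) (4*lam*mu) := ⟨hs.1.le, hs.2.le⟩
    have hE2' := hE2 s hsI
    have hEc := hEgtc s hs
    have hEc1 : lam - mu < e s := lt_of_le_of_lt (le_abs_self _) hEc
    have hEc2 : -(lam - mu) < e s := lt_of_le_of_lt (neg_le_abs _) hEc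
    have hbs : (0:ℝ) < 4*lam*mu - s := by linarith [hs.2]
    have harg : ((lam+mu) - e s) * (2*mu - ((lam+mu) - e s)) * (2*lam + 2*mu - ((lam+mu) - e s))
        / (2*lam - ((lam+mu) - e s)) = s * (e s - (lam-mu))^2 / (4*lam*mu - s) := by
      rw [show 2*lam - ((lam+mu) - e s) = e s + (lam - mu) by ring]
      rw [div_eq_div_iff (by linarith : e s + (lam - mu) ≠ 0) (ne_of_gt hbs)]
      linear_combination (-(4*lam*mu) * (e s - (lam - mu))) * hE2'
    rw [hg_def]
    simp only
    rw [harg, Real.sqrt_div (mul_nonneg hs.1.le (sq_nonneg _)),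
      Real.sqrt_mul hs.1.le, Real.sqrt_sq (by linarith : (0:ℝ) ≤ e s - (lam - mu))]
  have hgp : ∀ s ∈ Ioo (0:ℝ) (4*lam*mu),
      g ((lam+mu) + e s) = ((lam+mu) + e s - z)⁻¹ * (1 / (2 * Real.pi * lam * mu) *
        (Real.sqrt s * (e s + (lam - mu)) / Real.sqrt (4*lam*mu - s))) := by
    intro s hs
    have hsI : s ∈ Icc (0:ℝ) (4*lam*mu) := ⟨hs.1.le, hs.2.le⟩
    have hE2' := hE2 s hsI
    have hEc := hEgtc s hs
    have hEc1 : lam - mu < e s := lt_of_le_of_lt (le_abs_self _) hEc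
    have hEc2 : -(lam - mu) < e s := lt_of_le_of_lt (neg_le_abs _) hEc
    have hbs : (0:ℝ) < 4*lam*mu - s := by linarith [hs.2]
    have harg : ((lam+mu) + e s) * (2*mu - ((lam+mu) + e s)) * (2*lam + 2*mu - ((lam+mu) + e s))
        / (2*lam - ((lam+mu) + e s)) = s * (e s + (lam-mu))^2 / (4*lam*mu - s) := by
      rw [show 2*lam - ((lam+mu) + e s) = (lam - mu) - e s by ring]
      rw [div_eq_div_iff (by linarith : (lam - mu) - e s ≠ 0) (ne_of_gt hbs)]
      linear_combination ((4*lam*mu) * (e s + (lam - mu))) * hE2'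
    rw [hg_def]
    simp only
    rw [harg, Real.sqrt_div (mul_nonneg hs.1.le (sq_nonneg _)),
      Real.sqrt_mul hs.1.le, Real.sqrt_sq (by linarith : (0:ℝ) ≤ e s + (lam - mu))]
  -- integrability of the substituted integrands
  have hz' : (0:ℝ) < -z := by linarith
  have hmaj : IntegrableOn (fun s => (1/(2*Real.pi*lam*mu) * (Real.sqrt (4*lam*mu) * (-z)⁻¹))
      * (Real.sqrt (4*lam*mu - s))⁻¹) (Ioo 0 (4*lam*mu)) volume := by
    have h := (aux_int_sqrt_inv (4*lam*mu)).const_mul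
      (1/(2*Real.pi*lam*mu) * (Real.sqrt (4*lam*mu) * (-z)⁻¹))
    rw [intervalIntegrable_iff_integrableOn_Ioc_of_le hb0.le] at h
    exact h.mono_set Ioo_subset_Ioc_self
  have hg_meas : Measurable g := by
    rw [hg_def]
    apply Measurable.mul
    · exact (measurable_id.sub_const z).inv
    · apply Measurable.const_mul
      apply Real.continuous_sqrt.measurable.comp
      apply Measurable.div <;> fun_prop
  have he_meas : Measurable e := by rw [he_def]; fun_prop
  have hφm_meas : Measurable (fun s => |1/(2 * e s)| • g ((lam+mu) - e s)) := by
    apply Measurable.smul (f := fun s => |1/(2 * e s)|) (g := fun s => g ((lam+mu) - e s))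
    · fun_prop
    · exact hg_meas.comp (by fun_prop)
  have hφp_meas : Measurable (fun s => |(-(1/(2 * e s)))| • g ((lam+mu) + e s)) := by
    apply Measurable.smul (f := fun s => |(-(1/(2 * e s)))|) (g := fun s => g ((lam+mu) + e s))
    · fun_prop
    · exact hg_meas.comp (by fun_prop)
  have hboundm : ∀ s ∈ Ioo (0:ℝ) (4*lam*mu),
      ‖|1/(2 * e s)| • g ((lam+mu) - e s)‖
        ≤ (1/(2*Real.pi*lam*mu) * (Real.sqrt (4*lam*mu) * (-z)⁻¹))
          * (Real.sqrt (4*lam*mu - s))⁻¹ := by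
    intro s hs
    have hsI : s ∈ Icc (0:ℝ) (4*lam*mu) := ⟨hs.1.le, hs.2.le⟩
    have hE' := hEpos s hsI
    have hEc := hEgtc s hs
    have hEc1 : lam - mu < e s := lt_of_le_of_lt (le_abs_self _) hEc
    have hEc2 : -(lam - mu) < e s := lt_of_le_of_lt (neg_le_abs _) hEc
    have hbs : (0:ℝ) < 4*lam*mu - s := by linarith [hs.2]
    have hτ : (0:ℝ) < Real.sqrt (4*lam*mu - s) := Real.sqrt_pos.mpr hbs
    have hxz : (0:ℝ) < (lam+mu) - e s - z := by linarith [hElep s hsI]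
    rw [smul_eq_mul, hgm s hs, abs_of_pos (one_div_pos.mpr (by linarith : (0:ℝ) < 2 * e s))]
    have hrew : 1/(2 * e s) * (((lam+mu) - e s - z)⁻¹ * (1 / (2 * Real.pi * lam * mu) *
          (Real.sqrt s * (e s - (lam - mu)) / Real.sqrt (4*lam*mu - s))))
        = 1/(2*Real.pi*lam*mu) * ((e s - (lam-mu))/(2 * e s)) * ((lam+mu) - e s - z)⁻¹
          * Real.sqrt s * (Real.sqrt (4*lam*mu - s))⁻¹ := by
      field_simp
    have hnn : (0:ℝ) ≤ 1/(2*Real.pi*lam*mu) * ((e s - (lam-mu))/(2 * e s))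
        * ((lam+mu) - e s - z)⁻¹ * Real.sqrt s * (Real.sqrt (4*lam*mu - s))⁻¹ :=
      mul_nonneg (mul_nonneg (mul_nonneg (mul_nonneg (by positivity)
        (div_nonneg (by linarith) (by linarith))) (inv_nonneg.mpr hxz.le))
        (Real.sqrt_nonneg _)) (inv_nonneg.mpr (Real.sqrt_nonneg _))
    rw [hrew, Real.norm_of_nonneg hnn]
    calc 1/(2*Real.pi*lam*mu) * ((e s - (lam-mu))/(2 * e s)) * ((lam+mu) - e s - z)⁻¹
          * Real.sqrt s * (Real.sqrt (4*lam*mu - s))⁻¹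
        ≤ 1/(2*Real.pi*lam*mu) * 1 * (-z)⁻¹ * Real.sqrt (4*lam*mu)
          * (Real.sqrt (4*lam*mu - s))⁻¹ := by
          gcongr
          all_goals first
            | linarith [hElep s hsI]
            | (rw [div_le_one (by linarith : (0:ℝ) < 2 * e s)]; linarith)
      _ = 1/(2*Real.pi*lam*mu) * (Real.sqrt (4*lam*mu) * (-z)⁻¹)
          * (Real.sqrt (4*lam*mu - s))⁻¹ := by ring
  have hboundp : ∀ s ∈ Ioo (0:ℝ) (4*lam*mu),
      ‖|(-(1/(2 * e s)))| • g ((lam+mu) + e s)‖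
        ≤ (1/(2*Real.pi*lam*mu) * (Real.sqrt (4*lam*mu) * (-z)⁻¹))
          * (Real.sqrt (4*lam*mu - s))⁻¹ := by
    intro s hs
    have hsI : s ∈ Icc (0:ℝ) (4*lam*mu) := ⟨hs.1.le, hs.2.le⟩
    have hE' := hEpos s hsI
    have hEc := hEgtc s hs
    have hEc1 : lam - mu < e s := lt_of_le_of_lt (le_abs_self _) hEc
    have hEc2 : -(lam - mu) < e s := lt_of_le_of_lt (neg_le_abs _) hEc
    have hbs : (0:ℝ) < 4*lam*mu - s := by linarith [hs.2]
    have hτ : (0:ℝ) < Real.sqrt (4*lam*mu - s) := Real.sqrt_pos.mpr hbs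
    have hxz : (0:ℝ) < (lam+mu) + e s - z := by linarith [hElep s hsI]
    rw [smul_eq_mul, hgp s hs, abs_neg,
      abs_of_pos (one_div_pos.mpr (by linarith : (0:ℝ) < 2 * e s))]
    have hrew : 1/(2 * e s) * (((lam+mu) + e s - z)⁻¹ * (1 / (2 * Real.pi * lam * mu) *
          (Real.sqrt s * (e s + (lam - mu)) / Real.sqrt (4*lam*mu - s))))
        = 1/(2*Real.pi*lam*mu) * ((e s + (lam-mu))/(2 * e s)) * ((lam+mu) + e s - z)⁻¹
          * Real.sqrt s * (Real.sqrt (4*lam*mu - s))⁻¹ := by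
      field_simp
    have hnn : (0:ℝ) ≤ 1/(2*Real.pi*lam*mu) * ((e s + (lam-mu))/(2 * e s))
        * ((lam+mu) + e s - z)⁻¹ * Real.sqrt s * (Real.sqrt (4*lam*mu - s))⁻¹ :=
      mul_nonneg (mul_nonneg (mul_nonneg (mul_nonneg (by positivity)
        (div_nonneg (by linarith) (by linarith))) (inv_nonneg.mpr hxz.le))
        (Real.sqrt_nonneg _)) (inv_nonneg.mpr (Real.sqrt_nonneg _))
    rw [hrew, Real.norm_of_nonneg hnn]
    calc 1/(2*Real.pi*lam*mu) * ((e s + (lam-mu))/(2 * e s)) * ((lam+mu) + e s - z)⁻¹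
          * Real.sqrt s * (Real.sqrt (4*lam*mu - s))⁻¹
        ≤ 1/(2*Real.pi*lam*mu) * 1 * (-z)⁻¹ * Real.sqrt (4*lam*mu)
          * (Real.sqrt (4*lam*mu - s))⁻¹ := by
          gcongr
          all_goals first
            | linarith [hElep s hsI]
            | (rw [div_le_one (by linarith : (0:ℝ) < 2 * e s)]; linarith)
      _ = 1/(2*Real.pi*lam*mu) * (Real.sqrt (4*lam*mu) * (-z)⁻¹)
          * (Real.sqrt (4*lam*mu - s))⁻¹ := by ring
  have hφm_int : IntegrableOn (fun s => |1/(2 * e s)| • g ((lam+mu) - e s))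
      (Icc 0 (4*lam*mu)) volume := by
    rw [integrableOn_Icc_iff_integrableOn_Ioo]
    apply Integrable.mono' hmaj hφm_meas.aestronglyMeasurable
    filter_upwards [ae_restrict_mem measurableSet_Ioo] with s hs
    exact hboundm s hs
  have hφp_int : IntegrableOn (fun s => |(-(1/(2 * e s)))| • g ((lam+mu) + e s))
      (Icc 0 (4*lam*mu)) volume := by
    rw [integrableOn_Icc_iff_integrableOn_Ioo]
    apply Integrable.mono' hmaj hφp_meas.aestronglyMeasurable
    filter_upwards [ae_restrict_mem measurableSet_Ioo] with s hs
    exact hboundp s hs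
  -- split the integral over the union
  have hg1 : IntegrableOn g (Icc 0 (2 * min lam mu)) volume := by
    rw [← himgm, integrableOn_image_iff_integrableOn_abs_deriv_smul measurableSet_Icc hderm hinjm]
    exact hφm_int
  have hg2 : IntegrableOn g (Icc (2 * max lam mu) (2*lam + 2*mu)) volume := by
    rw [← himgp, integrableOn_image_iff_integrableOn_abs_deriv_smul measurableSet_Icc hderp hinjp]
    exact hφp_int
  have hdisj : Disjoint (Icc (0:ℝ) (2 * min lam mu)) (Icc (2 * max lam mu) (2*lam + 2*mu)) := by
    apply Set.disjoint_left.mpr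
    intro x hx1 hx2
    have h1 : min lam mu < max lam mu := min_lt_max.mpr hne
    linarith [hx1.2, hx2.1]
  rw [setIntegral_union hdisj measurableSet_Icc hg1 hg2]
  -- substitute in each piece
  have hsubm := integral_image_eq_integral_abs_deriv_smul measurableSet_Icc hderm hinjm g
  rw [himgm] at hsubm
  have hsubp := integral_image_eq_integral_abs_deriv_smul measurableSet_Icc hderp hinjp g
  rw [himgp] at hsubp
  rw [hsubm, hsubp, integral_Icc_eq_integral_Ioo, integral_Icc_eq_integral_Ioo]
  have hIm : IntegrableOn (fun s => |1/(2 * e s)| • g ((lam+mu) - e s))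
      (Ioo 0 (4*lam*mu)) volume := hφm_int.mono_set Ioo_subset_Icc_self
  have hIp : IntegrableOn (fun s => |(-(1/(2 * e s)))| • g ((lam+mu) + e s))
      (Ioo 0 (4*lam*mu)) volume := hφp_int.mono_set Ioo_subset_Icc_self
  have hsum : (∫ s in Ioo (0:ℝ) (4*lam*mu), |1/(2 * e s)| • g ((lam+mu) - e s))
      + (∫ s in Ioo (0:ℝ) (4*lam*mu), |(-(1/(2 * e s)))| • g ((lam+mu) + e s))
      = ∫ s in Ioo (0:ℝ) (4*lam*mu), (1/(2*Real.pi*lam*mu) * (2*mu - z))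
          * (Real.sqrt s / (Real.sqrt (4*lam*mu - s) * (s + A))) := by
    rw [← integral_add hIm hIp]
    apply setIntegral_congr_fun measurableSet_Ioo
    intro s hs
    have hsI : s ∈ Icc (0:ℝ) (4*lam*mu) := ⟨hs.1.le, hs.2.le⟩
    have hE2' := hE2 s hsI
    have hE' := hEpos s hsI
    have hEc := hEgtc s hs
    have hEc1 : lam - mu < e s := lt_of_le_of_lt (le_abs_self _) hEc
    have hEc2 : -(lam - mu) < e s := lt_of_le_of_lt (neg_le_abs _) hEc
    have hbs : (0:ℝ) < 4*lam*mu - s := by linarith [hs.2]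
    have hτ : (0:ℝ) < Real.sqrt (4*lam*mu - s) := Real.sqrt_pos.mpr hbs
    have hX : (0:ℝ) < (lam+mu) - e s - z := by linarith [hElep s hsI]
    have hY : (0:ℝ) < (lam+mu) + e s - z := by linarith
    simp only [smul_eq_mul, abs_neg]
    rw [hgm s hs, hgp s hs, abs_of_pos (one_div_pos.mpr (by linarith : (0:ℝ) < 2 * e s))]
    have hXY : s + A = ((lam+mu) - e s - z) * ((lam+mu) + e s - z) := by
      rw [hA_def]
      linear_combination hE2'
    rw [hXY]
    field_simp
    ring
  rw [hsum, ← integral_Ioc_eq_integral_Ioo, ← intervalIntegral.integral_of_le hb0.le,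
    intervalIntegral.integral_const_mul, aux_ftc (4*lam*mu) A hb0 hA0]
  -- final arithmetic
  have h2l : (0:ℝ) < 2*lam - z := by linarith
  have h2m : (0:ℝ) < 2*mu - z := by linarith
  have hkey : (2*mu - z) * Real.sqrt (A / (A + 4*lam*mu))
      = Real.sqrt (-z * (2 * mu - z) * (2 * lam + 2 * mu - z) / (2 * lam - z)) := by
    have harg : -z * (2 * mu - z) * (2 * lam + 2 * mu - z) / (2 * lam - z)
        = (2*mu - z)^2 * (A / (A + 4*lam*mu)) := by
      have hden : z^2 - 2*(lam+mu)*z + 4*lam*mu ≠ 0 := by nlinarith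
      rw [hA_def]
      field_simp
      rw [eq_div_iff (by intro h; apply hden; linarith)]
      ring
    rw [harg, Real.sqrt_mul (sq_nonneg _), Real.sqrt_sq h2m.le]
  rw [← hkey]
  field_simp
end

section
/- Let λ, μ > 0 and y = -1 + (2λ-x)(2μ-x)/(2λμ). Define two families of polynomials indexed by ℤ: Q_{2k}^1(x) = (2y+1)U_{k-1}(y) - U_{k-2}(y) for k ≥ 1, Q_{2k+1}^1(x) = -(x-2λ)U_k(y)/λ for k ≥ 0, Q_{-2k-2}^1(x) = -(2y+1)U_{k-1}(y) + U_{k-2}(y) for k ≥ 0, Q_{-2k-1}^1(x) = (x-2λ)U_{k-1}(y)/λ for k ≥ 0, together with Q_0^1 = 1; and Q_{2k}^2(x) = (x-2μ)U_{k-1}(y)/μ for k ≥ 0, Q_{2k+1}^2(x) = -(2y+1)U_{k-1}(y) + U_{k-2}(y) for k ≥ 0, Q_{-2k}^2(x) = -(x-2μ)U_{k-1}(y)/μ for k ≥ 0, Q_{-2k-1}^2(x) = (2y+1)U_{k-1}(y) - U_{k-2}(y) for k ≥ 0, where U_k are the ℤ-indexed Chebyshev polynomials of the second kind (U_{-1}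 = 0, U_{-2} = -1). Then Q_0^1 = 1, Q_{-1}^1 = 0, Q_0^2 = 0, Q_{-1}^2 = 1, and for every n ∈ ℤ, α = 1,2: -x·Q_n^α(x) = λ_n·Q_{n+1}^α(x) - (λ_n+μ_n)·Q_n^α(x) + μ_n·Q_{n-1}^α(x), where λ_{2m} = μ_{2m} = λ and λ_{2m+1} = μ_{2m+1} = μ for all m ∈ ℤ. -/
set_option maxHeartbeats 1000000


open Real Polynomial

/-- The birth-death polynomials of the bilateral birth-death process on `ℤ` with alternating
constant rates `λ_{2m} = μ_{2m} = λ`, `λ_{2m+1} = μ_{2m+1} = μ` (Case 1) satisfy the initial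
conditions and the three-term recurrence. -/
theorem alternating_rates_polynomials_case1 (lam mu : ℝ) (hlam : 0 < lam) (hmu : 0 < mu)
    (L M : ℤ → ℝ)
    (hLe : ∀ m : ℤ, L (2 * m) = lam) (hLo : ∀ m : ℤ, L (2 * m + 1) = mu)
    (hMe : ∀ m : ℤ, M (2 * m) = lam) (hMo : ∀ m : ℤ, M (2 * m + 1) = mu)
    (y : ℝ → ℝ) (hy : ∀ x : ℝ, y x = -1 + (2 * lam - x) * (2 * mu - x) / (2 * lam * mu))
    (Q1 Q2 : ℤ → ℝ → ℝ)
    (hQ1zero : ∀ x : ℝ, Q1 0 x = 1)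
    (hQ1e : ∀ k : ℤ, 1 ≤ k → ∀ x : ℝ, Q1 (2 * k) x =
      (2 * y x + 1) * (Polynomial.Chebyshev.U ℝ (k - 1)).eval (y x) -
        (Polynomial.Chebyshev.U ℝ (k - 2)).eval (y x))
    (hQ1o : ∀ k : ℤ, 0 ≤ k → ∀ x : ℝ, Q1 (2 * k + 1) x =
      -(x - 2 * lam) * (Polynomial.Chebyshev.U ℝ k).eval (y x) / lam)
    (hQ1ne : ∀ k : ℤ, 0 ≤ k → ∀ x : ℝ, Q1 (-2 * k - 2) x =
      -(2 * y x + 1) * (Polynomial.Chebyshev.U ℝ (k - 1)).eval (y x) +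
        (Polynomial.Chebyshev.U ℝ (k - 2)).eval (y x))
    (hQ1no : ∀ k : ℤ, 0 ≤ k → ∀ x : ℝ, Q1 (-2 * k - 1) x =
      (x - 2 * lam) * (Polynomial.Chebyshev.U ℝ (k - 1)).eval (y x) / lam)
    (hQ2e : ∀ k : ℤ, 0 ≤ k → ∀ x : ℝ, Q2 (2 * k) x =
      (x - 2 * mu) * (Polynomial.Chebyshev.U ℝ (k - 1)).eval (y x) / mu)
    (hQ2o : ∀ k : ℤ, 0 ≤ k → ∀ x : ℝ, Q2 (2 * k + 1) x =
      -(2 * y x + 1) * (Polynomial.Chebyshev.U ℝ (k - 1)).eval (y x) +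
        (Polynomial.Chebyshev.U ℝ (k - 2)).eval (y x))
    (hQ2ne : ∀ k : ℤ, 0 ≤ k → ∀ x : ℝ, Q2 (-2 * k) x =
      -(x - 2 * mu) * (Polynomial.Chebyshev.U ℝ (k - 1)).eval (y x) / mu)
    (hQ2no : ∀ k : ℤ, 0 ≤ k → ∀ x : ℝ, Q2 (-2 * k - 1) x =
      (2 * y x + 1) * (Polynomial.Chebyshev.U ℝ (k - 1)).eval (y x) -
        (Polynomial.Chebyshev.U ℝ (k - 2)).eval (y x)) :
    (∀ x : ℝ, Q1 0 x = 1) ∧ (∀ x : ℝ, Q1 (-1) x = 0) ∧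
    (∀ x : ℝ, Q2 0 x = 0) ∧ (∀ x : ℝ, Q2 (-1) x = 1) ∧
    (∀ n : ℤ, ∀ x : ℝ,
      -x * Q1 n x = L n * Q1 (n + 1) x - (L n + M n) * Q1 n x + M n * Q1 (n - 1) x) ∧
    (∀ n : ℤ, ∀ x : ℝ,
      -x * Q2 n x = L n * Q2 (n + 1) x - (L n + M n) * Q2 n x + M n * Q2 (n - 1) x) := by
  have hl0 : lam ≠ 0 := ne_of_gt hlam
  have hm0 : mu ≠ 0 := ne_of_gt hmu
  -- Chebyshev recurrence at the level of evaluations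
  have hE : ∀ (x : ℝ) (i j l : ℤ), j = i - 1 → l = i - 2 →
      (Polynomial.Chebyshev.U ℝ i).eval (y x) =
        2 * y x * (Polynomial.Chebyshev.U ℝ j).eval (y x) -
          (Polynomial.Chebyshev.U ℝ l).eval (y x) := by
    intro x i j l hj hl
    subst hj; subst hl
    rw [Polynomial.Chebyshev.U_eq]
    simp [mul_assoc]
  have hU3 : Polynomial.Chebyshev.U ℝ (-3) = -(Polynomial.Chebyshev.U ℝ 1) := by
    have h := Polynomial.Chebyshev.U_neg_sub_two ℝ 1
    norm_num at h
    rw [h, Polynomial.Chebyshev.U_one]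
  -- Extended formulas
  have q1e : ∀ k : ℤ, 0 ≤ k → ∀ x : ℝ, Q1 (2 * k) x =
      (2 * y x + 1) * (Polynomial.Chebyshev.U ℝ (k - 1)).eval (y x) -
        (Polynomial.Chebyshev.U ℝ (k - 2)).eval (y x) := by
    intro k hk x
    rcases hk.eq_or_lt with h | h
    · rw [← h]
      norm_num [hQ1zero x, Polynomial.Chebyshev.U_neg_one, Polynomial.Chebyshev.U_neg_two]
    · exact hQ1e k (by omega) x
  have q1o : ∀ k : ℤ, -1 ≤ k → ∀ x : ℝ, Q1 (2 * k + 1) x =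
      -(x - 2 * lam) * (Polynomial.Chebyshev.U ℝ k).eval (y x) / lam := by
    intro k hk x
    rcases hk.eq_or_lt with h | h
    · rw [← h]
      have h0 := hQ1no 0 le_rfl x
      norm_num [Polynomial.Chebyshev.U_neg_one] at h0 ⊢
      exact h0
    · exact hQ1o k (by omega) x
  have q1ne : ∀ k : ℤ, 0 ≤ k → ∀ x : ℝ, Q1 (-2 * k) x =
      -(2 * y x + 1) * (Polynomial.Chebyshev.U ℝ (k - 2)).eval (y x) +
        (Polynomial.Chebyshev.U ℝ (k - 3)).eval (y x) := by
    intro k hk x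
    rcases hk.eq_or_lt with h | h
    · rw [← h]
      norm_num [hQ1zero x, hU3, Polynomial.Chebyshev.U_one,
        Polynomial.Chebyshev.U_neg_two]
    · have h1 := hQ1ne (k - 1) (by omega) x
      rw [show (-2 : ℤ) * (k - 1) - 2 = -2 * k by ring, show k - 1 - 1 = k - 2 by ring,
        show k - 1 - 2 = k - 3 by ring] at h1
      exact h1
  have q2o : ∀ k : ℤ, -1 ≤ k → ∀ x : ℝ, Q2 (2 * k + 1) x =
      -(2 * y x + 1) * (Polynomial.Chebyshev.U ℝ (k - 1)).eval (y x) +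
        (Polynomial.Chebyshev.U ℝ (k - 2)).eval (y x) := by
    intro k hk x
    rcases hk.eq_or_lt with h | h
    · rw [← h]
      have h0 := hQ2no 0 le_rfl x
      norm_num [Polynomial.Chebyshev.U_neg_one, Polynomial.Chebyshev.U_neg_two, hU3,
        Polynomial.Chebyshev.U_one] at h0 ⊢
      rw [h0]
    · exact hQ2o k (by omega) x
  refine ⟨hQ1zero, ?_, ?_, ?_, ?_, ?_⟩
  · intro x
    have h0 := hQ1no 0 le_rfl x
    norm_num [Polynomial.Chebyshev.U_neg_one] at h0
    exact h0
  · intro x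
    have h0 := hQ2e 0 le_rfl x
    norm_num [Polynomial.Chebyshev.U_neg_one] at h0
    exact h0
  · intro x
    have h0 := hQ2no 0 le_rfl x
    norm_num [Polynomial.Chebyshev.U_neg_one, Polynomial.Chebyshev.U_neg_two] at h0
    exact h0
  · -- recurrence for Q1
    intro n x
    obtain ⟨m, rfl | rfl⟩ := n.even_or_odd'
    · rcases le_or_gt 0 m with hm | hm
      · rw [hLe m, hMe m, q1e m hm x, hQ1o m hm x,
          show (2 * m - 1 : ℤ) = 2 * (m - 1) + 1 by ring, q1o (m - 1) (by omega) x]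
        have h1 := hE x m (m - 1) (m - 2) (by ring) (by ring)
        rw [h1, hy x]
        field_simp
        ring
      · obtain ⟨k, hk0, rfl⟩ : ∃ k : ℤ, 0 ≤ k ∧ m = -k - 1 := ⟨-m - 1, by omega, by omega⟩
        rw [hLe (-k - 1), hMe (-k - 1),
          show (2 : ℤ) * (-k - 1) = -2 * k - 2 by ring]
        rw [hQ1ne k hk0 x, show (-2 * k - 2 + 1 : ℤ) = -2 * k - 1 by ring, hQ1no k hk0 x,
          show (-2 * k - 2 - 1 : ℤ) = -2 * (k + 1) - 1 by ring, hQ1no (k + 1) (by omega) x,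
          show (k + 1 - 1 : ℤ) = k by ring]
        have h1 := hE x k (k - 1) (k - 2) (by ring) (by ring)
        rw [h1, hy x]
        field_simp
        ring
    · rcases le_or_gt 0 m with hm | hm
      · rw [hLo m, hMo m, hQ1o m hm x,
          show (2 * m + 1 + 1 : ℤ) = 2 * (m + 1) by ring, q1e (m + 1) (by omega) x,
          show (m + 1 - 1 : ℤ) = m by ring, show (m + 1 - 2 : ℤ) = m - 1 by ring,
          show (2 * m + 1 - 1 : ℤ) = 2 * m by ring, q1e m hm x]
        have h1 := hE x m (m - 1) (m - 2) (by ring) (by ring)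
        rw [h1, hy x]
        field_simp
        ring
      · obtain ⟨k, hk0, rfl⟩ : ∃ k : ℤ, 0 ≤ k ∧ m = -k - 1 := ⟨-m - 1, by omega, by omega⟩
        rw [hLo (-k - 1), hMo (-k - 1)]
        rw [show (2 * (-k - 1) + 1 : ℤ) = -2 * k - 1 by ring, hQ1no k hk0 x,
          show (-2 * k - 1 + 1 : ℤ) = -2 * k by ring, q1ne k hk0 x,
          show (-2 * k - 1 - 1 : ℤ) = -2 * k - 2 by ring, hQ1ne k hk0 x]
        have h1 := hE x (k - 1) (k - 2) (k - 3) (by ring) (by ring)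
        rw [h1, hy x]
        field_simp
        ring
  · -- recurrence for Q2
    intro n x
    obtain ⟨m, rfl | rfl⟩ := n.even_or_odd'
    · rcases le_or_gt 0 m with hm | hm
      · rw [hLe m, hMe m, hQ2e m hm x, hQ2o m hm x,
          show (2 * m - 1 : ℤ) = 2 * (m - 1) + 1 by ring, q2o (m - 1) (by omega) x,
          show (m - 1 - 1 : ℤ) = m - 2 by ring, show (m - 1 - 2 : ℤ) = m - 3 by ring]
        have h1 := hE x (m - 1) (m - 2) (m - 3) (by ring) (by ring)
        rw [h1, hy x]
        field_simp
        ring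
      · obtain ⟨k, hk0, rfl⟩ : ∃ k : ℤ, 1 ≤ k ∧ m = -k := ⟨-m, by omega, by omega⟩
        rw [hLe (-k), hMe (-k)]
        rw [show (2 * (-k) : ℤ) = -2 * k by ring, hQ2ne k (by omega) x,
          show (-2 * k + 1 : ℤ) = -2 * (k - 1) - 1 by ring, hQ2no (k - 1) (by omega) x,
          show (k - 1 - 1 : ℤ) = k - 2 by ring, show (k - 1 - 2 : ℤ) = k - 3 by ring,
          show (-2 * k - 1 : ℤ) = -2 * k - 1 by ring, hQ2no k (by omega) x]
        have h1 := hE x (k - 1) (k - 2) (k - 3) (by ring) (by ring)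
        rw [h1, hy x]
        field_simp
        ring
    · rcases le_or_gt 0 m with hm | hm
      · rw [hLo m, hMo m, hQ2o m hm x,
          show (2 * m + 1 + 1 : ℤ) = 2 * (m + 1) by ring, hQ2e (m + 1) (by omega) x,
          show (m + 1 - 1 : ℤ) = m by ring,
          show (2 * m + 1 - 1 : ℤ) = 2 * m by ring, hQ2e m hm x]
        have h1 := hE x m (m - 1) (m - 2) (by ring) (by ring)
        rw [h1, hy x]
        field_simp
        ring
      · obtain ⟨k, hk0, rfl⟩ : ∃ k : ℤ, 0 ≤ k ∧ m = -k - 1 := ⟨-m - 1, by omega, by omega⟩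
        rw [hLo (-k - 1), hMo (-k - 1)]
        rw [show (2 * (-k - 1) + 1 : ℤ) = -2 * k - 1 by ring, hQ2no k hk0 x,
          show (-2 * k - 1 + 1 : ℤ) = -2 * k by ring, hQ2ne k hk0 x,
          show (-2 * k - 1 - 1 : ℤ) = -2 * (k + 1) by ring, hQ2ne (k + 1) (by omega) x,
          show (k + 1 - 1 : ℤ) = k by ring]
        have h1 := hE x k (k - 1) (k - 2) (by ring) (by ring)
        rw [h1, hy x]
        field_simp
        ring
end

section
/- Let 0 < λ < μ, and set J_1 = [0, 2λ] and J_2 = [2μ, 2λ+2μ]. Then for every real z < 0: ∫_{J_1 ∪ J_2} (x - z)^{-1} · √( x(2λ-x)(2μ-x)(2λ+2μ-x) ) / (2πμ²·|λ+μ-x|) dx + (1 - λ²/μ²)/(λ+μ-z) = ( z² - 2(λ+μ)z + 2μ(λ+μ) - √( (-z)(2μ-z)(2λ-z)(2λ+2μ-z) ) ) / ( 2μ²(λ+μ-z) ), where all square roots are the nonnegative real square root (the arguments are nonnegative on J_1 ∪ J_2 and for z < 0, respectively, and λ+μ-x ≠ 0 on J_1 ∪ J_2). -/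
open Real MeasureTheory


lemma semicircle_stieltjes (b t : ℝ) (hb : 0 < b) (hbt : b < t) :
    ∫ u in (0:ℝ)..b, Real.sqrt (u * (b - u)) / (t - u)
      = Real.pi * (t - b / 2 - Real.sqrt (t * (t - b))) := by
  set F : ℝ → ℝ := fun u =>
    -Real.sqrt (u * (b - u)) + (t - b / 2) * Real.arcsin ((2 * u - b) / b)
      - Real.sqrt (t * (t - b)) * Real.arcsin (((2 * t - b) * u - b * t) / (b * (t - u)))
    with hF
  have ht0 : 0 < t := hb.trans hbt
  have htb : 0 < t - b := by linarith
  have hsq : 0 < Real.sqrt (t * (t - b)) := Real.sqrt_pos.2 (by positivity)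
  have hcont : ContinuousOn F (Set.Icc 0 b) := by
    apply ContinuousOn.sub
    apply ContinuousOn.add
    · exact ((continuousOn_id.mul (continuousOn_const.sub continuousOn_id)).sqrt).neg
    · exact continuousOn_const.mul (Real.continuous_arcsin.comp_continuousOn
        (ContinuousOn.div (by fun_prop) (by fun_prop)
          (fun x hx => by simp only [Set.mem_Icc] at hx; positivity)))
    · refine continuousOn_const.mul (Real.continuous_arcsin.comp_continuousOn
        (ContinuousOn.div (by fun_prop) (by fun_prop) (fun x hx => ?_)))
      simp only [Set.mem_Icc] at hx
      have : 0 < t - x := by linarith [hx.2]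
      positivity
  have hderiv : ∀ u ∈ Set.Ioo (0:ℝ) b,
      HasDerivAt F (Real.sqrt (u * (b - u)) / (t - u)) u := by
    intro u hu
    obtain ⟨hu0, hub⟩ := hu
    have htu : 0 < t - u := by linarith
    have hN : 0 < u * (b - u) := by nlinarith
    have hNs : 0 < Real.sqrt (u * (b - u)) := Real.sqrt_pos.2 hN
    have d1 : HasDerivAt (fun u : ℝ => -Real.sqrt (u * (b - u)))
        (-((b - 2 * u) / (2 * Real.sqrt (u * (b - u))))) u := by
      have h0 : HasDerivAt (fun u : ℝ => u * (b - u)) (b - 2 * u) u := by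
        have := (hasDerivAt_id u).mul ((hasDerivAt_const u b).sub (hasDerivAt_id u))
        simp only [id_eq] at this
        refine this.congr_deriv ?_
        simp only [Pi.sub_apply, id_eq]; ring
      exact (h0.sqrt hN.ne').neg
    have d2 : HasDerivAt (fun u : ℝ => (t - b / 2) * Real.arcsin ((2 * u - b) / b))
        ((t - b / 2) * ((1 / Real.sqrt (1 - ((2 * u - b) / b) ^ 2)) * (2 / b))) u := by
      have hlin : HasDerivAt (fun u : ℝ => (2 * u - b) / b) (2 / b) u := by
        have := (((hasDerivAt_id u).const_mul 2).sub_const b).div_const b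
        simpa using this
      have harg1 : (2 * u - b) / b ≠ -1 := by
        intro h; rw [div_eq_iff hb.ne'] at h; nlinarith
      have harg2 : (2 * u - b) / b ≠ 1 := by
        intro h; rw [div_eq_iff hb.ne'] at h; nlinarith
      exact ((Real.hasDerivAt_arcsin harg1 harg2).comp u hlin).const_mul _
    have d3 : HasDerivAt
        (fun u : ℝ => Real.sqrt (t * (t - b)) *
            Real.arcsin (((2 * t - b) * u - b * t) / (b * (t - u))))
        (Real.sqrt (t * (t - b)) *
          ((1 / Real.sqrt (1 - (((2 * t - b) * u - b * t) / (b * (t - u))) ^ 2)) *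
            (((2 * t - b) * (b * (t - u)) - ((2 * t - b) * u - b * t) * (b * (-1))) /
              (b * (t - u)) ^ 2))) u := by
      have hnum : HasDerivAt (fun u : ℝ => (2 * t - b) * u - b * t) (2 * t - b) u := by
        have := ((hasDerivAt_id u).const_mul (2 * t - b)).sub_const (b * t)
        simpa using this
      have hden : HasDerivAt (fun u : ℝ => b * (t - u)) (b * (-1)) u := by
        have := ((hasDerivAt_const u t).sub (hasDerivAt_id u)).const_mul b
        simpa using this
      have hpsi := hnum.div hden (by positivity)
      have hid : (b * (t - u)) ^ 2 - ((2 * t - b) * u - b * t) ^ 2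
          = 4 * (t * (t - b)) * (u * (b - u)) := by ring
      have hpos : 0 < 4 * (t * (t - b)) * (u * (b - u)) := by positivity
      have habs : (((2 * t - b) * u - b * t) / (b * (t - u))) ^ 2 < 1 := by
        rw [div_pow, div_lt_one (by positivity)]
        linarith
      have harg1 : ((2 * t - b) * u - b * t) / (b * (t - u)) ≠ -1 := by
        intro h; rw [h] at habs; norm_num at habs
      have harg2 : ((2 * t - b) * u - b * t) / (b * (t - u)) ≠ 1 := by
        intro h; rw [h] at habs; norm_num at habs
      exact ((Real.hasDerivAt_arcsin harg1 harg2).comp u hpsi).const_mul _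
    have hsum := (d1.add d2).sub d3
    refine hsum.congr_deriv (Eq.symm ?_)
    have e1 : Real.sqrt (1 - ((2 * u - b) / b) ^ 2) = 2 / b * Real.sqrt (u * (b - u)) := by
      rw [show 1 - ((2 * u - b) / b) ^ 2 = (2 / b) ^ 2 * (u * (b - u)) by
        field_simp; ring]
      rw [Real.sqrt_mul (sq_nonneg _), Real.sqrt_sq (by positivity)]
    have e2 : Real.sqrt (1 - (((2 * t - b) * u - b * t) / (b * (t - u))) ^ 2)
        = 2 / (b * (t - u)) * (Real.sqrt (t * (t - b)) * Real.sqrt (u * (b - u))) := by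
      rw [show 1 - (((2 * t - b) * u - b * t) / (b * (t - u))) ^ 2
          = (2 / (b * (t - u))) ^ 2 * ((t * (t - b)) * (u * (b - u))) by
        field_simp; ring]
      rw [Real.sqrt_mul (sq_nonneg _), Real.sqrt_sq (by positivity),
        Real.sqrt_mul (by positivity)]
    rw [e1, e2]
    set N := Real.sqrt (u * (b - u)) with hNdef
    set T := Real.sqrt (t * (t - b)) with hTdef
    have hNm : N * N = u * (b - u) := Real.mul_self_sqrt hN.le
    have hTm : T * T = t * (t - b) := Real.mul_self_sqrt (by positivity)
    field_simp
    linear_combination 2 * hNm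
  have hint : IntervalIntegrable (fun u => Real.sqrt (u * (b - u)) / (t - u)) volume 0 b := by
    apply ContinuousOn.intervalIntegrable
    apply ContinuousOn.div (by fun_prop) (by fun_prop)
    intro x hx
    rw [Set.uIcc_of_le hb.le, Set.mem_Icc] at hx
    have : 0 < t - x := by linarith [hx.2]
    exact this.ne'
  have key := intervalIntegral.integral_eq_sub_of_hasDeriv_right_of_le hb.le hcont
    (fun x hx => (hderiv x hx).hasDerivWithinAt) hint
  rw [key, hF]
  simp only
  rw [show b * (b - b) = 0 by ring, show (0:ℝ) * (b - 0) = 0 by ring, Real.sqrt_zero]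
  rw [show (2 * b - b) / b = 1 by rw [div_eq_one_iff_eq hb.ne']; ring,
    show (2 * 0 - b) / b = -1 by rw [div_eq_iff hb.ne']; ring]
  rw [show ((2 * t - b) * b - b * t) / (b * (t - b)) = 1 by
    rw [div_eq_one_iff_eq (by positivity)]; ring]
  rw [show ((2 * t - b) * 0 - b * t) / (b * (t - 0)) = -1 by
    rw [sub_zero, div_eq_iff (by positivity : b * t ≠ 0)]; ring]
  rw [Real.arcsin_one, Real.arcsin_neg_one]
  ring

lemma semicircle_stieltjes_neg (b s : ℝ) (hb : 0 < b) (hs : 0 < s) :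
    ∫ u in (0:ℝ)..b, Real.sqrt (u * (b - u)) / (u + s)
      = Real.pi * (s + b / 2 - Real.sqrt (s * (s + b))) := by
  have h := intervalIntegral.integral_comp_sub_left
    (a := 0) (b := b) (fun u => Real.sqrt (u * (b - u)) / ((b + s) - u)) b
  rw [sub_self, sub_zero] at h
  have h2 : ∀ x : ℝ, Real.sqrt ((b - x) * (b - (b - x))) / (b + s - (b - x))
      = Real.sqrt (x * (b - x)) / (x + s) := by
    intro x
    rw [show b - (b - x) = x by ring, mul_comm, show b + s - (b - x) = x + s by ring]
  simp only [h2] at h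
  rw [h, semicircle_stieltjes b (b + s) hb (by linarith)]
  rw [show (b + s) * (b + s - b) = s * (s + b) by ring]
  ring_nf

set_option maxHeartbeats 2000000 in
/-- Stieltjes transform of the spectral measure of the birth-death process on `ℕ₀` with
alternating constant rates (Case 2), for `0 < λ < μ`: absolutely continuous part on
`J₁ ∪ J₂ = [0,2λ] ∪ [2μ, 2λ+2μ]` plus an atom of mass `1 - λ²/μ²` at `λ+μ`. -/
theorem alternating_rates_case2_stieltjes (lam mu : ℝ) (hlam : 0 < lam) (hlm : lam < mu)
    (z : ℝ) (hz : z < 0) :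
    (∫ x in (Set.Icc (0:ℝ) (2 * lam) ∪ Set.Icc (2 * mu) (2 * lam + 2 * mu)),
        (x - z)⁻¹ * (Real.sqrt (x * (2 * lam - x) * (2 * mu - x) * (2 * lam + 2 * mu - x)) /
          (2 * Real.pi * mu ^ 2 * |lam + mu - x|)))
      + (1 - lam ^ 2 / mu ^ 2) / (lam + mu - z)
      = (z ^ 2 - 2 * (lam + mu) * z + 2 * mu * (lam + mu) -
          Real.sqrt (-z * (2 * mu - z) * (2 * lam - z) * (2 * lam + 2 * mu - z))) /
        (2 * mu ^ 2 * (lam + mu - z)) := by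
  have hmu : 0 < mu := hlam.trans hlm
  set h : ℝ → ℝ := fun x => (x - z)⁻¹ *
      (Real.sqrt (x * (2 * lam - x) * (2 * mu - x) * (2 * lam + 2 * mu - x)) /
        (2 * Real.pi * mu ^ 2 * |lam + mu - x|)) with hh
  -- continuity of h on sets avoiding the pole and z
  have hcont : ∀ X : Set ℝ, (∀ x ∈ X, x - z ≠ 0) → (∀ x ∈ X, lam + mu - x ≠ 0) →
      ContinuousOn h X := by
    intro X h1 h2
    apply ContinuousOn.mul
    · exact ContinuousOn.inv₀ (by fun_prop) h1
    · apply ContinuousOn.div (by fun_prop)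
      · exact (continuous_const.mul (continuous_abs.comp (by fun_prop))).continuousOn
      · intro x hx
        have := h2 x hx
        have hpi := Real.pi_pos
        have : |lam + mu - x| ≠ 0 := abs_ne_zero.2 this
        positivity
  have hne1 : ∀ x ∈ Set.Icc (0:ℝ) (2*lam), x - z ≠ 0 := fun x hx => by
    have h0 := hx.1; have : 0 < x - z := by linarith
    exact this.ne'
  have hne1' : ∀ x ∈ Set.Icc (0:ℝ) (2*lam), lam + mu - x ≠ 0 := fun x hx => by
    have h0 := hx.2; have : 0 < lam + mu - x := by linarith
    exact this.ne'
  have hne2 : ∀ x ∈ Set.Icc (2*mu) (2*lam + 2*mu), x - z ≠ 0 := fun x hx => by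
    have h0 := hx.1; have : 0 < x - z := by linarith
    exact this.ne'
  have hne2' : ∀ x ∈ Set.Icc (2*mu) (2*lam + 2*mu), lam + mu - x ≠ 0 := fun x hx => by
    have h0 := hx.1; have : lam + mu - x < 0 := by linarith
    exact this.ne
  -- split the union
  have hsplit : (∫ x in (Set.Icc (0:ℝ) (2 * lam) ∪ Set.Icc (2 * mu) (2 * lam + 2 * mu)), h x)
      = (∫ x in Set.Icc (0:ℝ) (2*lam), h x) + ∫ x in Set.Icc (2*mu) (2*lam+2*mu), h x := by
    apply MeasureTheory.setIntegral_union
    · rw [Set.disjoint_left]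
      intro x hx hx'
      have := hx.2; have := hx'.1; linarith
    · exact measurableSet_Icc
    · exact (hcont _ hne1 hne1').integrableOn_Icc
    · exact (hcont _ hne2 hne2').integrableOn_Icc
  have hIcc1 : (∫ x in Set.Icc (0:ℝ) (2*lam), h x) = ∫ x in (0:ℝ)..(2*lam), h x := by
    rw [MeasureTheory.integral_Icc_eq_integral_Ioc, intervalIntegral.integral_of_le (by linarith)]
  have hIcc2 : (∫ x in Set.Icc (2*mu) (2*lam+2*mu), h x)
      = ∫ x in (2*mu)..(2*lam+2*mu), h x := by
    rw [MeasureTheory.integral_Icc_eq_integral_Ioc, intervalIntegral.integral_of_le (by linarith)]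
  -- reflect the second integral
  have hrefl : (∫ x in (2*mu)..(2*lam+2*mu), h x)
      = ∫ x in (0:ℝ)..(2*lam), h (2*lam + 2*mu - x) := by
    rw [intervalIntegral.integral_comp_sub_left h (2*lam + 2*mu)]
    norm_num
  -- notation
  set sv := z^2 - 2*(lam+mu)*z with hsv
  have hspos : 0 < sv := by nlinarith
  set bv := 4*lam*mu with hbv
  have hbpos : 0 < bv := by positivity
  set cv := (lam+mu)^2 with hcv
  have hbc : bv < cv := by nlinarith
  set phi : ℝ → ℝ := fun x => 2*(lam+mu)*x - x^2 with hphi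
  set G : ℝ → ℝ := fun u => (lam+mu-z) * Real.sqrt (u * (bv - u)) /
      (2*Real.pi*mu^2 * ((cv - u) * (u + sv))) with hG
  -- integrability over [0,2lam]
  have huIcc : Set.uIcc (0:ℝ) (2*lam) = Set.Icc 0 (2*lam) := Set.uIcc_of_le (by linarith)
  have hint1 : IntervalIntegrable h volume 0 (2*lam) := by
    apply ContinuousOn.intervalIntegrable
    rw [huIcc]; exact hcont _ hne1 hne1'
  have hint2 : IntervalIntegrable (fun x => h (2*lam + 2*mu - x)) volume 0 (2*lam) := by
    apply ContinuousOn.intervalIntegrable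
    rw [huIcc]
    refine (hcont _ hne2 hne2').comp (by fun_prop) ?_
    intro x hx
    simp only [Set.mem_Icc] at hx ⊢
    constructor <;> linarith [hx.1, hx.2]
  have hadd : (∫ x in (0:ℝ)..(2*lam), h x) + (∫ x in (0:ℝ)..(2*lam), h (2*lam + 2*mu - x))
      = ∫ x in (0:ℝ)..(2*lam), (h x + h (2*lam + 2*mu - x)) :=
    (intervalIntegral.integral_add hint1 hint2).symm
  -- pointwise identity
  have hEq : ∀ x ∈ Set.uIcc (0:ℝ) (2*lam),
      h x + h (2*lam + 2*mu - x) = (2*(lam+mu) - 2*x) • (G ∘ phi) x := by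
    intro x hx
    rw [huIcc, Set.mem_Icc] at hx
    obtain ⟨hx0, hx2⟩ := hx
    have hlx : 0 < lam + mu - x := by linarith
    have hxz : 0 < x - z := by linarith
    have hxz2 : 0 < 2*lam + 2*mu - x - z := by linarith
    have habs1 : |lam + mu - x| = lam + mu - x := abs_of_pos hlx
    have habs2 : |lam + mu - (2*lam + 2*mu - x)| = lam + mu - x := by
      rw [abs_of_nonpos (by linarith)]; ring
    have hphix0 : 0 ≤ phi x := by simp only [hphi]; nlinarith
    have hsq1 : x * (2*lam - x) * (2*mu - x) * (2*lam + 2*mu - x)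
        = phi x * (bv - phi x) := by simp only [hphi, hbv]; ring
    have hsq2 : (2*lam + 2*mu - x) * (2*lam - (2*lam + 2*mu - x)) *
        (2*mu - (2*lam + 2*mu - x)) * (2*lam + 2*mu - (2*lam + 2*mu - x))
        = phi x * (bv - phi x) := by simp only [hphi, hbv]; ring
    have hcphi : cv - phi x = (lam + mu - x)^2 := by simp only [hphi, hcv]; ring
    have hsphi : (x - z) * (2*lam + 2*mu - x - z) = phi x + sv := by
      simp only [hphi, hsv]; ring
    rw [hh]
    simp only [smul_eq_mul, Function.comp_apply, hG]
    rw [hsq1, hsq2, habs1, habs2, hcphi]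
    have hpi := Real.pi_pos
    have hden : 0 < phi x + sv := by linarith
    field_simp
    rw [← hsphi]
    have hne : 2 * (lam + mu) - x - z ≠ 0 := by linarith
    field_simp
    ring
  have hEq' : (∫ x in (0:ℝ)..(2*lam), (h x + h (2*lam + 2*mu - x)))
      = ∫ x in (0:ℝ)..(2*lam), (2*(lam+mu) - 2*x) • (G ∘ phi) x :=
    intervalIntegral.integral_congr hEq
  have hderivphi : ∀ x ∈ Set.uIcc (0:ℝ) (2*lam), HasDerivAt phi (2*(lam+mu) - 2*x) x := by
    intro x _
    rw [hphi]
    have h1 := ((hasDerivAt_id x).const_mul (2*(lam+mu))).sub (hasDerivAt_pow 2 x)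
    simp only [id_eq] at h1
    refine h1.congr_deriv (Eq.symm ?_)
    push_cast
    ring
  have himg : phi '' Set.uIcc (0:ℝ) (2*lam) ⊆ Set.Icc 0 bv := by
    rintro u ⟨x, hx, rfl⟩
    rw [huIcc, Set.mem_Icc] at hx
    simp only [hphi, hbv, Set.mem_Icc]
    constructor <;> nlinarith [hx.1, hx.2]
  have hGcont : ContinuousOn G (Set.Icc 0 bv) := by
    rw [hG]
    apply ContinuousOn.div (by fun_prop) (by fun_prop)
    intro u hu
    rw [Set.mem_Icc] at hu
    have h1 : 0 < cv - u := by linarith [hu.2, hbc]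
    have h2 : 0 < u + sv := by linarith [hu.1]
    have hpi := Real.pi_pos
    positivity
  have hsub := intervalIntegral.integral_comp_smul_deriv' hderivphi (by fun_prop)
    (hGcont.mono himg)
  have hphi0 : phi 0 = 0 := by simp [hphi]
  have hphib : phi (2*lam) = bv := by simp only [hphi, hbv]; ring
  rw [hphi0, hphib] at hsub
  -- partial fractions
  have hcvpos : 0 < cv := by rw [hcv]; positivity
  have inta : IntervalIntegrable (fun u => Real.sqrt (u*(bv-u))/(u+sv)) volume 0 bv := by
    apply ContinuousOn.intervalIntegrable
    apply ContinuousOn.div (by fun_prop) (by fun_prop)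
    intro u hu
    rw [Set.uIcc_of_le hbpos.le, Set.mem_Icc] at hu
    have : 0 < u + sv := by linarith [hu.1]
    exact this.ne'
  have intb : IntervalIntegrable (fun u => Real.sqrt (u*(bv-u))/(cv-u)) volume 0 bv := by
    apply ContinuousOn.intervalIntegrable
    apply ContinuousOn.div (by fun_prop) (by fun_prop)
    intro u hu
    rw [Set.uIcc_of_le hbpos.le, Set.mem_Icc] at hu
    have : 0 < cv - u := by linarith [hu.2, hbc]
    exact this.ne'
  have hpf : (∫ u in (0:ℝ)..bv, G u)
      = (lam+mu-z) / (2*Real.pi*mu^2*(cv+sv)) *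
        ((∫ u in (0:ℝ)..bv, Real.sqrt (u*(bv-u))/(u+sv))
          + ∫ u in (0:ℝ)..bv, Real.sqrt (u*(bv-u))/(cv-u)) := by
    rw [← intervalIntegral.integral_add inta intb, ← intervalIntegral.integral_const_mul]
    apply intervalIntegral.integral_congr
    intro u hu
    rw [Set.uIcc_of_le hbpos.le, Set.mem_Icc] at hu
    have h1 : 0 < cv - u := by linarith [hu.2, hbc]
    have h2 : 0 < u + sv := by linarith [hu.1]
    have hcs : 0 < cv + sv := by linarith
    have hpi := Real.pi_pos
    simp only [hG]
    field_simp
    ring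
  have hA := semicircle_stieltjes_neg bv sv hbpos hspos
  have hB := semicircle_stieltjes bv cv hbpos hbc
  -- assemble everything
  rw [hsplit, hIcc1, hIcc2, hrefl, hadd, hEq', hsub, hpf, hA, hB]
  rw [show cv*(cv-bv) = (mu^2-lam^2)^2 by rw [hcv, hbv]; ring,
    Real.sqrt_sq (by nlinarith : (0:ℝ) ≤ mu^2 - lam^2)]
  rw [show -z*(2*mu-z)*(2*lam-z)*(2*lam+2*mu-z) = sv*(sv+bv) by rw [hsv, hbv]; ring]
  have hcssq : cv + sv = (lam+mu-z)^2 := by rw [hcv, hsv]; ring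
  have hlmz : 0 < lam + mu - z := by linarith
  rw [hcssq]
  have hpi := Real.pi_pos
  set E := Real.sqrt (sv*(sv+bv)) with hE
  rw [hsv, hbv, hcv]
  field_simp
  ring
end

section
/- Let λ, μ > 0 and y = ((λ+μ-x)² - λ² - μ²)/(2λμ). Define: Q_{2k}^1(x) = (2y + μ/λ)U_{k-1}(y) - U_{k-2}(y) for k ≥ 1, Q_{2k+1}^1(x) = (λ+μ-x)U_k(y)/λ for k ≥ 0, Q_0^1 = 1; Q_{2k}^2(x) = (x-λ-μ)U_{k-1}(y)/λ for k ≥ 0, Q_{2k+1}^2(x) = -(μ/λ)[(2y + λ/μ)U_{k-1}(y) - U_{k-2}(y)] for k ≥ 1, Q_1^2 = -μ/λ; and for negative indices Q_{-n-1}^1(x) = Q_n^2(x) and Q_{-n-1}^2(x) = Q_n^1(x) for all n ≥ 0, where U_k are the ℤ-indexed Chebyshev polynomials of the second kind (U_{-1} = 0, U_{-2} = -1). Then Q_0^1 = 1, Q_{-1}^1 = 0, Q_0^2 = 0, Q_{-1}^2 = 1, and for every n ∈ ℤ, α = 1,2: -x·Q_n^α(x) = λ_n·Q_{n+1}^α(x)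 - (λ_n+μ_n)·Q_n^α(x) + μ_n·Q_{n-1}^α(x), where λ_{2m} = λ, λ_{2m+1} = μ, μ_{2m} = μ, μ_{2m+1} = λ for all m ∈ ℤ. -/
open Real Polynomial

/-- The birth-death polynomials of the bilateral birth-death process on `ℤ` with alternating
constant rates `λ_{2m} = λ`, `λ_{2m+1} = μ`, `μ_{2m} = μ`, `μ_{2m+1} = λ` (Case 2) satisfy the
initial conditions and the three-term recurrence. -/
theorem alternating_rates_polynomials_case2 (lam mu : ℝ) (hlam : 0 < lam) (hmu : 0 < mu)
    (L M : ℤ → ℝ)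
    (hLe : ∀ m : ℤ, L (2 * m) = lam) (hLo : ∀ m : ℤ, L (2 * m + 1) = mu)
    (hMe : ∀ m : ℤ, M (2 * m) = mu) (hMo : ∀ m : ℤ, M (2 * m + 1) = lam)
    (y : ℝ → ℝ)
    (hy : ∀ x : ℝ, y x = ((lam + mu - x) ^ 2 - lam ^ 2 - mu ^ 2) / (2 * lam * mu))
    (Q1 Q2 : ℤ → ℝ → ℝ)
    (hQ1zero : ∀ x : ℝ, Q1 0 x = 1)
    (hQ1e : ∀ k : ℤ, 1 ≤ k → ∀ x : ℝ, Q1 (2 * k) x =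
      (2 * y x + mu / lam) * (Polynomial.Chebyshev.U ℝ (k - 1)).eval (y x) -
        (Polynomial.Chebyshev.U ℝ (k - 2)).eval (y x))
    (hQ1o : ∀ k : ℤ, 0 ≤ k → ∀ x : ℝ, Q1 (2 * k + 1) x =
      (lam + mu - x) * (Polynomial.Chebyshev.U ℝ k).eval (y x) / lam)
    (hQ2e : ∀ k : ℤ, 0 ≤ k → ∀ x : ℝ, Q2 (2 * k) x =
      (x - lam - mu) * (Polynomial.Chebyshev.U ℝ (k - 1)).eval (y x) / lam)
    (hQ2one : ∀ x : ℝ, Q2 1 x = -(mu / lam))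
    (hQ2o : ∀ k : ℤ, 1 ≤ k → ∀ x : ℝ, Q2 (2 * k + 1) x =
      -(mu / lam) * ((2 * y x + lam / mu) * (Polynomial.Chebyshev.U ℝ (k - 1)).eval (y x) -
        (Polynomial.Chebyshev.U ℝ (k - 2)).eval (y x)))
    (hQ1neg : ∀ n : ℤ, 0 ≤ n → ∀ x : ℝ, Q1 (-n - 1) x = Q2 n x)
    (hQ2neg : ∀ n : ℤ, 0 ≤ n → ∀ x : ℝ, Q2 (-n - 1) x = Q1 n x) :
    (∀ x : ℝ, Q1 0 x = 1) ∧ (∀ x : ℝ, Q1 (-1) x = 0) ∧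
    (∀ x : ℝ, Q2 0 x = 0) ∧ (∀ x : ℝ, Q2 (-1) x = 1) ∧
    (∀ n : ℤ, ∀ x : ℝ,
      -x * Q1 n x = L n * Q1 (n + 1) x - (L n + M n) * Q1 n x + M n * Q1 (n - 1) x) ∧
    (∀ n : ℤ, ∀ x : ℝ,
      -x * Q2 n x = L n * Q2 (n + 1) x - (L n + M n) * Q2 n x + M n * Q2 (n - 1) x) := by
  have hlam' : lam ≠ 0 := ne_of_gt hlam
  have hmu' : mu ≠ 0 := ne_of_gt hmu
  set u : ℤ → ℝ → ℝ := fun k x => (Polynomial.Chebyshev.U ℝ k).eval (y x) with hu_def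
  -- Chebyshev recurrence, evaluated
  have hu : ∀ (k : ℤ) (x : ℝ), u k x = 2 * y x * u (k - 1) x - u (k - 2) x := by
    intro k x
    have := Polynomial.Chebyshev.U_sub_two ℝ k
    have h2 : (Polynomial.Chebyshev.U ℝ (k - 2)).eval (y x) =
        2 * y x * (Polynomial.Chebyshev.U ℝ (k - 1)).eval (y x) -
          (Polynomial.Chebyshev.U ℝ k).eval (y x) := by
      rw [this]; simp
    simp only [hu_def]
    linarith [h2]
  have hun1 : ∀ x : ℝ, u (-1) x = 0 := by intro x; simp [hu_def]
  have hun2 : ∀ x : ℝ, u (-2) x = -1 := by intro x; simp [hu_def]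
  have hu0 : ∀ x : ℝ, u 0 x = 1 := by intro x; simp [hu_def]
  -- extended even formula for Q1
  have H1e : ∀ k : ℤ, 0 ≤ k → ∀ x : ℝ,
      Q1 (2 * k) x = (2 * y x + mu / lam) * u (k - 1) x - u (k - 2) x := by
    intro k hk x
    rcases eq_or_lt_of_le hk with h | h
    · subst h
      simp only [mul_zero, hQ1zero]
      rw [show (0:ℤ) - 1 = -1 by ring, show (0:ℤ) - 2 = -2 by ring, hun1 x, hun2 x]
      ring
    · exact hQ1e k h x
  -- extended odd formula for Q1
  have H1o : ∀ k : ℤ, -1 ≤ k → ∀ x : ℝ,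
      Q1 (2 * k + 1) x = (lam + mu - x) * u k x / lam := by
    intro k hk x
    rcases eq_or_lt_of_le hk with h | h
    · subst h
      have h1 : Q1 (2 * (-1) + 1) x = Q2 0 x := by
        have := hQ1neg 0 le_rfl x
        norm_num at this ⊢
        exact this
      have h2 := hQ2e 0 le_rfl x
      rw [show (2:ℤ) * 0 = 0 by ring, show (0:ℤ) - 1 = -1 by ring] at h2
      have h3 := hun1 x
      simp only [hu_def] at h3
      rw [h1, h2, h3, hun1 x]
      ring
    · exact hQ1o k (by omega) x
  -- extended odd formula for Q2
  have H2o : ∀ k : ℤ, -1 ≤ k → ∀ x : ℝ,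
      Q2 (2 * k + 1) x = -(mu / lam) * ((2 * y x + lam / mu) * u (k - 1) x - u (k - 2) x) := by
    intro k hk x
    rcases eq_or_lt_of_le hk with h | h
    · subst h
      have h1 : Q2 (2 * (-1) + 1) x = Q1 0 x := by
        have := hQ2neg 0 le_rfl x
        norm_num at this ⊢
        exact this
      rw [h1, hQ1zero x]
      have hm3 : u (-3) x = -(2 * y x) := by
        have := hu (-1) x
        rw [show (-1:ℤ) - 1 = -2 by ring, show (-1:ℤ) - 2 = -3 by ring, hun2 x, hun1 x] at this
        linarith
      rw [show (-1:ℤ) - 1 = -2 by ring, show (-1:ℤ) - 2 = -3 by ring, hun2 x, hm3]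
      field_simp
      ring
    · rcases eq_or_lt_of_le (show (0:ℤ) ≤ k by omega) with h0 | h0
      · subst h0
        rw [show (2:ℤ) * 0 + 1 = 1 by ring, hQ2one x]
        rw [show (0:ℤ) - 1 = -1 by ring, show (0:ℤ) - 2 = -2 by ring, hun1 x, hun2 x]
        ring
      · exact hQ2o k h0 x
  -- Q2 even formula as `u`
  have H2e : ∀ k : ℤ, 0 ≤ k → ∀ x : ℝ,
      Q2 (2 * k) x = (x - lam - mu) * u (k - 1) x / lam := fun k hk x => hQ2e k hk x
  -- the recurrence for Q1 at nonnegative indices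
  have rec1 : ∀ n : ℤ, 0 ≤ n → ∀ x : ℝ,
      -x * Q1 n x = L n * Q1 (n + 1) x - (L n + M n) * Q1 n x + M n * Q1 (n - 1) x := by
    intro n hn x
    rcases Int.even_or_odd n with ⟨k, hk⟩ | ⟨k, hk⟩
    · -- n = 2k
      have hk' : n = 2 * k := by omega
      have hk0 : 0 ≤ k := by omega
      subst hk'
      rw [hLe, hMe, H1e k hk0 x,
        show 2 * k + 1 = 2 * k + 1 from rfl, H1o k (by omega) x,
        show 2 * k - 1 = 2 * (k - 1) + 1 by ring, H1o (k - 1) (by omega) x]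
      have h1 := hu k x
      rw [h1, hy x]
      field_simp
      ring
    · -- n = 2k + 1
      have hk0 : 0 ≤ k := by omega
      subst hk
      rw [hLo, hMo, H1o k (by omega) x,
        show 2 * k + 1 + 1 = 2 * (k + 1) by ring, H1e (k + 1) (by omega) x,
        show 2 * k + 1 - 1 = 2 * k by ring, H1e k hk0 x]
      rw [show k + 1 - 1 = k by ring, show k + 1 - 2 = k - 1 by ring]
      have h1 := hu k x
      rw [h1, hy x]
      field_simp
      ring
  -- the recurrence for Q2 at nonnegative indices
  have rec2 : ∀ n : ℤ, 0 ≤ n → ∀ x : ℝ,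
      -x * Q2 n x = L n * Q2 (n + 1) x - (L n + M n) * Q2 n x + M n * Q2 (n - 1) x := by
    intro n hn x
    rcases Int.even_or_odd n with ⟨k, hk⟩ | ⟨k, hk⟩
    · -- n = 2k
      have hk' : n = 2 * k := by omega
      have hk0 : 0 ≤ k := by omega
      subst hk'
      rw [hLe, hMe, H2e k hk0 x, H2o k (by omega) x,
        show 2 * k - 1 = 2 * (k - 1) + 1 by ring, H2o (k - 1) (by omega) x]
      rw [show k - 1 - 1 = k - 2 by ring, show k - 1 - 2 = k - 3 by ring]
      have h1 := hu (k - 1) x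
      rw [show k - 1 - 1 = k - 2 by ring, show k - 1 - 2 = k - 3 by ring] at h1
      rw [h1, hy x]
      field_simp
      ring
    · -- n = 2k + 1
      have hk0 : 0 ≤ k := by omega
      subst hk
      rw [hLo, hMo, H2o k (by omega) x,
        show 2 * k + 1 + 1 = 2 * (k + 1) by ring, H2e (k + 1) (by omega) x,
        show 2 * k + 1 - 1 = 2 * k by ring, H2e k hk0 x]
      rw [show k + 1 - 1 = k by ring]
      have h1 := hu k x
      rw [h1, hy x]
      field_simp
      ring
  -- initial conditions
  have i1 : ∀ x : ℝ, Q1 (-1) x = 0 := by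
    intro x
    have h := hQ1neg 0 le_rfl x
    norm_num at h
    have h2 := hQ2e 0 le_rfl x
    rw [show (2:ℤ) * 0 = 0 by ring, show (0:ℤ) - 1 = -1 by ring] at h2
    have h3 := hun1 x
    simp only [hu_def] at h3
    rw [h, h2, h3]; ring
  have i2 : ∀ x : ℝ, Q2 0 x = 0 := by
    intro x
    have h2 := hQ2e 0 le_rfl x
    rw [show (2:ℤ) * 0 = 0 by ring, show (0:ℤ) - 1 = -1 by ring] at h2
    have h3 := hun1 x
    simp only [hu_def] at h3
    rw [h2, h3]; ring
  have i3 : ∀ x : ℝ, Q2 (-1) x = 1 := by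
    intro x
    have h := hQ2neg 0 le_rfl x
    norm_num at h
    rw [h, hQ1zero]
  refine ⟨hQ1zero, i1, i2, i3, ?_, ?_⟩
  · -- recurrence for Q1 at all n
    intro n x
    rcases le_or_gt 0 n with hn | hn
    · exact rec1 n hn x
    · set m : ℤ := -n - 1 with hm
      have hm0 : 0 ≤ m := by omega
      have hQn : Q1 n x = Q2 m x := by
        have := hQ1neg m hm0 x
        rw [show -m - 1 = n by omega] at this
        exact this
      have hQnm : Q1 (n - 1) x = Q2 (m + 1) x := by
        have := hQ1neg (m + 1) (by omega) x
        rw [show -(m + 1) - 1 = n - 1 by omega] at this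
        exact this
      have hQnp : Q1 (n + 1) x = Q2 (m - 1) x := by
        rcases eq_or_lt_of_le hm0 with h0 | h0
        · have hn1 : n + 1 = 0 := by omega
          rw [hn1, hQ1zero]
          have := hQ2neg 0 le_rfl x
          norm_num at this
          rw [show m - 1 = -1 by omega, this, hQ1zero]
        · have := hQ1neg (m - 1) (by omega) x
          rw [show -(m - 1) - 1 = n + 1 by omega] at this
          exact this
      have hLM : L n = M m ∧ M n = L m := by
        rcases Int.even_or_odd m with ⟨j, hj⟩ | ⟨j, hj⟩
        · have hjm : m = 2 * j := by omega
          have hnm : n = 2 * (-j - 1) + 1 := by omega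
          rw [hjm, hnm, hLo, hMo, hLe, hMe]
          exact ⟨rfl, rfl⟩
        · have hnm : n = 2 * (-j - 1) := by omega
          rw [hj, hnm, hLe, hMe, hLo, hMo]
          exact ⟨rfl, rfl⟩
      rw [hQn, hQnm, hQnp, hLM.1, hLM.2]
      have := rec2 m hm0 x
      linarith
  · -- recurrence for Q2 at all n
    intro n x
    rcases le_or_gt 0 n with hn | hn
    · exact rec2 n hn x
    · set m : ℤ := -n - 1 with hm
      have hm0 : 0 ≤ m := by omega
      have hQn : Q2 n x = Q1 m x := by
        have := hQ2neg m hm0 x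
        rw [show -m - 1 = n by omega] at this
        exact this
      have hQnm : Q2 (n - 1) x = Q1 (m + 1) x := by
        have := hQ2neg (m + 1) (by omega) x
        rw [show -(m + 1) - 1 = n - 1 by omega] at this
        exact this
      have hQnp : Q2 (n + 1) x = Q1 (m - 1) x := by
        rcases eq_or_lt_of_le hm0 with h0 | h0
        · have hn1 : n + 1 = 0 := by omega
          rw [hn1, i2]
          have := hQ1neg 0 le_rfl x
          norm_num at this
          rw [show m - 1 = -1 by omega, this, i2]
        · have := hQ2neg (m - 1) (by omega) x
          rw [show -(m - 1) - 1 = n + 1 by omega] at this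
          exact this
      have hLM : L n = M m ∧ M n = L m := by
        rcases Int.even_or_odd m with ⟨j, hj⟩ | ⟨j, hj⟩
        · have hjm : m = 2 * j := by omega
          have hnm : n = 2 * (-j - 1) + 1 := by omega
          rw [hjm, hnm, hLo, hMo, hLe, hMe]
          exact ⟨rfl, rfl⟩
        · have hnm : n = 2 * (-j - 1) := by omega
          rw [hj, hnm, hLe, hMe, hLo, hMo]
          exact ⟨rfl, rfl⟩
      rw [hQn, hQnm, hQnp, hLM.1, hLM.2]
      have := rec1 m hm0 x
      linarith
end

section
/- Let λ, μ, λ₀, μ₀ > 0 and y = (λ+μ-x)/(2√(λμ)). Define, for n ≥ 0: Q_n^1(x) = (μ/λ)^{n/2}·[ (2(λ₀-λ)/λ₀)·T_n(y) + ((2λ-λ₀)/λ₀)·U_n(y) + √(λ/μ)·((λ₀+μ₀-λ-μ)/λ₀)·U_{n-1}(y) ], Q_{-n-1}^1(x) = -(λ/μ)^{(n+1)/2} U_{n-1}(y), Q_n^2(x) = -(μ₀/λ₀)·(μ/λ)^{(n-1)/2} U_{n-1}(y), Q_{-n-1}^2(x) = (λ/μ)^{n/2} U_n(y), where T_k and U_k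 are the ℤ-indexed Chebyshev polynomials of the first and second kinds (U_{-1} = 0). Then Q_0^1 = 1, Q_{-1}^1 = 0, Q_0^2 = 0, Q_{-1}^2 = 1, and for every n ∈ ℤ, α = 1,2: -x·Q_n^α(x) = λ_n·Q_{n+1}^α(x) - (λ_n+μ_n)·Q_n^α(x) + μ_n·Q_{n-1}^α(x), where λ_0, μ_0 at state 0 are the given defect rates λ₀, μ₀ and λ_n = λ, μ_n = μ for all n ∈ ℤ, n ≠ 0. -/
open Real Polynomial

lemma step1 (lam mu s r x Y K A B C : ℝ) (h1 : lam * r = s) (h2 : s * r = mu)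
    (hy : lam + mu - x = 2 * s * Y) (hrec : A + C = 2 * Y * B) (j : ℕ) :
    -x * (K * r ^ (j+1) * B) =
      lam * (K * r ^ (j+2) * A) - (lam + mu) * (K * r ^ (j+1) * B) + mu * (K * r ^ j * C) := by
  linear_combination (-(K * r^(j+1) * A)) * h1 + (K * r^j * C) * h2
    - (K * s * r^(j+1)) * hrec + (K * r^(j+1) * B) * hy

lemma step2 (lam mu s c x Y K A B C : ℝ) (h1 : mu * c = s) (h2 : s * c = lam)
    (hy : lam + mu - x = 2 * s * Y) (hrec : A + C = 2 * Y * B) (j : ℕ) :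
    -x * (K * c ^ (j+1) * B) =
      lam * (K * c ^ j * A) - (lam + mu) * (K * c ^ (j+1) * B) + mu * (K * c ^ (j+2) * C) := by
  linear_combination step1 mu lam s c x Y K C B A h1 h2 (by linarith) (by linarith) j

lemma Trec (Y : ℝ) (a b c : ℤ) (h1 : a = b + 1) (h2 : c = b - 1) :
    (Chebyshev.T ℝ a).eval Y + (Chebyshev.T ℝ c).eval Y = 2*Y*(Chebyshev.T ℝ b).eval Y := by
  subst h1 h2
  have h := Polynomial.Chebyshev.T_add_two ℝ (b-1)
  rw [show b-1+2 = b+1 by ring, show b-1+1 = b by ring] at h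
  rw [h]; simp; try ring

lemma Urec (Y : ℝ) (a b c : ℤ) (h1 : a = b + 1) (h2 : c = b - 1) :
    (Chebyshev.U ℝ a).eval Y + (Chebyshev.U ℝ c).eval Y = 2*Y*(Chebyshev.U ℝ b).eval Y := by
  subst h1 h2
  have h := Polynomial.Chebyshev.U_add_two ℝ (b-1)
  rw [show b-1+2 = b+1 by ring, show b-1+1 = b by ring] at h
  rw [h]; simp; try ring

lemma rpow_half (t : ℝ) (ht : 0 < t) (k : ℕ) :
    t ^ ((k : ℝ)/2) = Real.sqrt t ^ k := by
  rw [Real.sqrt_eq_rpow, ← Real.rpow_natCast (t ^ (1/2 : ℝ)) k, ← Real.rpow_mul ht.le]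
  congr 1; ring


noncomputable def combo (lam lam0 mu0 c Y : ℝ) (mu : ℝ) (m : ℤ) : ℝ :=
  2 * (lam0 - lam) / lam0 * (Chebyshev.T ℝ m).eval Y +
    (2 * lam - lam0) / lam0 * (Chebyshev.U ℝ m).eval Y +
    c * ((lam0 + mu0 - lam - mu) / lam0) * (Chebyshev.U ℝ (m - 1)).eval Y

lemma comboRec (lam lam0 mu0 c Y mu : ℝ) (a b d : ℤ) (h1 : a = b + 1) (h2 : d = b - 1) :
    combo lam lam0 mu0 c Y mu a + combo lam lam0 mu0 c Y mu d
      = 2 * Y * combo lam lam0 mu0 c Y mu b := by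
  unfold combo
  linear_combination (2 * (lam0 - lam) / lam0) * Trec Y a b d h1 h2
    + ((2 * lam - lam0) / lam0) * Urec Y a b d h1 h2
    + (c * ((lam0 + mu0 - lam - mu) / lam0)) * Urec Y (a-1) (b-1) (d-1) (by omega) (by omega)

/-- The birth-death polynomials of the bilateral birth-death process on `ℤ` with constant
rates `λ, μ` and a defect `λ₀, μ₀` at state `0` satisfy the initial conditions and the
three-term recurrence. -/
theorem defect_at_zero_polynomials (lam mu lam0 mu0 : ℝ)
    (hlam : 0 < lam) (hmu : 0 < mu) (hlam0 : 0 < lam0) (hmu0 : 0 < mu0)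
    (L M : ℤ → ℝ)
    (hL0 : L 0 = lam0) (hM0 : M 0 = mu0)
    (hL : ∀ n : ℤ, n ≠ 0 → L n = lam) (hM : ∀ n : ℤ, n ≠ 0 → M n = mu)
    (y : ℝ → ℝ) (hy : ∀ x : ℝ, y x = (lam + mu - x) / (2 * Real.sqrt (lam * mu)))
    (Q1 Q2 : ℤ → ℝ → ℝ)
    (hQ1p : ∀ n : ℤ, 0 ≤ n → ∀ x : ℝ, Q1 n x =
      (mu / lam) ^ ((n : ℝ) / 2) *
        ((2 * (lam0 - lam) / lam0) * (Polynomial.Chebyshev.T ℝ n).eval (y x) +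
          ((2 * lam - lam0) / lam0) * (Polynomial.Chebyshev.U ℝ n).eval (y x) +
          Real.sqrt (lam / mu) * ((lam0 + mu0 - lam - mu) / lam0) *
            (Polynomial.Chebyshev.U ℝ (n - 1)).eval (y x)))
    (hQ1m : ∀ n : ℤ, 0 ≤ n → ∀ x : ℝ, Q1 (-n - 1) x =
      -(lam / mu) ^ (((n : ℝ) + 1) / 2) * (Polynomial.Chebyshev.U ℝ (n - 1)).eval (y x))
    (hQ2p : ∀ n : ℤ, 0 ≤ n → ∀ x : ℝ, Q2 n x =
      -(mu0 / lam0) * (mu / lam) ^ (((n : ℝ) - 1) / 2) *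
        (Polynomial.Chebyshev.U ℝ (n - 1)).eval (y x))
    (hQ2m : ∀ n : ℤ, 0 ≤ n → ∀ x : ℝ, Q2 (-n - 1) x =
      (lam / mu) ^ ((n : ℝ) / 2) * (Polynomial.Chebyshev.U ℝ n).eval (y x)) :
    (∀ x : ℝ, Q1 0 x = 1) ∧ (∀ x : ℝ, Q1 (-1) x = 0) ∧
    (∀ x : ℝ, Q2 0 x = 0) ∧ (∀ x : ℝ, Q2 (-1) x = 1) ∧
    (∀ n : ℤ, ∀ x : ℝ,
      -x * Q1 n x = L n * Q1 (n + 1) x - (L n + M n) * Q1 n x + M n * Q1 (n - 1) x) ∧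
    (∀ n : ℤ, ∀ x : ℝ,
      -x * Q2 n x = L n * Q2 (n + 1) x - (L n + M n) * Q2 n x + M n * Q2 (n - 1) x) := by
  set s := Real.sqrt (lam * mu) with hsdef
  set r := Real.sqrt (mu / lam) with hrdef
  set c := Real.sqrt (lam / mu) with hcdef
  have hs0 : 0 < s := Real.sqrt_pos.2 (by positivity)
  have hlr : lam * r = s := by
    rw [hsdef, hrdef, ← Real.sqrt_sq hlam.le, ← Real.sqrt_mul (by positivity)]
    congr 1; field_simp; rw [Real.sq_sqrt (by positivity)]
  have hsr : s * r = mu := by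
    rw [hsdef, hrdef, ← Real.sqrt_mul (by positivity), show lam * mu * (mu/lam) = mu^2 by field_simp,
      Real.sqrt_sq hmu.le]
  have hmc : mu * c = s := by
    rw [hsdef, hcdef, ← Real.sqrt_sq hmu.le, ← Real.sqrt_mul (by positivity)]
    congr 1; field_simp; rw [Real.sq_sqrt (by positivity)]
  have hsc : s * c = lam := by
    rw [hsdef, hcdef, ← Real.sqrt_mul (by positivity), show lam * mu * (lam/mu) = lam^2 by field_simp,
      Real.sqrt_sq hlam.le]
  have hrc : r * c = 1 := by
    rw [hrdef, hcdef, ← Real.sqrt_mul (by positivity), show mu/lam * (lam/mu) = 1 by field_simp,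
      Real.sqrt_one]
  have hy2 : ∀ x : ℝ, lam + mu - x = 2 * s * y x := by
    intro x; rw [hy x]; field_simp
  -- closed forms with natural number powers
  have q1pos : ∀ k : ℕ, ∀ x : ℝ, Q1 (k : ℤ) x =
      r ^ k * combo lam lam0 mu0 c (y x) mu (k:ℤ) := by
    intro k x
    have h := hQ1p (k:ℤ) (by positivity) x
    rw [show (((k:ℤ):ℝ)) = (k:ℝ) by push_cast; ring, rpow_half (mu/lam) (by positivity) k] at h
    rw [h]; unfold combo; ring
  have q1neg : ∀ k : ℕ, ∀ x : ℝ, Q1 (-(k:ℤ) - 1) x =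
      -(c ^ (k+1)) * (Chebyshev.U ℝ ((k:ℤ) - 1)).eval (y x) := by
    intro k x
    have h := hQ1m (k:ℤ) (by positivity) x
    rw [show ((((k:ℤ):ℝ)) + 1)/2 = ((k+1 : ℕ):ℝ)/2 by push_cast; ring,
      rpow_half (lam/mu) (by positivity) (k+1)] at h
    rw [h]
  have q2pos : ∀ k : ℕ, ∀ x : ℝ, Q2 ((k:ℤ) + 1) x =
      -(mu0 / lam0) * r ^ k * (Chebyshev.U ℝ (k:ℤ)).eval (y x) := by
    intro k x
    have h := hQ2p ((k:ℤ)+1) (by positivity) x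
    rw [show ((((k:ℤ)+1:ℤ):ℝ) - 1)/2 = ((k:ℝ))/2 by push_cast; ring,
      rpow_half (mu/lam) (by positivity) k,
      show ((k:ℤ)+1) - 1 = (k:ℤ) by ring] at h
    rw [h]
  have q2neg : ∀ k : ℕ, ∀ x : ℝ, Q2 (-(k:ℤ) - 1) x =
      c ^ k * (Chebyshev.U ℝ (k:ℤ)).eval (y x) := by
    intro k x
    have h := hQ2m (k:ℤ) (by positivity) x
    rw [show (((k:ℤ):ℝ)) = (k:ℝ) by push_cast; ring, rpow_half (lam/mu) (by positivity) k] at h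
    exact h
  -- initial conditions
  have i1 : ∀ x : ℝ, Q1 0 x = 1 := by
    intro x
    have h := q1pos 0 x
    norm_num [combo, Chebyshev.T_zero, Chebyshev.U_zero, show ((0:ℕ):ℤ) - 1 = -1 by ring,
      Chebyshev.U_neg_one] at h
    rw [h]; field_simp; ring
  have i2 : ∀ x : ℝ, Q1 (-1) x = 0 := by
    intro x
    have h := q1neg 0 x
    norm_num [show ((0:ℕ):ℤ) - 1 = -1 by ring, Chebyshev.U_neg_one] at h
    exact h
  have i3 : ∀ x : ℝ, Q2 0 x = 0 := by
    intro x
    have h := hQ2p 0 le_rfl x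
    norm_num [show (0:ℤ) - 1 = -1 by ring, Chebyshev.U_neg_one] at h
    exact h
  have i4 : ∀ x : ℝ, Q2 (-1) x = 1 := by
    intro x
    have h := q2neg 0 x
    norm_num [Chebyshev.U_zero] at h
    exact h
  refine ⟨i1, i2, i3, i4, ?_, ?_⟩
  · -- recurrence for Q1
    intro n x
    rcases lt_trichotomy n 0 with hn | rfl | hn
    · -- negative n
      obtain ⟨k, rfl⟩ : ∃ k : ℕ, n = -(k:ℤ) - 1 := ⟨(-n-1).toNat, by omega⟩
      rw [hL _ (by omega), hM _ (by omega)]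
      rcases k with _ | p
      · -- n = -1
        norm_num
        have e3 := q1neg 1 x
        norm_num [show ((1:ℕ):ℤ) - 1 = 0 from by norm_num, Chebyshev.U_zero] at e3
        have e2 := q1pos 0 x
        norm_num [combo, Chebyshev.T_zero, Chebyshev.U_zero,
          show ((0:ℕ):ℤ) - 1 = -1 by norm_num, Chebyshev.U_neg_one] at e2
        rw [i2 x, e2, e3,
          show 2 * (lam0 - lam) / lam0 + (2 * lam - lam0) / lam0 = 1 by field_simp; ring]
        linear_combination c * hmc + hsc
      · -- n = -(p+1) - 1
        rw [show (-((p+1:ℕ):ℤ) - 1 + 1) = (-((p:ℕ):ℤ) - 1) by push_cast; ring,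
          show (-((p+1:ℕ):ℤ) - 1 - 1) = (-((p+2:ℕ):ℤ) - 1) by push_cast; ring]
        rw [q1neg p x, q1neg (p+1) x, q1neg (p+2) x]
        rw [show ((p+1:ℕ):ℤ) - 1 = ((p:ℕ):ℤ) by push_cast; ring,
          show ((p+2:ℕ):ℤ) - 1 = ((p:ℕ):ℤ) + 1 by push_cast; ring]
        have hrec : (Chebyshev.U ℝ ((p:ℤ) - 1)).eval (y x) + (Chebyshev.U ℝ ((p:ℤ) + 1)).eval (y x)
            = 2 * (y x) * (Chebyshev.U ℝ (p:ℤ)).eval (y x) := by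
          linear_combination Urec (y x) ((p:ℤ)+1) (p:ℤ) ((p:ℤ)-1) rfl rfl
        linear_combination step2 lam mu s c x (y x) (-1) _ _ _ hmc hsc (hy2 x) hrec (p+1)
    · -- n = 0
      rw [hL0, hM0, show (0:ℤ) + 1 = ((1:ℕ):ℤ) by norm_num, show (0:ℤ) - 1 = -1 by norm_num,
        i1 x, i2 x, q1pos 1 x]
      norm_num [combo, Chebyshev.T_one, Chebyshev.U_one,
        show ((1:ℕ):ℤ) - 1 = 0 by norm_num, Chebyshev.U_zero]
      field_simp
      linear_combination (-2 * (y x)) * hlr - (lam0 + mu0 - lam - mu) * hrc + hy2 x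
    · -- positive n
      obtain ⟨j, rfl⟩ : ∃ j : ℕ, n = ((j:ℤ) + 1) := ⟨(n-1).toNat, by omega⟩
      rw [hL _ (by omega), hM _ (by omega)]
      rw [show ((j:ℤ) + 1 + 1) = (((j+2:ℕ)):ℤ) by push_cast; ring,
        show ((j:ℤ) + 1 - 1) = ((j:ℕ):ℤ) by push_cast; ring,
        show ((j:ℤ) + 1) = (((j+1:ℕ)):ℤ) by push_cast; ring]
      rw [q1pos (j+2) x, q1pos (j+1) x, q1pos j x]
      linear_combination step1 lam mu s r x (y x) 1 _ _ _ hlr hsr (hy2 x)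
        (comboRec lam lam0 mu0 c (y x) mu ((j+2:ℕ):ℤ) ((j+1:ℕ):ℤ) ((j:ℕ):ℤ)
          (by push_cast; ring) (by push_cast; ring)) j
  · -- recurrence for Q2
    intro n x
    rcases lt_trichotomy n 0 with hn | rfl | hn
    · -- negative n
      obtain ⟨k, rfl⟩ : ∃ k : ℕ, n = -(k:ℤ) - 1 := ⟨(-n-1).toNat, by omega⟩
      rw [hL _ (by omega), hM _ (by omega)]
      rcases k with _ | p
      · -- n = -1
        norm_num
        have e3 := q2neg 1 x
        norm_num [Chebyshev.U_one] at e3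
        rw [i4 x, i3 x, e3]
        linear_combination (-2 * (y x)) * hmc + hy2 x
      · rw [show (-((p+1:ℕ):ℤ) - 1 + 1) = (-((p:ℕ):ℤ) - 1) by push_cast; ring,
          show (-((p+1:ℕ):ℤ) - 1 - 1) = (-((p+2:ℕ):ℤ) - 1) by push_cast; ring]
        rw [q2neg p x, q2neg (p+1) x, q2neg (p+2) x]
        rw [show ((p+1:ℕ):ℤ) = (p:ℤ) + 1 by push_cast; ring,
          show ((p+2:ℕ):ℤ) = (p:ℤ) + 2 by push_cast; ring]
        have hrec : (Chebyshev.U ℝ (p:ℤ)).eval (y x) + (Chebyshev.U ℝ ((p:ℤ)+2)).eval (y x)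
            = 2 * (y x) * (Chebyshev.U ℝ ((p:ℤ)+1)).eval (y x) := by
          linear_combination Urec (y x) ((p:ℤ)+2) ((p:ℤ)+1) (p:ℤ) (by ring) (by ring)
        linear_combination step2 lam mu s c x (y x) 1 _ _ _ hmc hsc (hy2 x) hrec p
    · -- n = 0
      rw [hL0, hM0, show (0:ℤ) + 1 = ((0:ℕ):ℤ) + 1 by norm_num,
        show (0:ℤ) - 1 = (-1:ℤ) by norm_num, i3 x, i4 x, q2pos 0 x]
      norm_num [Chebyshev.U_zero]
      field_simp
      ring
    · -- positive n
      obtain ⟨j, rfl⟩ : ∃ j : ℕ, n = ((j:ℤ) + 1) := ⟨(n-1).toNat, by omega⟩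
      rw [hL _ (by omega), hM _ (by omega)]
      rcases j with _ | p
      · -- n = 1
        rw [show ((0:ℕ):ℤ) + 1 + 1 = ((1:ℕ):ℤ) + 1 by norm_num,
          show ((0:ℕ):ℤ) + 1 - 1 = (0:ℤ) by norm_num]
        rw [q2pos 1 x, q2pos 0 x, i3 x]
        norm_num [Chebyshev.U_one, Chebyshev.U_zero]
        linear_combination (mu0 / lam0 * 2 * (y x)) * hlr - (mu0 / lam0) * hy2 x
      · -- n = p + 2
        rw [show ((p+1:ℕ):ℤ) + 1 + 1 = ((p+2:ℕ):ℤ) + 1 by push_cast; ring,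
          show ((p+1:ℕ):ℤ) + 1 - 1 = ((p:ℕ):ℤ) + 1 by push_cast; ring]
        rw [q2pos (p+2) x, q2pos (p+1) x, q2pos p x]
        rw [show ((p+1:ℕ):ℤ) = (p:ℤ) + 1 by push_cast; ring,
          show ((p+2:ℕ):ℤ) = (p:ℤ) + 2 by push_cast; ring]
        linear_combination step1 lam mu s r x (y x) (-(mu0/lam0)) _ _ _ hlr hsr (hy2 x)
          (Urec (y x) ((p:ℤ)+2) ((p:ℤ)+1) (p:ℤ) (by ring) (by ring)) p
end

section
/- Let 0 < λ < μ and λ₀, μ₀ > 0, and set c = (μ-λ)/(μ-λ+μ₀+λ₀). Consider the bilateral rates λ_0 = λ₀, μ_0 = μ₀, λ_n = λ, μ_n = μ for n ≥ 1, and λ_{-n} = μ, μ_{-n} = λ for n ≥ 1, and define v_0 = c, v_n = c·(λ₀/μ)·(λ/μ)^{n-1} for n ≥ 1, v_{-n} = c·(μ₀/μ)·(λ/μ)^{n-1} for n ≥ 1. Then (i) Σ_{n∈ℤ} v_n = 1 (the doubly infinite sum converges absolutely), and (ii) for every n ∈ ℤ: λ_{n-1}·v_{n-1} + μ_{n+1}·v_{n+1}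 = (λ_n + μ_n)·v_n, i.e. v is the invariant distribution of this bilateral birth-death process with a defect at 0. -/
open Real

lemma key_ratio (lam mu : ℝ) (hlam : 0 < lam) (hmu : 0 < mu) (k : ℤ) :
    mu * (lam / mu) ^ (k + 1) + lam * (lam / mu) ^ (k - 1)
      = (lam + mu) * (lam / mu) ^ k := by
  have hrne : (lam / mu : ℝ) ≠ 0 := by positivity
  rw [zpow_add₀ hrne, zpow_sub₀ hrne, zpow_one]
  field_simp

/-- The invariant distribution of the symmetric bilateral birth-death process with
constant rates `λ < μ` and a defect `λ₀, μ₀` at state `0`. -/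
theorem defect_at_zero_invariant_distribution (lam mu lam0 mu0 : ℝ)
    (hlam : 0 < lam) (hlm : lam < mu) (hlam0 : 0 < lam0) (hmu0 : 0 < mu0)
    (L M : ℤ → ℝ)
    (hL0 : L 0 = lam0) (hM0 : M 0 = mu0)
    (hLp : ∀ n : ℤ, 1 ≤ n → L n = lam) (hMp : ∀ n : ℤ, 1 ≤ n → M n = mu)
    (hLm : ∀ n : ℤ, 1 ≤ n → L (-n) = mu) (hMm : ∀ n : ℤ, 1 ≤ n → M (-n) = lam)
    (v : ℤ → ℝ)
    (hv0 : v 0 = (mu - lam) / (mu - lam + mu0 + lam0))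
    (hvp : ∀ n : ℤ, 1 ≤ n → v n =
      ((mu - lam) / (mu - lam + mu0 + lam0)) * (lam0 / mu) * (lam / mu) ^ (n - 1))
    (hvm : ∀ n : ℤ, 1 ≤ n → v (-n) =
      ((mu - lam) / (mu - lam + mu0 + lam0)) * (mu0 / mu) * (lam / mu) ^ (n - 1)) :
    Summable v ∧ (∑' n : ℤ, v n) = 1 ∧
    ∀ n : ℤ, L (n - 1) * v (n - 1) + M (n + 1) * v (n + 1) = (L n + M n) * v n := by
  have hmu : 0 < mu := hlam.trans hlm
  set c : ℝ := (mu - lam) / (mu - lam + mu0 + lam0) with hc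
  have hr0 : (0:ℝ) ≤ lam / mu := by positivity
  have hr1 : lam / mu < 1 := (div_lt_one hmu).mpr hlm
  -- nat-indexed descriptions
  have hnat : ∀ k : ℕ, v ((k : ℤ) + 1) = c * (lam0 / mu) * (lam / mu) ^ k := by
    intro k
    rw [hvp ((k : ℤ) + 1) (by omega)]
    norm_num
  have hneg : ∀ k : ℕ, v (-((k : ℤ) + 1)) = c * (mu0 / mu) * (lam / mu) ^ k := by
    intro k
    rw [hvm ((k : ℤ) + 1) (by omega)]
    norm_num
  have hgeo : Summable fun k : ℕ => (lam / mu) ^ k := summable_geometric_of_lt_one hr0 hr1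
  have S1 : Summable fun k : ℕ => v (k : ℤ) := by
    rw [← (summable_nat_add_iff 1)]
    have : (fun k : ℕ => v ((k + 1 : ℕ) : ℤ)) = fun k : ℕ => c * (lam0 / mu) * (lam / mu) ^ k := by
      funext k
      rw [show ((k + 1 : ℕ) : ℤ) = (k : ℤ) + 1 by push_cast; ring, hnat k]
    rw [this]
    exact hgeo.mul_left _
  have S2 : Summable fun k : ℕ => v (-((k : ℤ) + 1)) := by
    have : (fun k : ℕ => v (-((k : ℤ) + 1))) = fun k : ℕ => c * (mu0 / mu) * (lam / mu) ^ k := by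
      funext k; exact hneg k
    rw [this]
    exact hgeo.mul_left _
  have hSum : Summable v := S1.of_nat_of_neg_add_one S2
  refine ⟨hSum, ?_, ?_⟩
  · rw [tsum_of_nat_of_neg_add_one S1 S2, Summable.tsum_eq_zero_add S1]
    have h1 : (∑' k : ℕ, v (((k + 1 : ℕ)) : ℤ)) = c * (lam0 / mu) * (1 - lam / mu)⁻¹ := by
      have : (fun k : ℕ => v ((k + 1 : ℕ) : ℤ)) = fun k : ℕ => c * (lam0 / mu) * (lam / mu) ^ k := by
        funext k
        rw [show ((k + 1 : ℕ) : ℤ) = (k : ℤ) + 1 by push_cast; ring, hnat k]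
      rw [this, tsum_mul_left, tsum_geometric_of_lt_one hr0 hr1]
    have h2 : (∑' k : ℕ, v (-((k : ℤ) + 1))) = c * (mu0 / mu) * (1 - lam / mu)⁻¹ := by
      have : (fun k : ℕ => v (-((k : ℤ) + 1))) = fun k : ℕ => c * (mu0 / mu) * (lam / mu) ^ k := by
        funext k; exact hneg k
      rw [this, tsum_mul_left, tsum_geometric_of_lt_one hr0 hr1]
    rw [h1, h2]
    show v 0 + _ + _ = 1
    rw [hv0, hc]
    have hml : mu - lam ≠ 0 := by linarith
    have hD : mu - lam + mu0 + lam0 ≠ 0 := by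
      have : 0 < mu - lam + mu0 + lam0 := by linarith
      exact this.ne'
    have h1r : 1 - lam / mu ≠ 0 := by
      rw [show 1 - lam / mu = (mu - lam) / mu by field_simp]
      exact div_ne_zero hml hmu.ne'
    field_simp
    ring
  · intro n
    have hrne : (lam / mu : ℝ) ≠ 0 := by positivity
    rcases le_or_gt 2 n with h | h
    · rw [hLp (n - 1) (by omega), hMp (n + 1) (by omega), hLp n (by omega), hMp n (by omega),
        hvp (n - 1) (by omega), hvp (n + 1) (by omega), hvp n (by omega)]
      have hk := key_ratio lam mu hlam hmu (n - 1)
      rw [show n - 1 + 1 = n + 1 - 1 by ring, show n - 1 - 1 = n - 1 - 1 from rfl] at hk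
      linear_combination (c * (lam0 / mu)) * hk
    rcases lt_trichotomy n 0 with h0 | h0 | h0
    · rcases eq_or_lt_of_le (show n ≤ -1 by omega) with h1 | h1
      · subst h1
        norm_num
        rw [show (-2 : ℤ) = -(2) from rfl, show (-1 : ℤ) = -(1) from rfl,
          hLm 2 (by omega), hM0, hLm 1 le_rfl, hMm 1 le_rfl,
          hvm 2 (by omega), hv0, hvm 1 le_rfl]
        norm_num
        field_simp
        ring
      · -- n ≤ -2
        obtain ⟨m, rfl⟩ : ∃ m : ℤ, n = -m := ⟨-n, by ring⟩
        have hm : 2 ≤ m := by omega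
        rw [show -m - 1 = -(m + 1) by ring, show -m + 1 = -(m - 1) by ring,
          hLm (m + 1) (by omega), hMm (m - 1) (by omega),
          hvm (m + 1) (by omega), hvm (m - 1) (by omega)]
        rw [show (-m : ℤ) = -(m) from rfl, hLm m (by omega), hMm m (by omega), hvm m (by omega)]
        have hk := key_ratio lam mu hlam hmu (m - 1)
        rw [show m - 1 + 1 = m + 1 - 1 by ring, show m - 1 - 1 = m - 1 - 1 from rfl] at hk
        linear_combination (c * (mu0 / mu)) * hk
    · subst h0
      norm_num
      rw [show (-1 : ℤ) = -(1) from rfl, hLm 1 le_rfl, hMp 1 le_rfl, hL0, hM0, hv0,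
        hvm 1 le_rfl, hvp 1 le_rfl]
      norm_num
      field_simp
      ring
    · have h1 : n = 1 := by omega
      subst h1
      norm_num
      rw [show (0 : ℤ) = -(0) from rfl] at *
      rw [hL0, hv0, hMp 2 (by omega), hvp 2 (by omega), hLp 1 le_rfl, hMp 1 le_rfl,
        hvp 1 le_rfl]
      norm_num
      field_simp
      ring
end

section
/- Let λ, μ, α, β > 0. Define, for n ≥ 0: Q_n^1(x) = (μ/λ)^{n/2} U_n((λ+μ-x)/(2√(λμ))), Q_{-n-1}^1(x) = -(β/α)^{(n+1)/2} U_{n-1}((α+β-x)/(2√(αβ))), Q_n^2(x) = -(μ/λ)^{(n+1)/2} U_{n-1}((λ+μ-x)/(2√(λμ))), Q_{-n-1}^2(x) = (β/α)^{n/2} U_n((α+β-x)/(2√(αβ))), where U_k are the ℤ-indexed Chebyshev polynomials of the second kind (U_{-1} = 0). Then Q_0^1 = 1, Q_{-1}^1 = 0, Q_0^2 = 0, Q_{-1}^2 = 1, and for every n ∈ ℤ, every real x and α-index = 1,2: -x·Q_n(x) = λ_n·Q_{n+1}(x) - (λ_n+μ_n)·Q_n(x) + μ_n·Q_{n-1}(x),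 where λ_n = λ, μ_n = μ for n ≥ 0 and λ_{-n-1} = β, μ_{-n-1} = α for n ≥ 0. -/
open Real Polynomial

lemma cheb_key (a b c : ℝ) (ha : 0 < a) (hb : 0 < b) (n : ℤ) (x : ℝ) :
    -x * (c * ((b / a) ^ ((n : ℝ) / 2) *
      (Polynomial.Chebyshev.U ℝ n).eval ((a + b - x) / (2 * Real.sqrt (a * b))))) =
    a * (c * ((b / a) ^ (((n : ℝ) + 1) / 2) *
      (Polynomial.Chebyshev.U ℝ (n + 1)).eval ((a + b - x) / (2 * Real.sqrt (a * b)))))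
    - (a + b) * (c * ((b / a) ^ ((n : ℝ) / 2) *
      (Polynomial.Chebyshev.U ℝ n).eval ((a + b - x) / (2 * Real.sqrt (a * b)))))
    + b * (c * ((b / a) ^ (((n : ℝ) - 1) / 2) *
      (Polynomial.Chebyshev.U ℝ (n - 1)).eval ((a + b - x) / (2 * Real.sqrt (a * b))))) := by
  have hab : 0 < a * b := mul_pos ha hb
  set s := Real.sqrt (a * b) with hs
  have hs0 : 0 < s := Real.sqrt_pos.mpr hab
  set y := (a + b - x) / (2 * s) with hy
  have hr : 0 < b / a := div_pos hb ha
  set w : ℝ := (b / a) ^ ((1 : ℝ) / 2) with hw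
  set P : ℝ := (b / a) ^ (((n : ℝ) - 1) / 2) with hP
  have hw0 : 0 < w := Real.rpow_pos_of_pos hr _
  have h0 : (b / a) ^ ((n : ℝ) / 2) = P * w := by
    rw [hP, hw, ← Real.rpow_add hr]; ring_nf
  have h1 : (b / a) ^ (((n : ℝ) + 1) / 2) = P * w ^ 2 := by
    rw [hP, hw, ← Real.rpow_natCast _ 2, ← Real.rpow_mul hr.le, ← Real.rpow_add hr]
    congr 1; push_cast; ring
  have hw2 : w ^ 2 = b / a := by
    rw [hw, ← Real.rpow_natCast _ 2, ← Real.rpow_mul hr.le]; norm_num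
  have hbw2 : b = a * w ^ 2 := by
    rw [hw2]; field_simp
  have haw : a * w = s := by
    have := Real.sq_sqrt hab.le
    have h : (a * w) ^ 2 = s ^ 2 := by
      rw [mul_pow, hw2, hs, Real.sq_sqrt hab.le]; field_simp
    have h2 : 0 ≤ a * w := (mul_pos ha hw0).le
    nlinarith [hs0.le]
  have hxy2 : 2 * (a * w) * y = a + b - x := by
    rw [haw, hy]; field_simp
  have hU : (Polynomial.Chebyshev.U ℝ (n + 1)).eval y =
      2 * y * (Polynomial.Chebyshev.U ℝ n).eval y
        - (Polynomial.Chebyshev.U ℝ (n - 1)).eval y := by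
    have := Polynomial.Chebyshev.U_add_one ℝ n
    have := congrArg (Polynomial.eval y) this
    simpa using this
  rw [h0, h1, hU]
  linear_combination (-(c * P * w * (Polynomial.Chebyshev.U ℝ n).eval y)) * hxy2
    + (-(c * P * (Polynomial.Chebyshev.U ℝ (n - 1)).eval y)) * hbw2

lemma cheb_key2 (a b : ℝ) (ha : 0 < a) (hb : 0 < b) (m : ℤ) (x : ℝ) :
    -x * (-(b / a) ^ (((m : ℝ) + 1) / 2) *
      (Polynomial.Chebyshev.U ℝ (m - 1)).eval ((a + b - x) / (2 * Real.sqrt (a * b)))) =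
    a * (-(b / a) ^ (((m : ℝ) + 2) / 2) *
      (Polynomial.Chebyshev.U ℝ m).eval ((a + b - x) / (2 * Real.sqrt (a * b))))
    - (a + b) * (-(b / a) ^ (((m : ℝ) + 1) / 2) *
      (Polynomial.Chebyshev.U ℝ (m - 1)).eval ((a + b - x) / (2 * Real.sqrt (a * b))))
    + b * (-(b / a) ^ ((m : ℝ) / 2) *
      (Polynomial.Chebyshev.U ℝ (m - 2)).eval ((a + b - x) / (2 * Real.sqrt (a * b)))) := by
  have hr : 0 < b / a := div_pos hb ha
  have key := cheb_key a b (-((b / a) ^ (1 : ℝ))) ha hb (m - 1) x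
  have hc : ∀ t E : ℝ, -((b / a) ^ (1 : ℝ)) * ((b / a) ^ t * E) = -(b / a) ^ (t + 1) * E := by
    intro t E
    rw [Real.rpow_add hr, Real.rpow_one]; ring
  rw [hc, hc, hc] at key
  push_cast at key ⊢
  ring_nf at key ⊢
  exact key
/-- The birth-death polynomials of the bilateral birth-death process on `ℤ` splitting into
two different absorbing `M/M/1` queues (rates `λ, μ` on nonnegative states and `β, α` on
negative states) satisfy the initial conditions and the three-term recurrence. -/
theorem two_queues_polynomials (lam mu al be : ℝ)
    (hlam : 0 < lam) (hmu : 0 < mu) (hal : 0 < al) (hbe : 0 < be)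
    (L M : ℤ → ℝ)
    (hLp : ∀ n : ℤ, 0 ≤ n → L n = lam) (hMp : ∀ n : ℤ, 0 ≤ n → M n = mu)
    (hLm : ∀ n : ℤ, 0 ≤ n → L (-n - 1) = be) (hMm : ∀ n : ℤ, 0 ≤ n → M (-n - 1) = al)
    (Q1 Q2 : ℤ → ℝ → ℝ)
    (hQ1p : ∀ n : ℤ, 0 ≤ n → ∀ x : ℝ, Q1 n x =
      (mu / lam) ^ ((n : ℝ) / 2) *
        (Polynomial.Chebyshev.U ℝ n).eval ((lam + mu - x) / (2 * Real.sqrt (lam * mu))))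
    (hQ1m : ∀ n : ℤ, 0 ≤ n → ∀ x : ℝ, Q1 (-n - 1) x =
      -(be / al) ^ (((n : ℝ) + 1) / 2) *
        (Polynomial.Chebyshev.U ℝ (n - 1)).eval ((al + be - x) / (2 * Real.sqrt (al * be))))
    (hQ2p : ∀ n : ℤ, 0 ≤ n → ∀ x : ℝ, Q2 n x =
      -(mu / lam) ^ (((n : ℝ) + 1) / 2) *
        (Polynomial.Chebyshev.U ℝ (n - 1)).eval ((lam + mu - x) / (2 * Real.sqrt (lam * mu))))
    (hQ2m : ∀ n : ℤ, 0 ≤ n → ∀ x : ℝ, Q2 (-n - 1) x =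
      (be / al) ^ ((n : ℝ) / 2) *
        (Polynomial.Chebyshev.U ℝ n).eval ((al + be - x) / (2 * Real.sqrt (al * be)))) :
    (∀ x : ℝ, Q1 0 x = 1) ∧ (∀ x : ℝ, Q1 (-1) x = 0) ∧
    (∀ x : ℝ, Q2 0 x = 0) ∧ (∀ x : ℝ, Q2 (-1) x = 1) ∧
    (∀ n : ℤ, ∀ x : ℝ,
      -x * Q1 n x = L n * Q1 (n + 1) x - (L n + M n) * Q1 n x + M n * Q1 (n - 1) x) ∧
    (∀ n : ℤ, ∀ x : ℝ,
      -x * Q2 n x = L n * Q2 (n + 1) x - (L n + M n) * Q2 n x + M n * Q2 (n - 1) x) := by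
  have h0m : (-(0:ℤ) - 1) = (-1 : ℤ) := by ring
  refine ⟨?_, ?_, ?_, ?_, ?_, ?_⟩
  · intro x
    rw [hQ1p 0 le_rfl x]
    simp [Polynomial.Chebyshev.U_zero]
  · intro x
    have := hQ1m 0 le_rfl x
    rw [h0m] at this
    rw [this]
    simp [Polynomial.Chebyshev.U_neg_one]
  · intro x
    rw [hQ2p 0 le_rfl x]
    simp [Polynomial.Chebyshev.U_neg_one]
  · intro x
    have := hQ2m 0 le_rfl x
    rw [h0m] at this
    rw [this]
    simp [Polynomial.Chebyshev.U_zero]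
  · -- recurrence for Q1
    intro n x
    rcases le_or_gt 0 n with hn | hn
    · -- positive side
      have hA : Q1 (n + 1) x = (mu / lam) ^ (((n : ℝ) + 1) / 2) *
          (Polynomial.Chebyshev.U ℝ (n + 1)).eval ((lam + mu - x) / (2 * Real.sqrt (lam * mu))) := by
        rw [hQ1p (n + 1) (by omega) x]; push_cast; ring_nf
      have hB : Q1 (n - 1) x = (mu / lam) ^ (((n : ℝ) - 1) / 2) *
          (Polynomial.Chebyshev.U ℝ (n - 1)).eval ((lam + mu - x) / (2 * Real.sqrt (lam * mu))) := by
        rcases eq_or_lt_of_le hn with h | h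
        · rw [← h]
          have := hQ1m 0 le_rfl x
          rw [h0m] at this
          norm_num [this, Polynomial.Chebyshev.U_neg_one]
        · rw [hQ1p (n - 1) (by omega) x]; push_cast; ring_nf
      rw [hQ1p n hn x, hA, hB, hLp n hn, hMp n hn]
      have key := cheb_key lam mu 1 hlam hmu n x
      simp only [one_mul] at key
      linear_combination key
    · -- negative side
      obtain ⟨m, hm0, rfl⟩ : ∃ m : ℤ, 0 ≤ m ∧ n = -m - 1 := ⟨-n - 1, by omega, by omega⟩
      have hA : Q1 (-m - 1 + 1) x = -(be / al) ^ ((m : ℝ) / 2) *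
          (Polynomial.Chebyshev.U ℝ (m - 2)).eval ((al + be - x) / (2 * Real.sqrt (al * be))) := by
        rcases eq_or_lt_of_le hm0 with h | h
        · rw [← h]
          norm_num [hQ1p 0 le_rfl x, Polynomial.Chebyshev.U_zero, Polynomial.Chebyshev.U_neg_two]
        · have e : -m - 1 + 1 = -(m - 1) - 1 := by ring
          rw [e, hQ1m (m - 1) (by omega) x]; push_cast; ring_nf
      have hC : Q1 (-m - 1 - 1) x = -(be / al) ^ (((m : ℝ) + 2) / 2) *
          (Polynomial.Chebyshev.U ℝ m).eval ((al + be - x) / (2 * Real.sqrt (al * be))) := by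
        have e : -m - 1 - 1 = -(m + 1) - 1 := by ring
        rw [e, hQ1m (m + 1) (by omega) x]; push_cast; ring_nf
      rw [hQ1m m hm0 x, hA, hC, hLm m hm0, hMm m hm0]
      have key := cheb_key2 al be hal hbe m x
      linear_combination key
  · -- recurrence for Q2
    intro n x
    rcases le_or_gt 0 n with hn | hn
    · -- positive side
      have hA : Q2 (n + 1) x = -(mu / lam) ^ (((n : ℝ) + 2) / 2) *
          (Polynomial.Chebyshev.U ℝ n).eval ((lam + mu - x) / (2 * Real.sqrt (lam * mu))) := by
        rw [hQ2p (n + 1) (by omega) x]; push_cast; ring_nf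
      have hB : Q2 (n - 1) x = -(mu / lam) ^ ((n : ℝ) / 2) *
          (Polynomial.Chebyshev.U ℝ (n - 2)).eval ((lam + mu - x) / (2 * Real.sqrt (lam * mu))) := by
        rcases eq_or_lt_of_le hn with h | h
        · rw [← h]
          have := hQ2m 0 le_rfl x
          rw [h0m] at this
          norm_num [this, Polynomial.Chebyshev.U_zero, Polynomial.Chebyshev.U_neg_two]
        · rw [hQ2p (n - 1) (by omega) x]; push_cast; ring_nf
      rw [hQ2p n hn x, hA, hB, hLp n hn, hMp n hn]
      have key := cheb_key2 lam mu hlam hmu n x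
      linear_combination key
    · -- negative side
      obtain ⟨m, hm0, rfl⟩ : ∃ m : ℤ, 0 ≤ m ∧ n = -m - 1 := ⟨-n - 1, by omega, by omega⟩
      have hA : Q2 (-m - 1 + 1) x = (be / al) ^ (((m : ℝ) - 1) / 2) *
          (Polynomial.Chebyshev.U ℝ (m - 1)).eval ((al + be - x) / (2 * Real.sqrt (al * be))) := by
        rcases eq_or_lt_of_le hm0 with h | h
        · rw [← h]
          norm_num [hQ2p 0 le_rfl x, Polynomial.Chebyshev.U_neg_one]
        · have e : -m - 1 + 1 = -(m - 1) - 1 := by ring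
          rw [e, hQ2m (m - 1) (by omega) x]; push_cast; ring_nf
      have hC : Q2 (-m - 1 - 1) x = (be / al) ^ (((m : ℝ) + 1) / 2) *
          (Polynomial.Chebyshev.U ℝ (m + 1)).eval ((al + be - x) / (2 * Real.sqrt (al * be))) := by
        have e : -m - 1 - 1 = -(m + 1) - 1 := by ring
        rw [e, hQ2m (m + 1) (by omega) x]; push_cast; ring_nf
      rw [hQ2m m hm0 x, hA, hC, hLm m hm0, hMm m hm0]
      have key := cheb_key al be 1 hal hbe m x
      simp only [one_mul] at key
      linear_combination key
end
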